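/- arXiv:2604.07528 — 7 statements merged into one kernel-verified Lean document; each statement's English description precedes it below -/
import Mathlib

section
/- Let H be a real Hilbert space and Φ ⊆ H a linear subspace (not assumed closed). Let B : H × Φ → ℝ be linear in each variable separately and assume: (i) for every φ ∈ Φ the linear functional v ↦ B(v,φ) is continuous on H; (ii) there exists a constant c > 0 such that c‖φ‖_H² ≤ B(φ,φ) for every φ ∈ Φ. Then for every continuous linear functional F on H there exists u ∈ H such that B(u,φ) = F(φ) for all φ ∈ Φ, and u can be chosen so that ‖u‖_H ≤ c⁻¹‖F‖_{H'}. -/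
/-- Lions–Lax–Milgram lemma.
Let `H` be a real Hilbert space, `Φ ⊆ H` a linear subspace (not assumed closed), and
`B : H × Φ → ℝ` linear in each variable separately, such that `B(·,φ)` is continuous on `H`
for each `φ ∈ Φ`, and coercive on the diagonal of `Φ` with constant `c > 0`.  Then for every
continuous linear functional `F` on `H` there is `u ∈ H` with `B(u,φ) = F(φ)` for all
`φ ∈ Φ` and `‖u‖ ≤ c⁻¹ ‖F‖`. -/
theorem statement0 {H : Type*} [NormedAddCommGroup H] [InnerProductSpace ℝ H]
    [CompleteSpace H] (Φ : Submodule ℝ H) (B : H → H → ℝ)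
    (hadd₁ : ∀ φ ∈ Φ, ∀ v w : H, B (v + w) φ = B v φ + B w φ)
    (hsmul₁ : ∀ φ ∈ Φ, ∀ (a : ℝ) (v : H), B (a • v) φ = a * B v φ)
    (hadd₂ : ∀ v : H, ∀ φ₁ ∈ Φ, ∀ φ₂ ∈ Φ, B v (φ₁ + φ₂) = B v φ₁ + B v φ₂)
    (hsmul₂ : ∀ v : H, ∀ (a : ℝ), ∀ φ ∈ Φ, B v (a • φ) = a * B v φ)
    (hcont : ∀ φ ∈ Φ, Continuous fun v : H => B v φ)
    (c : ℝ) (hc : 0 < c)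
    (hcoer : ∀ φ ∈ Φ, c * ‖φ‖ ^ 2 ≤ B φ φ) :
    ∀ F : H →L[ℝ] ℝ, ∃ u : H, (∀ φ ∈ Φ, B u φ = F φ) ∧ ‖u‖ ≤ c⁻¹ * ‖F‖ := by
  intro F
  -- the functional `v ↦ B v φ` as a continuous linear map
  set L : Φ → (H →L[ℝ] ℝ) := fun p =>
    { toFun := fun v => B v p
      map_add' := fun v w => hadd₁ p p.2 v w
      map_smul' := fun a v => hsmul₁ p p.2 a v
      cont := hcont p p.2 } with hL
  have hLapp : ∀ (p : Φ) (v : H), L p v = B v p := fun p v => rfl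
  -- the Riesz representation map
  set S : Φ →ₗ[ℝ] H :=
    { toFun := fun p => (InnerProductSpace.toDual ℝ H).symm (L p)
      map_add' := by
        intro p q
        have : L (p + q) = L p + L q := by
          ext v
          exact hadd₂ v p p.2 q q.2
        rw [this, map_add]
      map_smul' := by
        intro a p
        have : L (a • p) = a • L p := by
          ext v
          exact hsmul₂ v a p p.2
        rw [this, map_smul]
        rfl } with hS
  have hSinner : ∀ (p : Φ) (v : H), inner ℝ (S p) v = B v p := by
    intro p v
    exact InnerProductSpace.toDual_symm_apply
  -- key norm bound
  have hkey : ∀ p : Φ, c * ‖(p : H)‖ ≤ ‖S p‖ := by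
    intro p
    rcases eq_or_ne (p : H) 0 with h0 | h0
    · rw [h0, norm_zero, mul_zero]; exact norm_nonneg _
    have hn : 0 < ‖(p : H)‖ := norm_pos_iff.mpr h0
    have h1 : c * ‖(p : H)‖ ^ 2 ≤ B (p : H) (p : H) := hcoer p p.2
    have h2 : B (p : H) (p : H) = inner ℝ (S p) (p : H) := (hSinner p p).symm
    have h3 : (inner ℝ (S p) (p : H) : ℝ) ≤ ‖S p‖ * ‖(p : H)‖ := real_inner_le_norm _ _
    have : c * ‖(p : H)‖ * ‖(p : H)‖ ≤ ‖S p‖ * ‖(p : H)‖ := by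
      calc c * ‖(p : H)‖ * ‖(p : H)‖ = c * ‖(p : H)‖ ^ 2 := by ring
        _ ≤ _ := h1.trans (h2.le.trans h3)
    exact le_of_mul_le_mul_right this hn
  have hSinj : Function.Injective S := by
    intro p q h
    have h0 : S (p - q) = 0 := by rw [map_sub, h, sub_self]
    have := hkey (p - q)
    rw [h0, norm_zero] at this
    have : ‖((p - q : Φ) : H)‖ ≤ 0 := by nlinarith
    have h5 : ((p - q : Φ) : H) = 0 := norm_le_zero_iff.mp this
    have hpq : (p : H) - (q : H) = 0 := by simpa using h5
    exact Subtype.ext (sub_eq_zero.mp hpq)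
  set e := LinearEquiv.ofInjective S hSinj with he
  -- the functional on the range of S
  set G : LinearMap.range S →ₗ[ℝ] ℝ :=
    F.toLinearMap.comp ((Φ.subtype).comp (e.symm.toLinearMap)) with hG
  have hGval : ∀ w : LinearMap.range S, G w = F ((e.symm w : Φ) : H) := fun w => rfl
  have hGbound : ∀ w : LinearMap.range S, ‖G w‖ ≤ (c⁻¹ * ‖F‖) * ‖w‖ := by
    intro w
    have h1 : ‖G w‖ ≤ ‖F‖ * ‖((e.symm w : Φ) : H)‖ := F.le_opNorm _
    have h2 : c * ‖((e.symm w : Φ) : H)‖ ≤ ‖(w : H)‖ := by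
      have := hkey (e.symm w)
      have heq : S (e.symm w) = (w : H) := by
        have : (e (e.symm w) : H) = (w : H) := by rw [e.apply_symm_apply]
        simp only [he, LinearEquiv.ofInjective_apply] at this; exact this
      rwa [heq] at this
    have h3 : ‖((e.symm w : Φ) : H)‖ ≤ c⁻¹ * ‖(w : H)‖ := by
      have h3' := mul_le_mul_of_nonneg_left h2 (inv_nonneg.mpr hc.le)
      rwa [← mul_assoc, inv_mul_cancel₀ hc.ne', one_mul] at h3'
    calc ‖G w‖ ≤ ‖F‖ * ‖((e.symm w : Φ) : H)‖ := h1
      _ ≤ ‖F‖ * (c⁻¹ * ‖(w : H)‖) := by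
          exact mul_le_mul_of_nonneg_left h3 (norm_nonneg F)
      _ = (c⁻¹ * ‖F‖) * ‖w‖ := by rw [Submodule.coe_norm]; ring
  set Gc : LinearMap.range S →L[ℝ] ℝ := G.mkContinuous (c⁻¹ * ‖F‖) hGbound with hGc
  obtain ⟨g, hg_ext, hg_norm⟩ := exists_extension_norm_eq (LinearMap.range S) Gc
  refine ⟨(InnerProductSpace.toDual ℝ H).symm g, ?_, ?_⟩
  · intro φ hφ
    have h1 : B ((InnerProductSpace.toDual ℝ H).symm g) φ
        = inner ℝ (S ⟨φ, hφ⟩) ((InnerProductSpace.toDual ℝ H).symm g) :=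
      (hSinner ⟨φ, hφ⟩ _).symm
    rw [h1, real_inner_comm, InnerProductSpace.toDual_symm_apply]
    have hmem : S ⟨φ, hφ⟩ ∈ LinearMap.range S := LinearMap.mem_range_self _ _
    have h2 : g (S ⟨φ, hφ⟩) = Gc ⟨S ⟨φ, hφ⟩, hmem⟩ := hg_ext ⟨S ⟨φ, hφ⟩, hmem⟩
    rw [h2]
    have h3 : Gc ⟨S ⟨φ, hφ⟩, hmem⟩ = F ((e.symm ⟨S ⟨φ, hφ⟩, hmem⟩ : Φ) : H) := rfl
    have h4 : e.symm ⟨S ⟨φ, hφ⟩, hmem⟩ = ⟨φ, hφ⟩ := by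
      have : (⟨S ⟨φ, hφ⟩, hmem⟩ : LinearMap.range S) = e ⟨φ, hφ⟩ := by
        apply Subtype.ext
        simp [he, LinearEquiv.ofInjective_apply]
      rw [this, e.symm_apply_apply]
    rw [h3, h4]
  · have h1 : ‖(InnerProductSpace.toDual ℝ H).symm g‖ = ‖g‖ :=
      (InnerProductSpace.toDual ℝ H).symm.norm_map g
    rw [h1, hg_norm]
    exact G.mkContinuous_norm_le (by positivity) hGbound
end

section
/- Let d ≥ 1 and let (A_m)_{m∈ℕ} be a sequence of symmetric positive definite 2d×2d real matrices that is nonincreasing in the Loewner order, i.e. A_m ≤ A_n whenever n ≤ m. Let δ₁, σ ∈ (0,1/2], let l, N be positive integers with N ≥ ⌈2d·ln(1/σ)/δ₁⌉·l, and let m₁ ∈ ℕ. Then at least one of the following holds: (a) there exists an integer m with m₁ + l ≤ m ≤ m₁ + N such that A_{m−l} ≤ (1+δ₁)A_m; or (b) (det A_{m₁+N})^{1/d} ≤ σ·(det A_{m₁})^{1/d}. -/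
open Matrix

noncomputable section

/-- Loewner partial order: `LoeLE A B` means `B - A` is positive semidefinite. -/
def LoeLE {n : Type*} [Fintype n] [DecidableEq n] (A B : Matrix n n ℝ) : Prop :=
  (B - A).PosSemidef

/-- Key determinant lemma: if `B` is PD, `B ≤ C` in Loewner order, then `det B ≤ det C`;
moreover if `C ≤ c•B` fails then `c * det B ≤ det C`. -/
lemma loewner_det_aux {n : Type*} [Fintype n] [DecidableEq n]
    {B C : Matrix n n ℝ} (hB : B.PosDef) (hBC : (C - B).PosSemidef) (c : ℝ) (hc : 1 ≤ c) :
    B.det ≤ C.det ∧ (¬ ((c • B) - C).PosSemidef → c * B.det ≤ C.det) := by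
  classical
  set S := (open scoped MatrixOrder in CFC.sqrt B) with hSdef
  have hSpsd : S.PosSemidef := open scoped MatrixOrder in (CFC.sqrt_nonneg B).posSemidef
  have hSS : S * S = B := open scoped MatrixOrder in CFC.sqrt_mul_sqrt_self B hB.posSemidef.nonneg
  have hdetS : S.det * S.det = B.det := by rw [← det_mul, hSS]
  have hdetB : (0:ℝ) < B.det := hB.det_pos
  have hdS : S.det ≠ 0 := by
    intro h; rw [h, mul_zero] at hdetS; linarith
  have hdSu : IsUnit S.det := isUnit_iff_ne_zero.mpr hdS
  have hSinvS : S⁻¹ * S = 1 := nonsing_inv_mul S hdSu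
  have hSSinv : S * S⁻¹ = 1 := mul_nonsing_inv S hdSu
  have hSH : Sᴴ = S := hSpsd.1
  have hSiH : (S⁻¹)ᴴ = S⁻¹ := by rw [conjTranspose_nonsing_inv, hSH]
  set M := S⁻¹ * C * S⁻¹ with hMdef
  have hSMS : S * M * S = C := by
    calc S * (S⁻¹ * C * S⁻¹) * S = (S * S⁻¹) * C * (S⁻¹ * S) := by
          simp only [Matrix.mul_assoc]
      _ = C := by rw [hSSinv, hSinvS, Matrix.one_mul, Matrix.mul_one]
  have hSBS : S⁻¹ * B * S⁻¹ = 1 := by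
    rw [← hSS]
    calc S⁻¹ * (S * S) * S⁻¹ = (S⁻¹ * S) * (S * S⁻¹) := by simp only [Matrix.mul_assoc]
      _ = 1 := by rw [hSinvS, hSSinv, Matrix.one_mul]
  have hM1 : (M - 1).PosSemidef := by
    have e : M - 1 = S⁻¹ * (C - B) * (S⁻¹)ᴴ := by
      rw [hSiH, Matrix.mul_sub, Matrix.sub_mul, hSBS, hMdef]
    rw [e]; exact hBC.mul_mul_conjTranspose_same _
  have hMH : M.IsHermitian := by
    have e : M = (M - 1) + 1 := by abel
    rw [e]; exact hM1.1.add isHermitian_one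
  set μ := hMH.eigenvalues with hμdef
  set U : Matrix n n ℝ := (hMH.eigenvectorUnitary : Matrix n n ℝ) with hUdef
  have hUU : star U * U = 1 := Unitary.coe_star_mul_self hMH.eigenvectorUnitary
  have hUU' : U * star U = 1 := (Matrix.mem_unitaryGroup_iff).mp hMH.eigenvectorUnitary.2
  have hofReal : (RCLike.ofReal ∘ μ : n → ℝ) = μ := by
    funext i; simp
  have hdiag : star U * M * U = diagonal μ := by
    rw [← hofReal]; exact hMH.conjStarAlgAut_star_eigenvectorUnitary
  have hspec : M = U * diagonal μ * star U := by
    rw [← hofReal]; exact hMH.spectral_theorem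
  have hμ1 : ∀ i, 1 ≤ μ i := by
    have h1 : (star U * (M - 1) * U).PosSemidef := by
      have := hM1.conjTranspose_mul_mul_same U
      rwa [← star_eq_conjTranspose] at this
    have e : star U * (M - 1) * U = diagonal (fun i => μ i - 1) := by
      have : star U * (M - 1) * U = star U * M * U - star U * U := by
        rw [Matrix.mul_sub, Matrix.sub_mul, Matrix.mul_one]
      rw [this, hdiag, hUU, ← diagonal_one, diagonal_sub]
    rw [e] at h1
    intro i
    have := posSemidef_diagonal_iff.mp h1 i
    linarith
  have hdetM : M.det = ∏ i, μ i := by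
    have := hMH.det_eq_prod_eigenvalues
    simpa using this
  have hdetC : C.det = B.det * M.det := by
    rw [← hSMS, det_mul, det_mul, ← hdetS]; ring
  constructor
  · have h1 : (1:ℝ) ≤ M.det := by
      rw [hdetM]
      calc (1:ℝ) = ∏ _i : n, (1:ℝ) := by simp
        _ ≤ ∏ i, μ i := Finset.prod_le_prod (fun i _ => zero_le_one) (fun i _ => hμ1 i)
    rw [hdetC]; nlinarith
  · intro h
    have hnot : ¬ ((c • (1 : Matrix n n ℝ)) - M).PosSemidef := by
      intro hP
      apply h
      have e : c • B - C = S * ((c • (1 : Matrix n n ℝ)) - M) * Sᴴ := by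
        rw [hSH, Matrix.mul_sub, Matrix.sub_mul, hSMS]
        congr 1
        rw [Matrix.mul_smul, Matrix.mul_one, Matrix.smul_mul, hSS]
      rw [e]; exact hP.mul_mul_conjTranspose_same _
    have hex : ∃ j, c ≤ μ j := by
      by_contra hall
      push_neg at hall
      apply hnot
      have e : c • (1 : Matrix n n ℝ) - M = U * diagonal (fun i => c - μ i) * star U := by
        have e1 : c • (1 : Matrix n n ℝ) = U * (c • (1 : Matrix n n ℝ)) * star U := by
          rw [Matrix.mul_smul, Matrix.mul_one, Matrix.smul_mul, hUU']
        rw [e1]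
        conv_lhs => rw [hspec]
        rw [← Matrix.sub_mul, ← Matrix.mul_sub, smul_one_eq_diagonal, diagonal_sub]
      rw [e]
      have hdg : (diagonal (fun i => c - μ i)).PosSemidef :=
        posSemidef_diagonal_iff.mpr fun i => by have := hall i; linarith
      have := hdg.mul_mul_conjTranspose_same U
      rwa [← star_eq_conjTranspose] at this
    obtain ⟨j, hj⟩ := hex
    have hprod : c ≤ M.det := by
      rw [hdetM, ← Finset.mul_prod_erase Finset.univ μ (Finset.mem_univ j)]
      have h2 : (1:ℝ) ≤ ∏ i ∈ Finset.univ.erase j, μ i := by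
        calc (1:ℝ) = ∏ _i ∈ Finset.univ.erase j, (1:ℝ) := by simp
          _ ≤ ∏ i ∈ Finset.univ.erase j, μ i :=
            Finset.prod_le_prod (fun i _ => zero_le_one) (fun i _ => hμ1 i)
      nlinarith [hμ1 j]
    rw [hdetC]; nlinarith

/-- Pigeonhole lemma for Loewner-nonincreasing families.
For a nonincreasing (in the Loewner order) sequence of symmetric positive definite
`2d×2d` matrices, either some window of length `l` in `[m₁+l, m₁+N]` sees only a
`(1+δ₁)`-fold change, or the normalized determinant contracts by the factor `σ`. -/
theorem statement2 (d : ℕ) (hd : 1 ≤ d)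
    (A : ℕ → Matrix (Fin (2 * d)) (Fin (2 * d)) ℝ)
    (hpos : ∀ m, (A m).PosDef)
    (hmono : ∀ n m : ℕ, n ≤ m → LoeLE (A m) (A n))
    (δ₁ σ : ℝ) (hδ₁ : δ₁ ∈ Set.Ioc (0 : ℝ) (1 / 2)) (hσ : σ ∈ Set.Ioc (0 : ℝ) (1 / 2))
    (l N : ℕ) (hl : 0 < l) (hN : 0 < N)
    (hNl : (⌈2 * (d : ℝ) * Real.log (1 / σ) / δ₁⌉ * (l : ℤ)) ≤ (N : ℤ))
    (m₁ : ℕ) :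
    (∃ m : ℕ, m₁ + l ≤ m ∧ m ≤ m₁ + N ∧ LoeLE (A (m - l)) ((1 + δ₁) • A m)) ∨
      (A (m₁ + N)).det ^ ((1 : ℝ) / d) ≤ σ * (A m₁).det ^ ((1 : ℝ) / d) := by
  by_cases ha : (∃ m : ℕ, m₁ + l ≤ m ∧ m ≤ m₁ + N ∧ LoeLE (A (m - l)) ((1 + δ₁) • A m))
  · exact Or.inl ha
  right
  push_neg at ha
  obtain ⟨hδ0, hδh⟩ := hδ₁
  obtain ⟨hσ0, hσh⟩ := hσ
  have hd0 : (0:ℝ) < (d:ℝ) := by exact_mod_cast Nat.pos_of_ne_zero (by omega)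
  have hσ1 : σ < 1 := by linarith
  have hlog : 0 < Real.log (1/σ) := Real.log_pos (by rw [lt_div_iff₀ hσ0]; linarith)
  set x : ℝ := 2 * (d:ℝ) * Real.log (1/σ) / δ₁ with hxdef
  have hx0 : 0 < x := by
    apply div_pos _ hδ0
    nlinarith
  set K : ℤ := ⌈x⌉ with hKdef
  have hK0 : 0 < K := Int.ceil_pos.mpr hx0
  set k : ℕ := K.toNat with hkdef
  have hkK : (k:ℤ) = K := Int.toNat_of_nonneg hK0.le
  have hkl : k * l ≤ N := by
    have h1 : ((k:ℤ)) * (l:ℤ) ≤ (N:ℤ) := by rw [hkK]; exact hNl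
    exact_mod_cast h1
  have hc1 : (1:ℝ) ≤ 1 + δ₁ := by linarith
  have chain : ∀ j : ℕ, j * l ≤ N → (1+δ₁)^j * (A (m₁ + j*l)).det ≤ (A m₁).det := by
    intro j
    induction j with
    | zero => intro _; simp
    | succ j ih =>
      intro hjl
      have hjle : j * l ≤ (j+1) * l := Nat.mul_le_mul_right l (Nat.le_succ j)
      have hjl' : j * l ≤ N := le_trans hjle hjl
      have ihe := ih hjl'
      set m := m₁ + (j+1)*l with hm
      have hml : m - l = m₁ + j*l := by
        have e : (j+1)*l = j*l + l := by ring
        omega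
      have hBC : ((A (m₁ + j*l)) - (A m)).PosSemidef := by
        have h := hmono (m₁ + j*l) m (by omega)
        simpa [LoeLE] using h
      have hnot : ¬ (((1+δ₁) • A m) - A (m₁ + j*l)).PosSemidef := by
        have h1 : m₁ + l ≤ m := by
          have : l ≤ (j+1)*l := Nat.le_mul_of_pos_left l (Nat.succ_pos j)
          omega
        have h2 : m ≤ m₁ + N := by omega
        have h3 := ha m h1 h2
        rw [hml] at h3
        simpa [LoeLE] using h3
      have key := (loewner_det_aux (hpos m) hBC (1+δ₁) hc1).2 hnot
      have hp : (0:ℝ) ≤ (1+δ₁)^j := by positivity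
      calc (1+δ₁)^(j+1) * (A (m₁ + (j+1)*l)).det
          = (1+δ₁)^j * ((1+δ₁) * (A m).det) := by rw [← hm]; ring
        _ ≤ (1+δ₁)^j * (A (m₁ + j*l)).det := mul_le_mul_of_nonneg_left key hp
        _ ≤ (A m₁).det := ihe
  have hchain := chain k hkl
  have hmonoN : (A (m₁ + N)).det ≤ (A (m₁ + k*l)).det := by
    have hBC : ((A (m₁ + k*l)) - (A (m₁+N))).PosSemidef := by
      have h := hmono (m₁+k*l) (m₁+N) (by omega)
      simpa [LoeLE] using h
    exact (loewner_det_aux (hpos _) hBC 1 le_rfl).1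
  have hld : δ₁/2 ≤ Real.log (1+δ₁) := by
    rw [Real.le_log_iff_exp_le (by linarith)]
    have h1 : 1 - δ₁/2 ≤ Real.exp (-(δ₁/2)) := by
      have := Real.add_one_le_exp (-(δ₁/2)); linarith
    have h2 : Real.exp (δ₁/2) ≤ 1/(1 - δ₁/2) := by
      rw [le_div_iff₀ (by linarith)]
      calc Real.exp (δ₁/2) * (1 - δ₁/2) ≤ Real.exp (δ₁/2) * Real.exp (-(δ₁/2)) :=
            mul_le_mul_of_nonneg_left h1 (Real.exp_nonneg _)
        _ = 1 := by rw [← Real.exp_add]; simp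
    have h3 : 1/(1 - δ₁/2) ≤ 1 + δ₁ := by
      rw [div_le_iff₀ (by linarith)]; nlinarith
    linarith
  have hkx : x ≤ (k:ℝ) := by
    have e : ((k:ℤ):ℝ) = (k:ℝ) := by push_cast; ring
    have : (K:ℝ) = (k:ℝ) := by rw [← hkK]; exact e
    rw [← this]; exact Int.le_ceil x
  have hmain : ((1:ℝ)/σ)^d ≤ (1+δ₁)^k := by
    have hl1 : Real.log (((1:ℝ)/σ)^d) = d * Real.log (1/σ) := by rw [Real.log_pow]
    have hl2 : Real.log ((1+δ₁)^k) = k * Real.log (1+δ₁) := by rw [Real.log_pow]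
    have hkey : (d:ℝ) * Real.log (1/σ) ≤ k * Real.log (1+δ₁) := by
      have e : x * δ₁ = 2 * (d:ℝ) * Real.log (1/σ) := by
        rw [hxdef]; field_simp
      have h4 : x * (δ₁/2) ≤ (k:ℝ) * (δ₁/2) := by nlinarith
      have h5 : (k:ℝ) * (δ₁/2) ≤ k * Real.log (1+δ₁) :=
        mul_le_mul_of_nonneg_left hld (Nat.cast_nonneg k)
      nlinarith
    have hp1 : (0:ℝ) < ((1:ℝ)/σ)^d := by positivity
    have hp2 : (0:ℝ) < (1+δ₁)^k := by positivity
    rw [← Real.log_le_log_iff hp1 hp2, hl1, hl2]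
    exact hkey
  have hdet1 : 0 < (A m₁).det := (hpos m₁).det_pos
  have hdetN : 0 < (A (m₁+N)).det := (hpos _).det_pos
  have hσd : (0:ℝ) < σ^d := by positivity
  have hfinal : (A (m₁+N)).det ≤ σ^d * (A m₁).det := by
    have h6 : (1+δ₁)^k * (A (m₁+N)).det ≤ (A m₁).det := by
      calc (1+δ₁)^k * (A (m₁+N)).det ≤ (1+δ₁)^k * (A (m₁+k*l)).det :=
            mul_le_mul_of_nonneg_left hmonoN (by positivity)
        _ ≤ (A m₁).det := hchain
    have h7 : ((1:ℝ)/σ)^d * (A (m₁+N)).det ≤ (A m₁).det := by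
      calc ((1:ℝ)/σ)^d * (A (m₁+N)).det ≤ (1+δ₁)^k * (A (m₁+N)).det :=
            mul_le_mul_of_nonneg_right hmain hdetN.le
        _ ≤ (A m₁).det := h6
    have e : ((1:ℝ)/σ)^d * σ^d = 1 := by
      rw [← mul_pow]; field_simp; simp
    nlinarith [mul_le_mul_of_nonneg_left h7 hσd.le]
  have hdd : (d:ℝ) ≠ 0 := ne_of_gt hd0
  calc (A (m₁+N)).det ^ ((1:ℝ)/d)
      ≤ (σ^d * (A m₁).det) ^ ((1:ℝ)/d) :=
        Real.rpow_le_rpow hdetN.le hfinal (by positivity)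
    _ = σ * (A m₁).det ^ ((1:ℝ)/d) := by
        rw [Real.mul_rpow hσd.le hdet1.le]
        congr 1
        rw [← Real.rpow_natCast σ d, ← Real.rpow_mul hσ0.le, mul_one_div,
          div_self hdd, Real.rpow_one]
end
end

section
/- Let d ≥ 1, p ∈ [1,∞) and c > 0. Let U ⊆ ℝ^d be measurable, V ⊆ U measurable with 0 < |V| < ∞, and let φ : U → [0,∞) be measurable with c|V| ≤ ∫_U φ < ∞. Then every u ∈ L^p(U) with ∫_U |u|φ < ∞ satisfies ∫_V |u(x) − (u)_V|^p dx ≤ (2^p/c)·(1/|V|)·∫_V ∫_U |u(x) − u(y)|^p φ(y) dy dx, where (u)_V := (1/|V|)∫_V u. -/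
open MeasureTheory ENNReal

lemma jensen_aux {α : Type*} [MeasurableSpace α] (ν : Measure α) [IsProbabilityMeasure ν]
    {p : ℝ} (hp : 1 ≤ p) {f : α → ℝ} (hf : AEStronglyMeasurable f ν) :
    (‖∫ x, f x ∂ν‖₊ : ℝ≥0∞) ^ p ≤ ∫⁻ x, (‖f x‖₊ : ℝ≥0∞) ^ p ∂ν := by
  have hp0 : 0 < p := lt_of_lt_of_le one_pos hp
  have h1 : (‖∫ x, f x ∂ν‖₊ : ℝ≥0∞) ≤ eLpNorm f 1 ν := by
    rw [eLpNorm_one_eq_lintegral_enorm]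
    exact enorm_integral_le_lintegral_enorm f
  have h2 : eLpNorm f 1 ν ≤ eLpNorm f (ENNReal.ofReal p) ν :=
    eLpNorm_le_eLpNorm_of_exponent_le (by
      simpa using ENNReal.ofReal_le_ofReal hp) hf
  have h3 : eLpNorm f (ENNReal.ofReal p) ν
      = (∫⁻ x, (‖f x‖₊ : ℝ≥0∞) ^ p ∂ν) ^ (1 / p) := by
    rw [eLpNorm_eq_lintegral_rpow_enorm_toReal (by simpa using hp0) (by simp)]
    simp [ENNReal.toReal_ofReal hp0.le]
    rfl
  calc (‖∫ x, f x ∂ν‖₊ : ℝ≥0∞) ^ p ≤ ((∫⁻ x, (‖f x‖₊ : ℝ≥0∞) ^ p ∂ν) ^ (1 / p)) ^ p :=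
        ENNReal.rpow_le_rpow ((h1.trans h2).trans_eq h3) hp0.le
    _ = ∫⁻ x, (‖f x‖₊ : ℝ≥0∞) ^ p ∂ν := by
        rw [← ENNReal.rpow_mul, one_div, inv_mul_cancel₀ hp0.ne', ENNReal.rpow_one]

/-- quantitative averaging lemma: if `φ ≥ 0` on `U` has mass at least
`c|V|`, then the `L^p(V)` oscillation of `u` around its mean over `V ⊆ U` is controlled,
with constant `2^p/c`, by the weighted double integral of `|u(x) − u(y)|^p φ(y)`. -/
theorem statement3 (d : ℕ) (hd : 1 ≤ d) (p : ℝ) (hp : 1 ≤ p) (c : ℝ) (hc : 0 < c)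
    (U V : Set (Fin d → ℝ)) (hU : MeasurableSet U) (hV : MeasurableSet V) (hVU : V ⊆ U)
    (hV0 : 0 < volume V) (hVfin : volume V < ⊤)
    (φ : (Fin d → ℝ) → ℝ) (hφmeas : Measurable φ) (hφ0 : ∀ x ∈ U, 0 ≤ φ x)
    (hφfin : ∫⁻ x in U, ENNReal.ofReal (φ x) < ⊤)
    (hφmass : ENNReal.ofReal c * volume V ≤ ∫⁻ x in U, ENNReal.ofReal (φ x))
    (u : (Fin d → ℝ) → ℝ)
    (hu : MemLp u (ENNReal.ofReal p) (volume.restrict U))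
    (huφ : ∫⁻ x in U, ‖u x‖₊ * ENNReal.ofReal (φ x) < ⊤) :
    ∫⁻ x in V, (‖u x - ⨍ y in V, u y‖₊ : ℝ≥0∞) ^ p ≤
      ENNReal.ofReal (2 ^ p / c) * (volume V)⁻¹ *
        ∫⁻ x in V, ∫⁻ y in U, (‖u x - u y‖₊ : ℝ≥0∞) ^ p * ENNReal.ofReal (φ y) := by
  have hp0 : 0 < p := lt_of_lt_of_le one_pos hp
  set g : (Fin d → ℝ) → ℝ≥0∞ := fun y => ENNReal.ofReal (φ y) with hg
  have hgmeas : Measurable g := hφmeas.ennreal_ofReal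
  have hgfin : ∀ᵐ x ∂(volume.restrict U), g x < ⊤ := ae_of_all _ fun x => ofReal_lt_top
  set μ : Measure (Fin d → ℝ) := (volume.restrict U).withDensity g with hμ
  set m : ℝ≥0∞ := ∫⁻ x in U, ENNReal.ofReal (φ x) with hm
  have hμuniv : μ Set.univ = m := by
    rw [hμ, withDensity_apply _ MeasurableSet.univ, Measure.restrict_univ]
  have hm0 : m ≠ 0 := by
    intro h
    rw [h, le_zero_iff, mul_eq_zero] at hφmass
    rcases hφmass with h1 | h1
    · exact (ENNReal.ofReal_pos.2 hc).ne' h1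
    · exact hV0.ne' h1
  have hmtop : m ≠ ⊤ := hφfin.ne
  -- withDensity lintegral rewriting
  have hμlint : ∀ f : (Fin d → ℝ) → ℝ≥0∞,
      ∫⁻ y, f y ∂μ = ∫⁻ y in U, f y * g y := by
    intro f
    rw [hμ, lintegral_withDensity_eq_lintegral_mul_non_measurable _ hgmeas hgfin]
    simp [mul_comm]
  set ν : Measure (Fin d → ℝ) := m⁻¹ • μ with hν
  haveI : IsProbabilityMeasure ν :=
    ⟨by rw [hν, Measure.smul_apply, hμuniv, smul_eq_mul, ENNReal.inv_mul_cancel hm0 hmtop]⟩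
  have hac : ν ≪ volume.restrict U :=
    Measure.AbsolutelyContinuous.trans Measure.smul_absolutelyContinuous (withDensity_absolutelyContinuous _ _)
  have hAESMν : AEStronglyMeasurable u ν := hu.1.mono_ac hac
  have hIntν : Integrable u ν := by
    refine ⟨hAESMν, ?_⟩
    rw [HasFiniteIntegral, hν, lintegral_smul_measure, hμlint (fun y => ‖u y‖ₑ)]
    exact ENNReal.mul_lt_top (ENNReal.inv_lt_top.2 (pos_iff_ne_zero.2 hm0)) huφ
  set a : ℝ := ∫ y, u y ∂ν with ha
  -- pointwise Jensen bound
  have hkey : ∀ x, (‖u x - a‖₊ : ℝ≥0∞) ^ p ≤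
      m⁻¹ * ∫⁻ y in U, (‖u x - u y‖₊ : ℝ≥0∞) ^ p * g y := by
    intro x
    have hsub : u x - a = ∫ y, (u x - u y) ∂ν := by
      rw [integral_sub (integrable_const _) hIntν, integral_const, probReal_univ]
      simp [ha]
    calc (‖u x - a‖₊ : ℝ≥0∞) ^ p
        = (‖∫ y, (u x - u y) ∂ν‖₊ : ℝ≥0∞) ^ p := by rw [hsub]
      _ ≤ ∫⁻ y, (‖u x - u y‖₊ : ℝ≥0∞) ^ p ∂ν :=
          jensen_aux ν hp (aestronglyMeasurable_const.sub hAESMν)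
      _ = m⁻¹ * ∫⁻ y in U, (‖u x - u y‖₊ : ℝ≥0∞) ^ p * g y := by
          rw [hν, lintegral_smul_measure, hμlint, smul_eq_mul]
  set D : ℝ≥0∞ := ∫⁻ x in V, ∫⁻ y in U, (‖u x - u y‖₊ : ℝ≥0∞) ^ p * ENNReal.ofReal (φ y)
    with hD
  set I : ℝ≥0∞ := ∫⁻ x in V, (‖u x - a‖₊ : ℝ≥0∞) ^ p with hI
  have hID : I ≤ m⁻¹ * D := by
    calc I ≤ ∫⁻ x in V, m⁻¹ * ∫⁻ y in U, (‖u x - u y‖₊ : ℝ≥0∞) ^ p * g y :=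
          lintegral_mono fun x => hkey x
      _ = m⁻¹ * D := lintegral_const_mul' _ _ (ENNReal.inv_ne_top.2 hm0)
  -- the mean over V
  haveI hfinV : IsFiniteMeasure (volume.restrict V) :=
    ⟨by rwa [Measure.restrict_apply_univ]⟩
  set b : ℝ := ⨍ y in V, u y with hb
  have hVuniv : (volume.restrict V) Set.univ = volume V := Measure.restrict_apply_univ V
  set νV : Measure (Fin d → ℝ) := ((volume.restrict V) Set.univ)⁻¹ • volume.restrict V with hνV
  haveI : NeZero (volume.restrict V) := ⟨by
    intro h
    rw [← Measure.measure_univ_eq_zero, hVuniv] at h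
    exact hV0.ne' h⟩
  haveI : IsProbabilityMeasure νV := inferInstance
  have hIntV : Integrable u (volume.restrict V) := by
    have hmem : MemLp u (ENNReal.ofReal p) (volume.restrict V) :=
      hu.mono_measure (Measure.restrict_mono hVU le_rfl)
    exact hmem.integrable (by simpa using hp)
  have hIntνV : Integrable u νV := hIntV.smul_measure (by
    rw [hVuniv]; exact ENNReal.inv_ne_top.2 hV0.ne')
  have hbint : b = ∫ y, u y ∂νV := by rw [hb, setAverage_eq', hνV, hVuniv]
  have hab : (‖a - b‖₊ : ℝ≥0∞) ^ p ≤ (volume V)⁻¹ * I := by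
    have hsub : a - b = ∫ y, (a - u y) ∂νV := by
      rw [integral_sub (integrable_const _) hIntνV, integral_const, probReal_univ, hbint]
      simp
    calc (‖a - b‖₊ : ℝ≥0∞) ^ p
        = (‖∫ y, (a - u y) ∂νV‖₊ : ℝ≥0∞) ^ p := by rw [hsub]
      _ ≤ ∫⁻ y, (‖a - u y‖₊ : ℝ≥0∞) ^ p ∂νV :=
          jensen_aux νV hp (aestronglyMeasurable_const.sub (hIntνV.1))
      _ = (volume V)⁻¹ * I := by
          rw [hνV, lintegral_smul_measure, hVuniv, hI]
          congr 1
          refine lintegral_congr fun y => ?_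
          rw [← neg_sub, nnnorm_neg]
  -- main chain
  have htri : ∀ x, (‖u x - b‖₊ : ℝ≥0∞) ^ p ≤
      (2 : ℝ≥0∞) ^ (p - 1) * ((‖u x - a‖₊ : ℝ≥0∞) ^ p + (‖a - b‖₊ : ℝ≥0∞) ^ p) := by
    intro x
    have h1 : (‖u x - b‖₊ : ℝ≥0∞) ≤ (‖u x - a‖₊ : ℝ≥0∞) + (‖a - b‖₊ : ℝ≥0∞) := by
      have : u x - b = (u x - a) + (a - b) := by ring
      rw [this]
      exact_mod_cast nnnorm_add_le _ _
    calc (‖u x - b‖₊ : ℝ≥0∞) ^ p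
        ≤ ((‖u x - a‖₊ : ℝ≥0∞) + (‖a - b‖₊ : ℝ≥0∞)) ^ p :=
          ENNReal.rpow_le_rpow h1 hp0.le
      _ ≤ (2 : ℝ≥0∞) ^ (p - 1) * ((‖u x - a‖₊ : ℝ≥0∞) ^ p + (‖a - b‖₊ : ℝ≥0∞) ^ p) :=
          ENNReal.rpow_add_le_mul_rpow_add_rpow _ _ hp
  have h2top : (2 : ℝ≥0∞) ^ (p - 1) ≠ ⊤ :=
    (ENNReal.rpow_lt_top_of_nonneg (sub_nonneg.2 hp) ENNReal.ofNat_ne_top).ne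
  have hmain : ∫⁻ x in V, (‖u x - b‖₊ : ℝ≥0∞) ^ p ≤ (2 : ℝ≥0∞) ^ p * I := by
    calc ∫⁻ x in V, (‖u x - b‖₊ : ℝ≥0∞) ^ p
        ≤ ∫⁻ x in V, (2 : ℝ≥0∞) ^ (p - 1) *
            ((‖u x - a‖₊ : ℝ≥0∞) ^ p + (‖a - b‖₊ : ℝ≥0∞) ^ p) :=
          lintegral_mono fun x => htri x
      _ = (2 : ℝ≥0∞) ^ (p - 1) * (I + (‖a - b‖₊ : ℝ≥0∞) ^ p * volume V) := by
          rw [lintegral_const_mul' _ _ h2top]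
          congr 1
          rw [lintegral_add_right' _ aemeasurable_const, setLIntegral_const]
      _ ≤ (2 : ℝ≥0∞) ^ (p - 1) * (I + ((volume V)⁻¹ * I) * volume V) := by
          gcongr
      _ = (2 : ℝ≥0∞) ^ (p - 1) * (I + I) := by
          rw [mul_comm ((volume V)⁻¹ * I) (volume V), ← mul_assoc,
            ENNReal.mul_inv_cancel hV0.ne' hVfin.ne, one_mul]
      _ = (2 : ℝ≥0∞) ^ p * I := by
          rw [← two_mul, ← mul_assoc]
          congr 1
          rw [ENNReal.rpow_sub _ _ two_ne_zero ENNReal.ofNat_ne_top, ENNReal.rpow_one,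
            ENNReal.div_mul_cancel two_ne_zero ENNReal.ofNat_ne_top]
  have hconst : ENNReal.ofReal (2 ^ p / c) = (2 : ℝ≥0∞) ^ p * (ENNReal.ofReal c)⁻¹ := by
    rw [ENNReal.ofReal_div_of_pos hc, div_eq_mul_inv,
      ← ENNReal.ofReal_rpow_of_pos two_pos, ENNReal.ofReal_ofNat]
  calc ∫⁻ x in V, (‖u x - ⨍ y in V, u y‖₊ : ℝ≥0∞) ^ p
      ≤ (2 : ℝ≥0∞) ^ p * I := hmain
    _ ≤ (2 : ℝ≥0∞) ^ p * (m⁻¹ * D) := by gcongr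
    _ ≤ (2 : ℝ≥0∞) ^ p * ((ENNReal.ofReal c * volume V)⁻¹ * D) :=
        mul_le_mul_right (mul_le_mul_left (ENNReal.inv_le_inv.2 hφmass) D) _
    _ = ENNReal.ofReal (2 ^ p / c) * (volume V)⁻¹ * D := by
        rw [ENNReal.mul_inv (Or.inl (ENNReal.ofReal_pos.2 hc).ne') (Or.inl ofReal_ne_top),
          hconst]
        ring
end

section
/- Let d ≥ 1, n ∈ ℤ and s ∈ [0,1]. There exists a constant C = C(d) such that for every u ∈ L²(□_n) with [u]_{B^s_{2,∞}(□_n)} < ∞ and every smooth ψ : □_n → ℝ with ψ, ∇ψ and ∂_tψ bounded: ‖uψ‖_{B^s_{2,∞}(□_n)} ≤ C‖ψ‖_{L^∞(□_n)}·[u]_{B^s_{2,∞}(□_n)} + C( 3^{(1−s)n}‖∇ψ‖_{L^∞(□_n)} + 3^{(2−s)n}‖∂_tψ‖_{L^∞(□_n)} + 3^{−sn}‖ψ‖_{L^∞(□_n)} )·‖u‖_{L̲²(□_n)}. -/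
open MeasureTheory ENNReal NNReal Set

noncomputable section

/-- A space-time point: a time in `ℝ` and a spatial point in `ℝ^d`. -/
abbrev Pt (d : ℕ) := ℝ × (Fin d → ℝ)

/-- The time interval `I_n = (−3^{2n}/2, 3^{2n}/2)`. -/
def timeInt (n : ℤ) : Set ℝ := Set.Ioo (-((3 : ℝ) ^ (2 * n)) / 2) ((3 : ℝ) ^ (2 * n) / 2)

/-- The spatial cube `Q_n = (−3^n/2, 3^n/2)^d`. -/
def spaceCube (d : ℕ) (n : ℤ) : Set (Fin d → ℝ) :=
  Set.univ.pi fun _ : Fin d => Set.Ioo (-((3 : ℝ) ^ n) / 2) ((3 : ℝ) ^ n / 2)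

/-- The parabolic cube `□_n = I_n × Q_n`. -/
def pCube (d : ℕ) (n : ℤ) : Set (Pt d) := (timeInt n) ×ˢ (spaceCube d n)

/-- The point of the lattice `Z_j = 3^{2j}ℤ × 3^jℤ^d` indexed by `w`. -/
def latPt (d : ℕ) (j : ℤ) (w : ℤ × (Fin d → ℤ)) : Pt d :=
  ((3 : ℝ) ^ (2 * j) * (w.1 : ℝ), fun i => (3 : ℝ) ^ j * (w.2 i : ℝ))

/-- The translated parabolic cube `z + □_k` with `z ∈ Z_j` indexed by `w`. -/
def cubeAt (d : ℕ) (j k : ℤ) (w : ℤ × (Fin d → ℤ)) : Set (Pt d) :=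
  (fun q => latPt d j w + q) '' pCube d k

/-- Indices `w` such that `z + □_k ⊆ S`, `z ∈ Z_j`. -/
def inIdx (d : ℕ) (j k : ℤ) (S : Set (Pt d)) : Set (ℤ × (Fin d → ℤ)) :=
  {w | cubeAt d j k w ⊆ S}

/-- Average of an `ℝ≥0∞`-valued family over a set of indices (`avg-sum`). -/
def avgSum {ι : Type*} (F : Set ι) (f : ι → ℝ≥0∞) : ℝ≥0∞ :=
  (Nat.card F : ℝ≥0∞)⁻¹ * ∑' w : F, f w

/-- The average `(g)_V` of `g` over `V`. -/
def setAvg {d : ℕ} (V : Set (Pt d)) (g : Pt d → ℝ) : ℝ := ⨍ x in V, g x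

/-- `‖g‖_{L̲²(V)}²`. -/
def l2Pow (d : ℕ) (V : Set (Pt d)) (g : Pt d → ℝ) : ℝ≥0∞ :=
  (volume V)⁻¹ * ∫⁻ x in V, (‖g x‖₊ : ℝ≥0∞) ^ (2 : ℝ)

/-- The volume-normalized `L²` norm `‖g‖_{L̲²(V)}`. -/
def l2N (d : ℕ) (V : Set (Pt d)) (g : Pt d → ℝ) : ℝ≥0∞ :=
  (l2Pow d V g) ^ (2 : ℝ)⁻¹

/-- The Besov seminorm `[g]_{B^s_{2,∞}(□_n)}`. -/
def besovSemiSup (d : ℕ) (s : ℝ) (n : ℤ) (g : Pt d → ℝ) : ℝ≥0∞ :=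
  ⨆ k : {k : ℤ // k ≤ n},
    (3 : ℝ≥0∞) ^ (-(s * ((k : ℤ) : ℝ))) *
      (avgSum (inIdx d ((k : ℤ) - 1) (k : ℤ) (pCube d n))
          (fun w => l2Pow d (cubeAt d ((k : ℤ) - 1) (k : ℤ) w)
            (fun x => g x - setAvg (cubeAt d ((k : ℤ) - 1) (k : ℤ) w) g))) ^ (2 : ℝ)⁻¹

/-- The Besov norm `‖g‖_{B^s_{2,∞}(□_n)}`. -/
def besovNormSup (d : ℕ) (s : ℝ) (n : ℤ) (g : Pt d → ℝ) : ℝ≥0∞ :=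
  (3 : ℝ≥0∞) ^ (-(s * (n : ℝ))) * l2N d (pCube d n) g + besovSemiSup d s n g

/-- Euclidean norm on `ℝ^d`. -/
def eunorm {d : ℕ} (v : Fin d → ℝ) : ℝ := Real.sqrt (∑ i, v i ^ 2)

attribute [local instance 10] Classical.propDecidable

-- Section A: geometry and measure basics
lemma tpow_pos (k : ℤ) : (0:ℝ) < (3:ℝ) ^ k := zpow_pos (by norm_num) k

lemma isOpen_pCube (d : ℕ) (n : ℤ) : IsOpen (pCube d n) :=
  (isOpen_Ioo).prod (isOpen_set_pi finite_univ (fun _ _ => isOpen_Ioo))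

lemma zero_mem_pCube (d : ℕ) (n : ℤ) : (0 : Pt d) ∈ pCube d n := by
  have h1 := tpow_pos (2*n); have h2 := tpow_pos n
  constructor
  · exact ⟨by simpa using by linarith, by simpa using by linarith⟩
  · intro i _
    exact ⟨by simpa using by linarith, by simpa using by linarith⟩

lemma pCube_nonempty (d : ℕ) (n : ℤ) : (pCube d n).Nonempty := ⟨0, zero_mem_pCube d n⟩

lemma volume_timeInt (n : ℤ) : volume (timeInt n) = ENNReal.ofReal ((3:ℝ) ^ (2*n)) := by
  rw [timeInt, Real.volume_Ioo]; ring_nf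

lemma volume_spaceCube (d : ℕ) (n : ℤ) :
    volume (spaceCube d n) = (ENNReal.ofReal ((3:ℝ) ^ n)) ^ d := by
  rw [spaceCube, volume_pi_pi]
  simp [Real.volume_Ioo]; ring_nf

lemma volume_pCube (d : ℕ) (n : ℤ) :
    volume (pCube d n) = ENNReal.ofReal ((3:ℝ) ^ (2*n)) * (ENNReal.ofReal ((3:ℝ) ^ n)) ^ d := by
  rw [pCube, ← volume_timeInt, ← volume_spaceCube, Measure.volume_eq_prod, Measure.prod_prod]

lemma volume_pCube_pos (d : ℕ) (n : ℤ) : 0 < volume (pCube d n) := by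
  rw [volume_pCube]
  have h1 := tpow_pos (2*n); have h2 := tpow_pos n
  exact ENNReal.mul_pos (by simpa using (ENNReal.ofReal_pos.2 h1).ne')
    (by positivity)

lemma volume_pCube_ne_top (d : ℕ) (n : ℤ) : volume (pCube d n) ≠ ⊤ := by
  rw [volume_pCube]
  exact (ENNReal.mul_lt_top ENNReal.ofReal_lt_top (ENNReal.pow_lt_top ENNReal.ofReal_lt_top)).ne

lemma cubeAt_eq_preimage (d : ℕ) (j k : ℤ) (w : ℤ × (Fin d → ℤ)) :
    cubeAt d j k w = (fun q => -latPt d j w + q) ⁻¹' pCube d k := by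
  ext q
  constructor
  · rintro ⟨y, hy, rfl⟩; simpa using hy
  · intro h; exact ⟨-latPt d j w + q, h, by simp⟩

lemma volume_cubeAt (d : ℕ) (j k : ℤ) (w : ℤ × (Fin d → ℤ)) :
    volume (cubeAt d j k w) = volume (pCube d k) := by
  rw [cubeAt_eq_preimage, Measure.volume_eq_prod]
  exact measure_preimage_add _ _ _

lemma isOpen_cubeAt (d : ℕ) (j k : ℤ) (w : ℤ × (Fin d → ℤ)) : IsOpen (cubeAt d j k w) := by
  rw [cubeAt_eq_preimage]
  exact (isOpen_pCube d k).preimage (by continuity)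

lemma mem_cubeAt {d : ℕ} {j k : ℤ} {w : ℤ × (Fin d → ℤ)} {q : Pt d} :
    q ∈ cubeAt d j k w ↔ q - latPt d j w ∈ pCube d k := by
  rw [cubeAt_eq_preimage, Set.mem_preimage, neg_add_eq_sub]

lemma center_mem_cubeAt (d : ℕ) (j k : ℤ) (w : ℤ × (Fin d → ℤ)) :
    latPt d j w ∈ cubeAt d j k w := by
  rw [mem_cubeAt]; simpa using zero_mem_pCube d k

-- Section B: L2 lemmas
lemma sq_nn (x : ℝ) : (‖x‖₊ : ℝ≥0∞) = ENNReal.ofReal |x| := by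
  rw [← Real.norm_eq_abs, ofReal_norm, enorm_eq_nnnorm]

lemma enn_sq_add_le (a b : ℝ≥0∞) : (a + b) ^ (2:ℝ) ≤ 4 * a ^ (2:ℝ) + 4 * b ^ (2:ℝ) := by
  rcases le_total a b with h | h
  · calc (a+b)^(2:ℝ) ≤ (b+b)^(2:ℝ) := ENNReal.rpow_le_rpow (by gcongr) (by norm_num)
    _ = (2*b)^(2:ℝ) := by rw [two_mul]
    _ = 2^(2:ℝ) * b^(2:ℝ) := ENNReal.mul_rpow_of_nonneg _ _ (by norm_num)
    _ = 4 * b^(2:ℝ) := by norm_num [← ENNReal.rpow_natCast 2 2]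
    _ ≤ 4 * a^(2:ℝ) + 4 * b^(2:ℝ) := le_add_self
  · calc (a+b)^(2:ℝ) ≤ (a+a)^(2:ℝ) := ENNReal.rpow_le_rpow (by gcongr) (by norm_num)
    _ = (2*a)^(2:ℝ) := by rw [two_mul]
    _ = 2^(2:ℝ) * a^(2:ℝ) := ENNReal.mul_rpow_of_nonneg _ _ (by norm_num)
    _ = 4 * a^(2:ℝ) := by norm_num [← ENNReal.rpow_natCast 2 2]
    _ ≤ 4 * a^(2:ℝ) + 4 * b^(2:ℝ) := le_self_add

lemma aemeas_sq {α : Type*} [MeasurableSpace α] {μ : Measure α} {f : α → ℝ}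
    (hf : AEMeasurable f μ) : AEMeasurable (fun x => (‖f x‖₊ : ℝ≥0∞) ^ (2:ℝ)) μ :=
  (ENNReal.continuous_rpow_const.measurable.comp_aemeasurable hf.enorm)

lemma l2Pow_le_of_bound {d : ℕ} {V : Set (Pt d)} {f g : Pt d → ℝ} {c : ℝ≥0∞}
    (hc : c ≠ ⊤) (hg : AEMeasurable g (volume.restrict V)) (hV : MeasurableSet V)
    (h : ∀ x ∈ V, (‖f x‖₊ : ℝ≥0∞) ≤ c * ‖g x‖₊) :
    l2Pow d V f ≤ c ^ (2:ℝ) * l2Pow d V g := by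
  rw [l2Pow, l2Pow]
  have : (∫⁻ x in V, (‖f x‖₊ : ℝ≥0∞) ^ (2:ℝ)) ≤
      c ^ (2:ℝ) * ∫⁻ x in V, (‖g x‖₊ : ℝ≥0∞) ^ (2:ℝ) := by
    rw [← lintegral_const_mul' _ _ (by simp [ENNReal.rpow_lt_top_of_nonneg, hc] :
      c ^ (2:ℝ) ≠ ⊤)]
    refine lintegral_mono_ae ?_
    filter_upwards [ae_restrict_mem hV] with x hx
    calc (‖f x‖₊ : ℝ≥0∞) ^ (2:ℝ) ≤ (c * ‖g x‖₊) ^ (2:ℝ) :=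
        ENNReal.rpow_le_rpow (h x hx) (by norm_num)
      _ = c ^ (2:ℝ) * (‖g x‖₊ : ℝ≥0∞) ^ (2:ℝ) := ENNReal.mul_rpow_of_nonneg _ _ (by norm_num)
  calc (volume V)⁻¹ * ∫⁻ x in V, (‖f x‖₊ : ℝ≥0∞) ^ (2:ℝ) ≤
      (volume V)⁻¹ * (c ^ (2:ℝ) * ∫⁻ x in V, (‖g x‖₊ : ℝ≥0∞) ^ (2:ℝ)) := by gcongr
    _ = c ^ (2:ℝ) * ((volume V)⁻¹ * ∫⁻ x in V, (‖g x‖₊ : ℝ≥0∞) ^ (2:ℝ)) := by ring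

lemma l2Pow_add_le {d : ℕ} {V : Set (Pt d)} {f g : Pt d → ℝ}
    (hf : AEMeasurable f (volume.restrict V)) :
    l2Pow d V (fun x => f x + g x) ≤ 4 * l2Pow d V f + 4 * l2Pow d V g := by
  rw [l2Pow, l2Pow, l2Pow]
  have h1 : (∫⁻ x in V, (‖f x + g x‖₊ : ℝ≥0∞) ^ (2:ℝ)) ≤
      ∫⁻ x in V, (4 * (‖f x‖₊ : ℝ≥0∞) ^ (2:ℝ) + 4 * (‖g x‖₊ : ℝ≥0∞) ^ (2:ℝ)) := by
    refine lintegral_mono fun x => ?_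
    calc (‖f x + g x‖₊ : ℝ≥0∞) ^ (2:ℝ) ≤ ((‖f x‖₊ : ℝ≥0∞) + ‖g x‖₊) ^ (2:ℝ) := by
          refine ENNReal.rpow_le_rpow ?_ (by norm_num)
          exact_mod_cast nnnorm_add_le _ _
      _ ≤ _ := enn_sq_add_le _ _
  have h2 : (∫⁻ x in V, (4 * (‖f x‖₊ : ℝ≥0∞) ^ (2:ℝ) + 4 * (‖g x‖₊ : ℝ≥0∞) ^ (2:ℝ))) =
      4 * (∫⁻ x in V, (‖f x‖₊ : ℝ≥0∞) ^ (2:ℝ)) + 4 * ∫⁻ x in V, (‖g x‖₊ : ℝ≥0∞) ^ (2:ℝ) := by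
    rw [lintegral_add_left' ((aemeas_sq hf).const_mul 4),
      lintegral_const_mul' _ _ (by norm_num), lintegral_const_mul' _ _ (by norm_num)]
  calc (volume V)⁻¹ * ∫⁻ x in V, (‖f x + g x‖₊ : ℝ≥0∞) ^ (2:ℝ) ≤
      (volume V)⁻¹ * (4 * (∫⁻ x in V, (‖f x‖₊ : ℝ≥0∞) ^ (2:ℝ)) +
        4 * ∫⁻ x in V, (‖g x‖₊ : ℝ≥0∞) ^ (2:ℝ)) := by rw [← h2]; gcongr
    _ = _ := by ring

lemma l2Pow_const {d : ℕ} {V : Set (Pt d)} (h0 : volume V ≠ 0) (htop : volume V ≠ ⊤) (c : ℝ) :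
    l2Pow d V (fun _ => c) = ENNReal.ofReal |c| ^ (2:ℝ) := by
  rw [l2Pow, setLIntegral_const, ← sq_nn]
  rw [mul_comm ((‖c‖₊ : ℝ≥0∞) ^ (2:ℝ)), ← mul_assoc, ENNReal.inv_mul_cancel h0 htop, one_mul]

-- Cauchy-Schwarz for averages
lemma ofReal_setAvg_sq_le {d : ℕ} {V : Set (Pt d)} {f : Pt d → ℝ}
    (h0 : volume V ≠ 0) (htop : volume V ≠ ⊤)
    (hf : AEMeasurable f (volume.restrict V)) :
    ENNReal.ofReal |setAvg V f| ^ (2:ℝ) ≤ l2Pow d V f := by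
  have hCS : (∫⁻ x in V, (‖f x‖₊ : ℝ≥0∞)) ≤
      (∫⁻ x in V, (‖f x‖₊ : ℝ≥0∞) ^ (2:ℝ)) ^ (1/(2:ℝ)) * (volume V) ^ (1/(2:ℝ)) := by
    have conj : Real.HolderConjugate 2 2 := Real.holderConjugate_iff.2 ⟨by norm_num, by norm_num⟩
    have := ENNReal.lintegral_mul_le_Lp_mul_Lq (volume.restrict V) conj
      hf.enorm aemeasurable_const (g := fun _ => (1:ℝ≥0∞))
    simp only [enorm_eq_nnnorm] at this; simpa using this
  have havg : ENNReal.ofReal |setAvg V f| ≤ (volume V)⁻¹ * ∫⁻ x in V, (‖f x‖₊ : ℝ≥0∞) := by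
    have habs : |∫ x in V, f x| ≤ (∫⁻ x in V, (‖f x‖₊ : ℝ≥0∞)).toReal := by
      calc |∫ x in V, f x| = ‖∫ x in V, f x‖ := (Real.norm_eq_abs _).symm
        _ ≤ (∫⁻ x in V, ENNReal.ofReal ‖f x‖).toReal := norm_integral_le_lintegral_norm _
        _ = (∫⁻ x in V, (‖f x‖₊ : ℝ≥0∞)).toReal := by
            congr 1; refine lintegral_congr fun x => ?_; rw [ofReal_norm, enorm_eq_nnnorm]
    have h1 : |setAvg V f| ≤ (volume V).toReal⁻¹ * (∫⁻ x in V, (‖f x‖₊ : ℝ≥0∞)).toReal := by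
      rw [setAvg, average_eq, measureReal_def, Measure.restrict_apply_univ]
      rw [smul_eq_mul, abs_mul, abs_of_nonneg (by positivity)]
      exact mul_le_mul_of_nonneg_left habs (inv_nonneg.2 ENNReal.toReal_nonneg)
    calc ENNReal.ofReal |setAvg V f| ≤
        ENNReal.ofReal ((volume V).toReal⁻¹ * (∫⁻ x in V, (‖f x‖₊ : ℝ≥0∞)).toReal) :=
          ENNReal.ofReal_le_ofReal h1
      _ = ENNReal.ofReal ((volume V).toReal⁻¹) *
          ENNReal.ofReal ((∫⁻ x in V, (‖f x‖₊ : ℝ≥0∞)).toReal) :=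
          ENNReal.ofReal_mul (inv_nonneg.2 ENNReal.toReal_nonneg)
      _ ≤ (volume V)⁻¹ * ∫⁻ x in V, (‖f x‖₊ : ℝ≥0∞) := by
          gcongr
          · rw [ENNReal.ofReal_inv_of_pos (ENNReal.toReal_pos h0 htop),
              ENNReal.ofReal_toReal htop]
          · exact ENNReal.ofReal_toReal_le
  have e1 : ∀ x : ℝ≥0∞, (x ^ (1/(2:ℝ))) ^ (2:ℝ) = x := fun x => by
    rw [← ENNReal.rpow_mul]; norm_num
  set A := ∫⁻ x in V, (‖f x‖₊ : ℝ≥0∞) ^ (2:ℝ) with hA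
  calc ENNReal.ofReal |setAvg V f| ^ (2:ℝ) ≤
      ((volume V)⁻¹ * (A ^ (1/(2:ℝ)) * (volume V) ^ (1/(2:ℝ)))) ^ (2:ℝ) := by
        refine ENNReal.rpow_le_rpow (le_trans havg ?_) (by norm_num)
        gcongr
    _ = (volume V)⁻¹ ^ (2:ℝ) * (A * volume V) := by
        rw [ENNReal.mul_rpow_of_nonneg _ _ (by norm_num : (0:ℝ) ≤ 2),
          ENNReal.mul_rpow_of_nonneg _ _ (by norm_num : (0:ℝ) ≤ 2), e1, e1]
    _ = (volume V)⁻¹ * (volume V)⁻¹ * (A * volume V) := by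
        rw [show ((2:ℝ)) = ((2:ℕ):ℝ) by norm_num, ENNReal.rpow_natCast, sq]
    _ = l2Pow d V f := by
        rw [mul_comm A (volume V), mul_assoc ((volume V)⁻¹),
          ← mul_assoc ((volume V)⁻¹) (volume V) A, ENNReal.inv_mul_cancel h0 htop, one_mul,
          l2Pow]

-- Section D: oscillation of psi on a small cube
lemma osc_psi {d : ℕ} {n k : ℤ} {w : ℤ × (Fin d → ℤ)} {ψ : Pt d → ℝ} {Kgrad Kt : ℝ}
    (hw : cubeAt d (k-1) k w ⊆ pCube d n)
    (hψ : ContDiffOn ℝ (⊤ : ℕ∞) ψ (pCube d n))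
    (hKg : ∀ q ∈ pCube d n, ∀ v : Fin d → ℝ, |fderiv ℝ ψ q (0, v)| ≤ Kgrad * eunorm v)
    (hKt : ∀ q ∈ pCube d n, |fderiv ℝ ψ q (1, 0)| ≤ Kt)
    (hKt0 : 0 ≤ Kt) (hKg0 : 0 ≤ Kgrad)
    {x y : Pt d} (hx : x ∈ cubeAt d (k-1) k w) (hy : y ∈ cubeAt d (k-1) k w) :
    |ψ x - ψ y| ≤ Kt * (3:ℝ)^(2*k) + Kgrad * (Real.sqrt d * (3:ℝ)^k) := by
  set z := latPt d (k-1) w with hz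
  have hdiff : ∀ p ∈ pCube d n, HasFDerivAt ψ (fderiv ℝ ψ p) p := by
    intro p hp
    have : DifferentiableAt ℝ ψ p :=
      ((hψ.differentiableOn (by simp)) p hp).differentiableAt ((isOpen_pCube d n).mem_nhds hp)
    exact this.hasFDerivAt
  have hx' := mem_cubeAt.1 hx
  have hy' := mem_cubeAt.1 hy
  have hxt : x.1 - z.1 ∈ timeInt k := hx'.1
  have hyt : y.1 - z.1 ∈ timeInt k := hy'.1
  have hxs : ∀ i, x.2 i - z.2 i ∈ Set.Ioo (-((3:ℝ)^k)/2) ((3:ℝ)^k/2) := fun i => hx'.2 i trivial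
  have hys : ∀ i, y.2 i - z.2 i ∈ Set.Ioo (-((3:ℝ)^k)/2) ((3:ℝ)^k/2) := fun i => hy'.2 i trivial
  obtain ⟨hxt1, hxt2⟩ := hxt
  obtain ⟨hyt1, hyt2⟩ := hyt
  -- time segment estimate
  have time_est : |ψ (y.1, x.2) - ψ (x.1, x.2)| ≤ Kt * (3:ℝ)^(2*k) := by
    have hseg : ∀ t ∈ Set.uIcc x.1 y.1, ((t, x.2) : Pt d) ∈ cubeAt d (k-1) k w := by
      intro t ht
      rw [mem_cubeAt]
      refine ⟨?_, fun i _ => hxs i⟩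
      have he : (((t, x.2) : Pt d) - latPt d (k-1) w).1 = t - z.1 := rfl
      show (((t, x.2) : Pt d) - latPt d (k-1) w).1 ∈ timeInt k
      rw [he, timeInt, Set.mem_Ioo]
      rcases Set.mem_uIcc.1 ht with ⟨ha, hb⟩ | ⟨ha, hb⟩ <;> constructor <;> linarith
    have hder : ∀ t ∈ Set.uIcc x.1 y.1,
        HasDerivWithinAt (fun t => ψ (t, x.2)) (fderiv ℝ ψ (t, x.2) (1, 0)) (Set.uIcc x.1 y.1) t := by
      intro t ht
      have hmem : ((t, x.2) : Pt d) ∈ pCube d n := hw (hseg t ht)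
      have hc : HasDerivAt (fun t : ℝ => ((t, x.2) : Pt d)) ((1:ℝ), (0 : Fin d → ℝ)) t :=
        (hasDerivAt_id t).prodMk (hasDerivAt_const t x.2)
      exact ((hdiff _ hmem).comp_hasDerivAt t hc).hasDerivWithinAt
    have hbound : ∀ t ∈ Set.uIcc x.1 y.1, ‖fderiv ℝ ψ (t, x.2) (1, 0)‖ ≤ Kt := by
      intro t ht
      rw [Real.norm_eq_abs]
      exact hKt _ (hw (hseg t ht))
    have hmvt := Convex.norm_image_sub_le_of_norm_hasDerivWithin_le hder hbound
      (convex_uIcc x.1 y.1) (Set.left_mem_uIcc) (Set.right_mem_uIcc)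
    rw [Real.norm_eq_abs, Real.norm_eq_abs] at hmvt
    refine hmvt.trans ?_
    have habs : |y.1 - x.1| ≤ (3:ℝ)^(2*k) := by
      rw [abs_le]; constructor <;> linarith
    exact mul_le_mul_of_nonneg_left habs hKt0
  -- Euclidean bound
  have hv : eunorm (y.2 - x.2) ≤ Real.sqrt d * (3:ℝ)^k := by
    rw [eunorm]
    have hb : ∀ i : Fin d, ((y.2 - x.2) i)^2 ≤ ((3:ℝ)^k)^2 := by
      intro i
      have h1 := hxs i; have h2 := hys i
      rw [Set.mem_Ioo] at h1 h2
      have he : (y.2 - x.2) i = y.2 i - x.2 i := rfl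
      rw [he]
      refine sq_le_sq' ?_ ?_ <;> [linarith [h1.1, h1.2, h2.1, h2.2]; linarith [h1.1, h1.2, h2.1, h2.2]]
    calc Real.sqrt (∑ i, ((y.2 - x.2) i)^2) ≤ Real.sqrt (∑ _i : Fin d, ((3:ℝ)^k)^2) :=
        Real.sqrt_le_sqrt (Finset.sum_le_sum fun i _ => hb i)
      _ = Real.sqrt (d * ((3:ℝ)^k)^2) := by
          rw [Finset.sum_const, Finset.card_univ]; simp [nsmul_eq_mul]
      _ = Real.sqrt d * (3:ℝ)^k := by
          rw [Real.sqrt_mul (by positivity), Real.sqrt_sq (le_of_lt (tpow_pos k))]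
  -- space segment estimate
  have space_est : |ψ y - ψ (y.1, x.2)| ≤ Kgrad * (Real.sqrt d * (3:ℝ)^k) := by
    set v : Fin d → ℝ := y.2 - x.2 with hvdef
    have hseg : ∀ τ ∈ Set.Icc (0:ℝ) 1, ((y.1, x.2 + τ • v) : Pt d) ∈ cubeAt d (k-1) k w := by
      intro τ hτ
      rw [mem_cubeAt]
      refine ⟨⟨by simpa using hyt1, by simpa using hyt2⟩, fun i _ => ?_⟩
      have h1 := hxs i; have h2 := hys i
      have hc := convex_Ioo (-((3:ℝ)^k)/2) ((3:ℝ)^k/2) h1 h2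
        (by linarith [hτ.1, hτ.2] : (0:ℝ) ≤ 1 - τ) (hτ.1) (by ring)
      have heq : (1-τ) • (x.2 i - z.2 i) + τ • (y.2 i - z.2 i)
          = ((x.2 + τ • v) i) - z.2 i := by
        simp only [hvdef, Pi.add_apply, Pi.smul_apply, Pi.sub_apply, smul_eq_mul]; ring
      rwa [heq] at hc
    have hder : ∀ τ ∈ Set.Icc (0:ℝ) 1,
        HasDerivWithinAt (fun τ : ℝ => ψ (y.1, x.2 + τ • v))
          (fderiv ℝ ψ (y.1, x.2 + τ • v) ((0:ℝ), v)) (Set.Icc (0:ℝ) 1) τ := by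
      intro τ hτ
      have hmem : ((y.1, x.2 + τ • v) : Pt d) ∈ pCube d n := hw (hseg τ hτ)
      have hc2 : HasDerivAt (fun τ : ℝ => x.2 + τ • v) v τ := by
        have := ((hasDerivAt_id τ).smul_const v).const_add x.2
        simpa using this
      have hc : HasDerivAt (fun τ : ℝ => ((y.1, x.2 + τ • v) : Pt d)) ((0:ℝ), v) τ :=
        (hasDerivAt_const τ y.1).prodMk hc2
      exact ((hdiff _ hmem).comp_hasDerivAt τ hc).hasDerivWithinAt
    have hbound : ∀ τ ∈ Set.Icc (0:ℝ) 1,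
        ‖fderiv ℝ ψ (y.1, x.2 + τ • v) ((0:ℝ), v)‖ ≤ Kgrad * (Real.sqrt d * (3:ℝ)^k) := by
      intro τ hτ
      rw [Real.norm_eq_abs]
      exact (hKg _ (hw (hseg τ hτ)) v).trans (mul_le_mul_of_nonneg_left hv hKg0)
    have hmvt := Convex.norm_image_sub_le_of_norm_hasDerivWithin_le hder hbound
      (convex_Icc 0 1) (Set.left_mem_Icc.2 zero_le_one) (Set.right_mem_Icc.2 zero_le_one)
    rw [Real.norm_eq_abs, Real.norm_eq_abs] at hmvt
    have h1 : ((y.1, x.2 + (1:ℝ) • v) : Pt d) = y := by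
      have : x.2 + (1:ℝ) • v = y.2 := by
        funext i; simp [hvdef]
      rw [this]
    have h0 : x.2 + (0:ℝ) • v = x.2 := by funext i; simp
    simp only [h1, h0] at hmvt
    simpa using hmvt
  calc |ψ x - ψ y| ≤ |ψ x - ψ (y.1, x.2)| + |ψ (y.1, x.2) - ψ y| := abs_sub_le _ _ _
    _ = |ψ (y.1, x.2) - ψ (x.1, x.2)| + |ψ y - ψ (y.1, x.2)| := by
        rw [abs_sub_comm (ψ x), abs_sub_comm _ (ψ y)]
    _ ≤ Kt * (3:ℝ)^(2*k) + Kgrad * (Real.sqrt d * (3:ℝ)^k) := add_le_add time_est space_est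

-- Section E: generic 1d counting lemmas
lemma key_fwd {p H W : ℝ} {w A : ℤ} (hp : 0 < p) (hW : p ≤ W) (hA : p * (2*A) = H - W)
    (hsub : ∀ t : ℝ, -W/2 < t → t < W/2 → (-H/2 < p*w + t ∧ p*w + t < H/2)) :
    |w| ≤ A := by
  have h1 := hsub (W/2 - p/2) (by linarith) (by linarith)
  have h2 := hsub (-(W/2 - p/2)) (by linarith) (by linarith)
  have hwA : (w:ℝ) < (A:ℝ) + 1 := by nlinarith [h1.2]
  have hwA' : -((A:ℝ)+1) < (w:ℝ) := by nlinarith [h2.1]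
  have e1 : w < A + 1 := by exact_mod_cast hwA
  have e2 : -(A+1) < w := by exact_mod_cast hwA'
  rw [abs_le]; omega

lemma key_bwd {p H W : ℝ} {w A : ℤ} (hp : 0 < p) (hA : p * (2*A) = H - W) (hw : |w| ≤ A) :
    ∀ t : ℝ, -W/2 < t → t < W/2 → (-H/2 < p*w + t ∧ p*w + t < H/2) := by
  intro t h1 h2
  have h3 : |(w:ℝ)| ≤ (A:ℝ) := by rw [← Int.cast_abs]; exact_mod_cast hw
  have h4 := abs_le.1 h3
  constructor <;>
    nlinarith [mul_nonneg hp.le (by linarith [h4.1] : (0:ℝ) ≤ (w:ℝ) + A),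
      mul_nonneg hp.le (by linarith [h4.2] : (0:ℝ) ≤ (A:ℝ) - w)]

lemma mult1d {p a : ℝ} {m : ℤ} {c : ℕ} (hp : 0 < p)
    (hlo : a - (c*p)/2 < p*m) (hhi : p*m < a + (c*p)/2) :
    ⌈(a - (c*p)/2)/p⌉ ≤ m ∧ m ≤ ⌈(a - (c*p)/2)/p⌉ + c := by
  set y : ℝ := (a - (c*p)/2)/p with hy
  have hylt : y < m := by
    rw [hy, div_lt_iff₀ hp]
    linarith [hlo]
  have hup : (m:ℝ) < y + c := by
    rw [hy]
    rw [show (a - (c*p)/2)/p + c = (a - (c*p)/2 + c*p)/p by field_simp]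
    rw [lt_div_iff₀ hp]
    linarith [hhi]
  constructor
  · have : (⌈y⌉ : ℝ) < m + 1 := lt_of_lt_of_le (Int.ceil_lt_add_one y) (by linarith)
    have : ⌈y⌉ < m + 1 := by exact_mod_cast this
    omega
  · have hcy : (m:ℝ) < ⌈y⌉ + c := lt_of_lt_of_le hup (by
      have := Int.le_ceil y; push_cast; linarith)
    have : m < ⌈y⌉ + c := by exact_mod_cast hcy
    omega

-- powers bookkeeping
lemma cast9pow (m : ℕ) : (((9:ℤ)^m : ℤ) : ℝ) = (3:ℝ)^(2*(m:ℤ)) := by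
  push_cast
  rw [show (2*(m:ℤ)) = ((2*m : ℕ) : ℤ) by push_cast; ring, zpow_natCast, pow_mul]
  norm_num

lemma cast3pow (m : ℕ) : (((3:ℤ)^m : ℤ) : ℝ) = (3:ℝ)^((m:ℤ)) := by
  push_cast
  rw [← zpow_natCast]

lemma zpow_add3 (a b : ℤ) : (3:ℝ)^(a+b) = (3:ℝ)^a * (3:ℝ)^b :=
  zpow_add₀ (by norm_num) a b

/-- half-length of the admissible time translations -/
def tA (n k : ℤ) : ℤ := ((9:ℤ)^((n-k).toNat + 1) - 9)/2
def xB (n k : ℤ) : ℤ := ((3:ℤ)^((n-k).toNat + 1) - 3)/2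

lemma two_tA (n k : ℤ) : 2 * tA n k = (9:ℤ)^((n-k).toNat + 1) - 9 := by
  rw [tA, Int.mul_ediv_cancel']
  have h9 : Odd ((9:ℤ)^((n-k).toNat + 1)) := Odd.pow (by decide)
  rcases h9 with ⟨m, hm⟩
  exact ⟨m - 4, by omega⟩

lemma two_xB (n k : ℤ) : 2 * xB n k = (3:ℤ)^((n-k).toNat + 1) - 3 := by
  rw [xB, Int.mul_ediv_cancel']
  have h3 : Odd ((3:ℤ)^((n-k).toNat + 1)) := Odd.pow (by decide)
  rcases h3 with ⟨m, hm⟩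
  exact ⟨m - 1, by omega⟩

lemma hA_time {n k : ℤ} (hk : k ≤ n) :
    (3:ℝ)^(2*(k-1)) * (2 * ((tA n k : ℤ) : ℝ)) = (3:ℝ)^(2*n) - (3:ℝ)^(2*k) := by
  have hj : ((n-k).toNat : ℤ) = n - k := Int.toNat_of_nonneg (by omega)
  have h2 : (2:ℝ) * ((tA n k : ℤ) : ℝ) = (((9:ℤ)^((n-k).toNat+1) : ℤ) : ℝ) - 9 := by
    exact_mod_cast congrArg (fun z : ℤ => (z : ℝ)) (two_tA n k)
  rw [h2, cast9pow, show (9:ℝ) = (3:ℝ)^(2:ℤ) by norm_num, mul_sub, ← zpow_add3, ← zpow_add3,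
    show 2*(k-1) + 2*((((n-k).toNat+1 : ℕ)) : ℤ) = 2*n by omega,
    show 2*(k-1) + (2:ℤ) = 2*k by ring]

lemma hB_space {n k : ℤ} (hk : k ≤ n) :
    (3:ℝ)^(k-1) * (2 * ((xB n k : ℤ) : ℝ)) = (3:ℝ)^(n) - (3:ℝ)^(k) := by
  have hj : ((n-k).toNat : ℤ) = n - k := Int.toNat_of_nonneg (by omega)
  have h2 : (2:ℝ) * ((xB n k : ℤ) : ℝ) = (((3:ℤ)^((n-k).toNat+1) : ℤ) : ℝ) - 3 := by
    exact_mod_cast congrArg (fun z : ℤ => (z : ℝ)) (two_xB n k)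
  have e2 : (3:ℝ)^(k-1) * 3 = (3:ℝ)^k := by
    calc (3:ℝ)^(k-1) * 3 = (3:ℝ)^(k-1) * (3:ℝ)^(1:ℤ) := by norm_num
      _ = (3:ℝ)^(k-1+1) := (zpow_add3 _ _).symm
      _ = (3:ℝ)^k := by rw [sub_add_cancel]
  rw [h2, cast3pow, mul_sub, ← zpow_add3, e2,
    show k - 1 + ((((n-k).toNat+1 : ℕ)) : ℤ) = n by omega]

lemma mem_pCube_iff {d : ℕ} {m : ℤ} {q : Pt d} :
    q ∈ pCube d m ↔ ((-((3:ℝ)^(2*m))/2 < q.1 ∧ q.1 < (3:ℝ)^(2*m)/2) ∧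
      ∀ i, -((3:ℝ)^m)/2 < q.2 i ∧ q.2 i < (3:ℝ)^m/2) := by
  constructor
  · rintro ⟨h1, h2⟩
    exact ⟨⟨h1.1, h1.2⟩, fun i => h2 i trivial⟩
  · rintro ⟨h1, h2⟩
    exact ⟨⟨h1.1, h1.2⟩, fun i _ => ⟨(h2 i).1, (h2 i).2⟩⟩

lemma mem_cubeAt_iff {d : ℕ} {k : ℤ} {w : ℤ × (Fin d → ℤ)} {q : Pt d} :
    q ∈ cubeAt d (k-1) k w ↔
      ((-((3:ℝ)^(2*k))/2 < q.1 - (3:ℝ)^(2*(k-1)) * w.1 ∧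
        q.1 - (3:ℝ)^(2*(k-1)) * w.1 < (3:ℝ)^(2*k)/2) ∧
      ∀ i, -((3:ℝ)^k)/2 < q.2 i - (3:ℝ)^(k-1) * w.2 i ∧
        q.2 i - (3:ℝ)^(k-1) * w.2 i < (3:ℝ)^k/2) := by
  rw [mem_cubeAt, mem_pCube_iff]
  constructor
  · rintro ⟨h1, h2⟩
    refine ⟨?_, fun i => ?_⟩
    · have e : (q - latPt d (k-1) w).1 = q.1 - (3:ℝ)^(2*(k-1)) * w.1 := rfl
      rwa [e] at h1
    · have e : (q - latPt d (k-1) w).2 i = q.2 i - (3:ℝ)^(k-1) * w.2 i := rfl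
      rw [← e]; exact h2 i
  · rintro ⟨h1, h2⟩
    exact ⟨h1, fun i => h2 i⟩

def idxF (d : ℕ) (n k : ℤ) : Finset (ℤ × (Fin d → ℤ)) :=
  Finset.Icc (-(tA n k)) (tA n k) ×ˢ Fintype.piFinset fun _ : Fin d => Finset.Icc (-(xB n k)) (xB n k)

lemma mem_idxF {d : ℕ} {n k : ℤ} {w : ℤ × (Fin d → ℤ)} :
    w ∈ idxF d n k ↔ |w.1| ≤ tA n k ∧ ∀ i, |w.2 i| ≤ xB n k := by
  simp [idxF, Finset.mem_product, Fintype.mem_piFinset, Finset.mem_Icc, abs_le]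

lemma inIdx_eq {d : ℕ} {n k : ℤ} (hk : k ≤ n) :
    inIdx d (k-1) k (pCube d n) = ↑(idxF d n k) := by
  have hpt := tpow_pos (2*(k-1))
  have hps := tpow_pos (k-1)
  have hWt : (3:ℝ)^(2*(k-1)) ≤ (3:ℝ)^(2*k) :=
    zpow_le_zpow_right₀ (by norm_num) (by omega)
  have hWs : (3:ℝ)^(k-1) ≤ (3:ℝ)^k :=
    zpow_le_zpow_right₀ (by norm_num) (by omega)
  ext w
  simp only [inIdx, Set.mem_setOf_eq, Finset.coe_sort_coe, Finset.mem_coe, mem_idxF]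
  constructor
  · intro hsub
    constructor
    · refine key_fwd hpt hWt (hA_time hk) (fun t ht1 ht2 => ?_)
      have hq : ((( (3:ℝ)^(2*(k-1)) * w.1 + t, fun i => (3:ℝ)^(k-1) * w.2 i) : Pt d)) ∈
          cubeAt d (k-1) k w := by
        rw [mem_cubeAt_iff]
        constructor
        · constructor <;> simp <;> linarith
        · intro i; constructor <;> simp <;> linarith [tpow_pos k]
      have := (mem_pCube_iff.1 (hsub hq)).1
      simpa using this
    · intro i
      refine key_fwd hps hWs (hB_space hk) (fun t ht1 ht2 => ?_)
      have hq : ((( (3:ℝ)^(2*(k-1)) * w.1,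
          fun j => (3:ℝ)^(k-1) * w.2 j + (if j = i then t else 0)) : Pt d)) ∈
          cubeAt d (k-1) k w := by
        rw [mem_cubeAt_iff]
        constructor
        · constructor <;> simp <;> linarith [tpow_pos (2*k)]
        · intro j
          by_cases hj : j = i <;> constructor <;> simp [hj] <;> linarith [tpow_pos k]
      have := (mem_pCube_iff.1 (hsub hq)).2 i
      simpa using this
  · rintro ⟨h1, h2⟩ q hq
    rw [mem_cubeAt_iff] at hq
    rw [mem_pCube_iff]
    constructor
    · have := key_bwd hpt (hA_time hk) h1 (q.1 - (3:ℝ)^(2*(k-1)) * w.1) hq.1.1 hq.1.2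
      constructor <;> [linarith [this.1]; linarith [this.2]]
    · intro i
      have := key_bwd hps (hB_space hk) (h2 i) (q.2 i - (3:ℝ)^(k-1) * w.2 i)
        (hq.2 i).1 (hq.2 i).2
      constructor <;> [linarith [this.1]; linarith [this.2]]

lemma cube_subset_of_mem {d : ℕ} {n k : ℤ} (hk : k ≤ n) {w : ℤ × (Fin d → ℤ)}
    (hw : w ∈ idxF d n k) : cubeAt d (k-1) k w ⊆ pCube d n := by
  have : w ∈ inIdx d (k-1) k (pCube d n) := by
    rw [inIdx_eq hk]; exact_mod_cast hw
  exact this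

lemma card_idxF (d : ℕ) (n k : ℤ) :
    (idxF d n k).card = (2*tA n k + 1).toNat * ((2*xB n k + 1).toNat)^d := by
  rw [idxF, Finset.card_product, Fintype.card_piFinset]
  simp only [Int.card_Icc]
  rw [show tA n k + 1 - -tA n k = 2*tA n k+1 by ring, show xB n k + 1 - -xB n k = 2*xB n k + 1 by ring]
  rw [Finset.prod_const, Finset.card_univ, Fintype.card_fin]

lemma card_idxF_ge {d : ℕ} {n k : ℤ} (hk : k ≤ n) :
    9^((n-k).toNat) * (3^((n-k).toNat))^d ≤ (idxF d n k).card := by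
  rw [card_idxF]
  have h9 : (1:ℤ) ≤ 9^((n-k).toNat) := one_le_pow₀ (by norm_num)
  have h3 : (1:ℤ) ≤ 3^((n-k).toNat) := one_le_pow₀ (by norm_num)
  have ht : 9^((n-k).toNat) ≤ (2*tA n k + 1).toNat := by
    rw [Int.le_toNat (by rw [two_tA, pow_succ]; nlinarith [h9] : (0:ℤ) ≤ 2*tA n k + 1)]
    rw [two_tA]
    push_cast
    rw [pow_succ]
    nlinarith [h9]
  have hx : 3^((n-k).toNat) ≤ (2*xB n k + 1).toNat := by
    rw [Int.le_toNat (by rw [two_xB, pow_succ]; nlinarith [h3] : (0:ℤ) ≤ 2*xB n k + 1)]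
    rw [two_xB]
    push_cast
    rw [pow_succ]
    nlinarith [h3]
  exact Nat.mul_le_mul ht (Nat.pow_le_pow_left hx d)

lemma vol_ratio {d : ℕ} {n k : ℤ} (hk : k ≤ n) :
    volume (pCube d n) ≤ ((idxF d n k).card : ℝ≥0∞) * volume (pCube d k) := by
  have hj : ((n-k).toNat : ℤ) = n - k := Int.toNat_of_nonneg (by omega)
  have h1 : (3:ℝ)^(2*n) = ((9:ℕ)^((n-k).toNat) : ℕ) * (3:ℝ)^(2*k) := by
    push_cast
    rw [show ((9:ℝ)) = (3:ℝ)^(2:ℕ) by norm_num, ← pow_mul, ← zpow_natCast, ← zpow_add3]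
    congr 1
    omega
  have h2 : (3:ℝ)^n = ((3:ℕ)^((n-k).toNat) : ℕ) * (3:ℝ)^k := by
    push_cast
    rw [← zpow_natCast, ← zpow_add3]
    congr 1
    omega
  rw [volume_pCube, volume_pCube, h1, h2]
  rw [ENNReal.ofReal_mul (by positivity), ENNReal.ofReal_mul (by positivity),
    ENNReal.ofReal_natCast, ENNReal.ofReal_natCast, mul_pow]
  have hcard : ((9 ^ ((n-k).toNat) * (3 ^ ((n-k).toNat))^d : ℕ) : ℝ≥0∞) ≤
      ((idxF d n k).card : ℝ≥0∞) := by exact_mod_cast card_idxF_ge hk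
  have heq : ((9 ^ ((n-k).toNat) : ℕ) : ℝ≥0∞) * ENNReal.ofReal ((3:ℝ)^(2*k)) *
      (((3 ^ ((n-k).toNat) : ℕ) : ℝ≥0∞)^d * (ENNReal.ofReal ((3:ℝ)^k))^d) =
      ((9 ^ ((n-k).toNat) * (3 ^ ((n-k).toNat))^d : ℕ) : ℝ≥0∞) *
        (ENNReal.ofReal ((3:ℝ)^(2*k)) * (ENNReal.ofReal ((3:ℝ)^k))^d) := by
    push_cast; ring
  rw [heq]
  exact mul_le_mul_left hcard _

lemma e9 (k : ℤ) : (3:ℝ)^(2*k) = 9 * (3:ℝ)^(2*(k-1)) := by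
  rw [show (9:ℝ) = (3:ℝ)^(2:ℤ) by norm_num, ← zpow_add3]
  congr 1; ring

lemma e3 (k : ℤ) : (3:ℝ)^k = 3 * (3:ℝ)^(k-1) := by
  nth_rewrite 2 [show (3:ℝ) = (3:ℝ)^(1:ℤ) by norm_num]
  rw [← zpow_add3]
  congr 1; ring

lemma mult_card_le {d : ℕ} {n k : ℤ} (x : Pt d) :
    ((idxF d n k).filter (fun w => x ∈ cubeAt d (k-1) k w)).card ≤ 10 * 4^d := by
  classical
  set m₁ : ℤ := ⌈(x.1 - 9*(3:ℝ)^(2*(k-1))/2)/(3:ℝ)^(2*(k-1))⌉ with hm1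
  set m₂ : Fin d → ℤ := fun i => ⌈(x.2 i - 3*(3:ℝ)^(k-1)/2)/(3:ℝ)^(k-1)⌉ with hm2
  have hsub : (idxF d n k).filter (fun w => x ∈ cubeAt d (k-1) k w) ⊆
      Finset.Icc m₁ (m₁ + 9) ×ˢ Fintype.piFinset (fun i => Finset.Icc (m₂ i) (m₂ i + 3)) := by
    intro w hw
    have hx := (Finset.mem_filter.1 hw).2
    rw [mem_cubeAt_iff] at hx
    rw [Finset.mem_product, Fintype.mem_piFinset]
    constructor
    · have h1 := hx.1.1; have h2 := hx.1.2
      rw [e9 k] at h1 h2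
      have := mult1d (c := 9) (a := x.1) (m := w.1) (tpow_pos (2*(k-1)))
        (by push_cast; linarith) (by push_cast; linarith)
      rw [Finset.mem_Icc]
      constructor
      · exact le_trans (le_of_eq (by rw [hm1]; norm_num)) this.1
      · refine le_trans this.2 (le_of_eq ?_)
        rw [hm1]; norm_num
    · intro i
      have h1 := (hx.2 i).1; have h2 := (hx.2 i).2
      rw [e3 k] at h1 h2
      have := mult1d (c := 3) (a := x.2 i) (m := w.2 i) (tpow_pos (k-1))
        (by push_cast; linarith) (by push_cast; linarith)
      rw [Finset.mem_Icc]
      constructor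
      · exact le_trans (le_of_eq (by rw [hm2]; norm_num)) this.1
      · refine le_trans this.2 (le_of_eq ?_)
        rw [hm2]; norm_num
  calc ((idxF d n k).filter (fun w => x ∈ cubeAt d (k-1) k w)).card ≤
      (Finset.Icc m₁ (m₁ + 9) ×ˢ Fintype.piFinset (fun i => Finset.Icc (m₂ i) (m₂ i + 3))).card :=
        Finset.card_le_card hsub
    _ = 10 * 4^d := by
        rw [Finset.card_product, Fintype.card_piFinset]
        simp only [Int.card_Icc]
        rw [show m₁ + 9 + 1 - m₁ = (10:ℤ) by ring]
        have h4 : ∀ i, (m₂ i + 3 + 1 - m₂ i).toNat = 4 := fun i => by omega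
        simp [h4]

lemma sum_lint_le {d : ℕ} {n k : ℤ} (hk : k ≤ n) (g : Pt d → ℝ≥0∞) (hg : Measurable g) :
    ∑ w ∈ idxF d n k, ∫⁻ x in cubeAt d (k-1) k w, g x ≤
      ((10 * 4^d : ℕ) : ℝ≥0∞) * ∫⁻ x in pCube d n, g x := by
  classical
  have hmeas : ∀ w : ℤ × (Fin d → ℤ), MeasurableSet (cubeAt d (k-1) k w) :=
    fun w => (isOpen_cubeAt d (k-1) k w).measurableSet
  calc ∑ w ∈ idxF d n k, ∫⁻ x in cubeAt d (k-1) k w, g x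
      = ∑ w ∈ idxF d n k, ∫⁻ x, (cubeAt d (k-1) k w).indicator g x := by
        refine Finset.sum_congr rfl fun w _ => ?_
        rw [lintegral_indicator (hmeas w)]
    _ = ∫⁻ x, ∑ w ∈ idxF d n k, (cubeAt d (k-1) k w).indicator g x :=
        (lintegral_finset_sum _ (fun w _ => hg.indicator (hmeas w))).symm
    _ ≤ ∫⁻ x, ((10 * 4^d : ℕ) : ℝ≥0∞) * (pCube d n).indicator g x := by
        refine lintegral_mono fun x => ?_
        have hsum : ∑ w ∈ idxF d n k, (cubeAt d (k-1) k w).indicator g x =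
            (((idxF d n k).filter (fun w => x ∈ cubeAt d (k-1) k w)).card : ℝ≥0∞) * g x := by
          rw [Finset.sum_indicator_eq_sum_filter, Finset.sum_const, nsmul_eq_mul]
        rw [hsum]
        by_cases hpos : ((idxF d n k).filter (fun w => x ∈ cubeAt d (k-1) k w)).card = 0
        · simp [hpos]
        · obtain ⟨w₀, hw₀⟩ := Finset.card_pos.1 (Nat.pos_of_ne_zero hpos)
          have hmem := Finset.mem_filter.1 hw₀
          have hxn : x ∈ pCube d n := cube_subset_of_mem hk hmem.1 hmem.2
          rw [Set.indicator_of_mem hxn]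
          exact mul_le_mul_left (Nat.cast_le.mpr (mult_card_le (n := n) (k := k) x)) _
    _ = ((10 * 4^d : ℕ) : ℝ≥0∞) * ∫⁻ x in pCube d n, g x := by
        rw [lintegral_const_mul _ (hg.indicator (isOpen_pCube d n).measurableSet),
          lintegral_indicator (isOpen_pCube d n).measurableSet]

lemma avgSum_idx {d : ℕ} {n k : ℤ} (hk : k ≤ n) (f : ℤ × (Fin d → ℤ) → ℝ≥0∞) :
    avgSum (inIdx d (k-1) k (pCube d n)) f =
      (((idxF d n k).card : ℕ) : ℝ≥0∞)⁻¹ * ∑ w ∈ idxF d n k, f w := by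
  rw [avgSum, inIdx_eq hk]
  congr 1
  · congr 2
    rw [Nat.card_coe_set_eq, Set.ncard_coe_finset]
  · exact Finset.tsum_subtype _ f

lemma idxF_card_pos {d : ℕ} {n k : ℤ} (hk : k ≤ n) : 0 < (idxF d n k).card := by
  have := card_idxF_ge (d := d) hk
  have h1 : 0 < 9^((n-k).toNat) * (3^((n-k).toNat))^d := by positivity
  omega

lemma avg_l2Pow_le {d : ℕ} {n k : ℤ} {u : Pt d → ℝ} (hk : k ≤ n) (hu : Measurable u) :
    avgSum (inIdx d (k-1) k (pCube d n)) (fun w => l2Pow d (cubeAt d (k-1) k w) u) ≤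
      ((10*4^d : ℕ) : ℝ≥0∞) * l2Pow d (pCube d n) u := by
  rw [avgSum_idx hk]
  have hg : Measurable (fun x => (‖u x‖₊ : ℝ≥0∞) ^ (2:ℝ)) :=
    ENNReal.continuous_rpow_const.measurable.comp hu.enorm
  have hc0 : (((idxF d n k).card : ℕ) : ℝ≥0∞) ≠ 0 :=
    Nat.cast_ne_zero.2 (idxF_card_pos hk).ne'
  have hctop : (((idxF d n k).card : ℕ) : ℝ≥0∞) ≠ ⊤ := ENNReal.natCast_ne_top _
  have hv0 := (volume_pCube_pos d k).ne'
  have hvt := volume_pCube_ne_top d k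
  calc (((idxF d n k).card : ℕ) : ℝ≥0∞)⁻¹ *
        ∑ w ∈ idxF d n k, l2Pow d (cubeAt d (k-1) k w) u
      = (((idxF d n k).card : ℕ) : ℝ≥0∞)⁻¹ * ((volume (pCube d k))⁻¹ *
          ∑ w ∈ idxF d n k, ∫⁻ x in cubeAt d (k-1) k w, (‖u x‖₊ : ℝ≥0∞) ^ (2:ℝ)) := by
        congr 1
        rw [Finset.mul_sum]
        refine Finset.sum_congr rfl fun w _ => ?_
        rw [l2Pow, volume_cubeAt]
    _ ≤ (((idxF d n k).card : ℕ) : ℝ≥0∞)⁻¹ * ((volume (pCube d k))⁻¹ *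
          (((10 * 4^d : ℕ) : ℝ≥0∞) * ∫⁻ x in pCube d n, (‖u x‖₊ : ℝ≥0∞) ^ (2:ℝ))) := by
        gcongr
        exact sum_lint_le hk _ hg
    _ = ((10*4^d : ℕ) : ℝ≥0∞) * (((((idxF d n k).card : ℕ) : ℝ≥0∞) * volume (pCube d k))⁻¹ *
          ∫⁻ x in pCube d n, (‖u x‖₊ : ℝ≥0∞) ^ (2:ℝ)) := by
        rw [ENNReal.mul_inv (Or.inl hc0) (Or.inl hctop)]
        ring
    _ ≤ ((10*4^d : ℕ) : ℝ≥0∞) * ((volume (pCube d n))⁻¹ *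
          ∫⁻ x in pCube d n, (‖u x‖₊ : ℝ≥0∞) ^ (2:ℝ)) := by
        gcongr
        exact vol_ratio hk
    _ = ((10*4^d : ℕ) : ℝ≥0∞) * l2Pow d (pCube d n) u := rfl

-- Section F: per-cube estimate
lemma l2Pow_funext {d : ℕ} {V : Set (Pt d)} {f g : Pt d → ℝ} (h : ∀ x, f x = g x) :
    l2Pow d V f = l2Pow d V g := by
  congr 1
  exact funext h

lemma percube {d : ℕ} {n k : ℤ} {w : ℤ × (Fin d → ℤ)} (hk : k ≤ n) (hw : w ∈ idxF d n k)
    {v ψ : Pt d → ℝ} {Kψ Kgrad Kt : ℝ}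
    (hv : Measurable v)
    (hψ : ContDiffOn ℝ (⊤ : ℕ∞) ψ (pCube d n))
    (hψae : AEMeasurable ψ (volume.restrict (cubeAt d (k-1) k w)))
    (hint : Integrable (fun x => v x * ψ x) (volume.restrict (cubeAt d (k-1) k w)))
    (hKψ : ∀ q ∈ pCube d n, |ψ q| ≤ Kψ)
    (hKg : ∀ q ∈ pCube d n, ∀ vv : Fin d → ℝ, |fderiv ℝ ψ q (0, vv)| ≤ Kgrad * eunorm vv)
    (hKt : ∀ q ∈ pCube d n, |fderiv ℝ ψ q (1, 0)| ≤ Kt)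
    (hKψ0 : 0 ≤ Kψ) (hKt0 : 0 ≤ Kt) (hKg0 : 0 ≤ Kgrad) :
    l2Pow d (cubeAt d (k-1) k w)
        (fun x => v x * ψ x - setAvg (cubeAt d (k-1) k w) (fun q => v q * ψ q)) ≤
      32 * ENNReal.ofReal Kψ ^ (2:ℝ) *
          l2Pow d (cubeAt d (k-1) k w) (fun x => v x - setAvg (cubeAt d (k-1) k w) v)
        + 32 * ENNReal.ofReal (Kt * (3:ℝ)^(2*k) + Kgrad * (Real.sqrt d * (3:ℝ)^k)) ^ (2:ℝ) *
            l2Pow d (cubeAt d (k-1) k w) v := by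
  set V := cubeAt d (k-1) k w with hV
  set Rk : ℝ := Kt * (3:ℝ)^(2*k) + Kgrad * (Real.sqrt d * (3:ℝ)^k) with hRk
  have hRk0 : 0 ≤ Rk := by rw [hRk]; positivity
  have hsub : V ⊆ pCube d n := cube_subset_of_mem hk hw
  have hVm : MeasurableSet V := (isOpen_cubeAt d (k-1) k w).measurableSet
  have hv0 : volume V ≠ 0 := by rw [hV, volume_cubeAt]; exact (volume_pCube_pos d k).ne'
  have hvtop : volume V ≠ ⊤ := by rw [hV, volume_cubeAt]; exact volume_pCube_ne_top d k
  set c : ℝ := ψ (latPt d (k-1) w) with hcdef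
  have hosc : ∀ x ∈ V, |ψ x - c| ≤ Rk :=
    fun x hx => osc_psi hsub hψ hKg hKt hKt0 hKg0 hx (center_mem_cubeAt d (k-1) k w)
  set g : Pt d → ℝ := fun x => v x * ψ x with hgdef
  set m : ℝ := setAvg V g with hm
  set av : ℝ := setAvg V v with hav
  set a : ℝ := av * c with ha
  have hgae : AEMeasurable g (volume.restrict V) := (hv.aemeasurable.mono_measure
    (Measure.restrict_le_self.trans (le_of_eq rfl))).mul hψae |>.congr (by rfl)
  -- setAvg of (g - a)
  have havg_sub : setAvg V (fun x => g x - a) = m - a := by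
    have hfin : IsFiniteMeasure (volume.restrict V) := by
      constructor
      rw [Measure.restrict_apply_univ]
      exact lt_of_le_of_ne le_top hvtop
    haveI := hfin
    rw [hm]
    simp only [setAvg]
    rw [average_eq, average_eq, measureReal_def, Measure.restrict_apply_univ]
    rw [integral_sub hint (integrable_const a), integral_const, measureReal_def, Measure.restrict_apply_univ]
    have ht0 : (volume V).toReal ≠ 0 :=
      (ENNReal.toReal_pos hv0 hvtop).ne'
    rw [smul_eq_mul, smul_eq_mul, smul_eq_mul]
    field_simp
  -- step 1 & 2
  have step12 : l2Pow d V (fun x => g x - m) ≤ 8 * l2Pow d V (fun x => g x - a) := by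
    have he : (fun x => g x - m) = fun x => (g x - a) + (a - m) := by funext x; ring
    have h1 : l2Pow d V (fun x => g x - m) ≤
        4 * l2Pow d V (fun x => g x - a) + 4 * l2Pow d V (fun _ => a - m) := by
      rw [show l2Pow d V (fun x => g x - m) = l2Pow d V (fun x => (g x - a) + (a - m)) from
        l2Pow_funext (fun x => by ring)]
      exact l2Pow_add_le (hgae.sub_const a)
    have h2 : l2Pow d V (fun _ : Pt d => a - m) ≤ l2Pow d V (fun x => g x - a) := by
      rw [l2Pow_const hv0 hvtop]
      have : |a - m| = |setAvg V (fun x => g x - a)| := by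
        rw [havg_sub, abs_sub_comm]
      rw [this]
      exact ofReal_setAvg_sq_le hv0 hvtop (hgae.sub_const a)
    calc l2Pow d V (fun x => g x - m) ≤
        4 * l2Pow d V (fun x => g x - a) + 4 * l2Pow d V (fun _ => a - m) := h1
      _ ≤ 4 * l2Pow d V (fun x => g x - a) + 4 * l2Pow d V (fun x => g x - a) := by gcongr
      _ = 8 * l2Pow d V (fun x => g x - a) := by ring
  -- step 3
  have step3 : l2Pow d V (fun x => g x - a) ≤
      4 * l2Pow d V (fun x => (v x - av) * ψ x) + 4 * l2Pow d V (fun x => av * (ψ x - c)) := by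
    rw [l2Pow_funext (f := fun x => g x - a)
      (g := fun x => (v x - av) * ψ x + av * (ψ x - c)) (fun x => by simp [hgdef, ha]; ring)]
    exact l2Pow_add_le (((hv.aemeasurable.sub_const av).mono_measure le_rfl).mul hψae)
  -- step 4
  have step4 : l2Pow d V (fun x => (v x - av) * ψ x) ≤
      ENNReal.ofReal Kψ ^ (2:ℝ) * l2Pow d V (fun x => v x - av) := by
    refine l2Pow_le_of_bound ENNReal.ofReal_ne_top
      ((hv.aemeasurable.sub_const av).mono_measure le_rfl) hVm (fun x hx => ?_)
    rw [sq_nn, sq_nn, abs_mul, ← ENNReal.ofReal_mul hKψ0, mul_comm Kψ]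
    exact ENNReal.ofReal_le_ofReal
      (mul_le_mul_of_nonneg_left (hKψ x (hsub hx)) (abs_nonneg _))
  -- step 5
  have step5 : l2Pow d V (fun x => av * (ψ x - c)) ≤
      ENNReal.ofReal Rk ^ (2:ℝ) * l2Pow d V (fun _ => av) := by
    refine l2Pow_le_of_bound ENNReal.ofReal_ne_top aemeasurable_const hVm (fun x hx => ?_)
    rw [sq_nn, sq_nn, abs_mul, ← ENNReal.ofReal_mul hRk0, mul_comm Rk]
    exact ENNReal.ofReal_le_ofReal
      (mul_le_mul_of_nonneg_left (hosc x hx) (abs_nonneg _))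
  -- step 6
  have step6 : l2Pow d V (fun _ : Pt d => av) ≤ l2Pow d V v := by
    rw [l2Pow_const hv0 hvtop]
    exact ofReal_setAvg_sq_le hv0 hvtop (hv.aemeasurable.mono_measure le_rfl)
  calc l2Pow d V (fun x => g x - m) ≤ 8 * l2Pow d V (fun x => g x - a) := step12
    _ ≤ 8 * (4 * l2Pow d V (fun x => (v x - av) * ψ x) +
        4 * l2Pow d V (fun x => av * (ψ x - c))) := by gcongr
    _ ≤ 8 * (4 * (ENNReal.ofReal Kψ ^ (2:ℝ) * l2Pow d V (fun x => v x - av)) +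
        4 * (ENNReal.ofReal Rk ^ (2:ℝ) * (l2Pow d V v))) := by
          gcongr
          exact step5.trans (by gcongr)
    _ = 32 * ENNReal.ofReal Kψ ^ (2:ℝ) * l2Pow d V (fun x => v x - av)
        + 32 * ENNReal.ofReal Rk ^ (2:ℝ) * l2Pow d V v := by ring

-- Section G: helpers for assembly
lemma sq_half (x : ℝ≥0∞) : (x ^ (2:ℝ)) ^ ((2:ℝ)⁻¹) = x := by
  rw [← ENNReal.rpow_mul]; norm_num

lemma ofReal_zpow3 (m : ℤ) : ENNReal.ofReal ((3:ℝ)^m) = (3:ℝ≥0∞) ^ ((m:ℝ)) := by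
  rw [← Real.rpow_intCast 3 m, ← ENNReal.ofReal_rpow_of_pos (by norm_num : (0:ℝ) < 3),
    ENNReal.ofReal_ofNat]

lemma three_rpow_add (a b : ℝ) : (3:ℝ≥0∞)^(a+b) = (3:ℝ≥0∞)^a * (3:ℝ≥0∞)^b :=
  ENNReal.rpow_add a b (by norm_num) (by norm_num)

lemma three_rpow_mono {a b : ℝ} (h : a ≤ b) : (3:ℝ≥0∞)^a ≤ (3:ℝ≥0∞)^b :=
  ENNReal.rpow_le_rpow_of_exponent_le (by norm_num) h

lemma h32half : (32:ℝ≥0∞) ^ ((2:ℝ)⁻¹) ≤ 6 := by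
  have h : (32:ℝ≥0∞) ≤ (6:ℝ≥0∞)^(2:ℝ) := by
    rw [show (2:ℝ) = ((2:ℕ):ℝ) by norm_num, ENNReal.rpow_natCast]
    norm_num
  calc (32:ℝ≥0∞)^((2:ℝ)⁻¹) ≤ ((6:ℝ≥0∞)^(2:ℝ))^((2:ℝ)⁻¹) := ENNReal.rpow_le_rpow h (by norm_num)
    _ = 6 := sq_half 6

lemma rpow_half_le_self {x : ℝ≥0∞} (hx : 1 ≤ x) : x ^ ((2:ℝ)⁻¹) ≤ x := by
  calc x ^ ((2:ℝ)⁻¹) ≤ x ^ (1:ℝ) := ENNReal.rpow_le_rpow_of_exponent_le hx (by norm_num)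
    _ = x := ENNReal.rpow_one x

lemma avgSum_le_combo {d : ℕ} {n k : ℤ} (hk : k ≤ n)
    {f g h : ℤ × (Fin d → ℤ) → ℝ≥0∞} {x y : ℝ≥0∞}
    (hle : ∀ w ∈ idxF d n k, f w ≤ x * g w + y * h w) :
    avgSum (inIdx d (k-1) k (pCube d n)) f ≤
      x * avgSum (inIdx d (k-1) k (pCube d n)) g + y * avgSum (inIdx d (k-1) k (pCube d n)) h := by
  rw [avgSum_idx hk, avgSum_idx hk, avgSum_idx hk]
  set c := (((idxF d n k).card : ℕ) : ℝ≥0∞)⁻¹ with hc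
  calc c * ∑ w ∈ idxF d n k, f w ≤ c * ∑ w ∈ idxF d n k, (x * g w + y * h w) :=
      mul_le_mul_right (Finset.sum_le_sum hle) c
    _ = x * (c * ∑ w ∈ idxF d n k, g w) + y * (c * ∑ w ∈ idxF d n k, h w) := by
      rw [Finset.sum_add_distrib, ← Finset.mul_sum, ← Finset.mul_sum]
      ring

lemma l2Pow_congr_ae {d : ℕ} {V : Set (Pt d)} {f g : Pt d → ℝ}
    (h : f =ᵐ[volume.restrict V] g) : l2Pow d V f = l2Pow d V g := by
  rw [l2Pow, l2Pow]
  congr 1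
  refine lintegral_congr_ae ?_
  filter_upwards [h] with x hx
  rw [hx]

lemma setAvg_congr_ae {d : ℕ} {V : Set (Pt d)} {f g : Pt d → ℝ}
    (h : f =ᵐ[volume.restrict V] g) : setAvg V f = setAvg V g := average_congr h

lemma besovSemiSup_congr {d : ℕ} {s : ℝ} {n : ℤ} {f g : Pt d → ℝ}
    (h : f =ᵐ[volume.restrict (pCube d n)] g) :
    besovSemiSup d s n f = besovSemiSup d s n g := by
  rw [besovSemiSup, besovSemiSup]
  congr 1
  funext k
  congr 2
  rw [avgSum, avgSum]
  congr 1
  refine tsum_congr fun w => ?_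
  have hsub : cubeAt d ((k:ℤ)-1) (k:ℤ) w ⊆ pCube d n := w.2
  have h' : f =ᵐ[volume.restrict (cubeAt d ((k:ℤ)-1) (k:ℤ) w)] g :=
    ae_restrict_of_ae_restrict_of_subset hsub h
  rw [setAvg_congr_ae h']
  refine l2Pow_congr_ae ?_
  filter_upwards [h'] with x hx
  rw [hx]

/-- products in the parabolic Besov space `B^s_{2,∞}`: there is a
constant `C = C(d)` such that for all scales `n`, all `s ∈ [0,1]`, all `u ∈ L²(□_n)`
of finite Besov seminorm, and all smooth `ψ` with `|ψ| ≤ Kψ`, `|∇ψ| ≤ K∇`,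
`|∂_tψ| ≤ K∂` on `□_n`, the stated product estimate holds. -/
theorem statement9 (d : ℕ) (hd : 1 ≤ d) :
    ∃ C : ℝ≥0, ∀ (n : ℤ) (s : ℝ), 0 ≤ s → s ≤ 1 →
      ∀ u : Pt d → ℝ, MemLp u 2 (volume.restrict (pCube d n)) →
        besovSemiSup d s n u ≠ ⊤ →
        ∀ ψ : Pt d → ℝ, ContDiffOn ℝ (⊤ : ℕ∞) ψ (pCube d n) →
          ∀ Kψ Kgrad Kt : ℝ,
            (∀ q ∈ pCube d n, |ψ q| ≤ Kψ) →
            (∀ q ∈ pCube d n, ∀ v : Fin d → ℝ,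
              |fderiv ℝ ψ q (0, v)| ≤ Kgrad * eunorm v) →
            (∀ q ∈ pCube d n, |fderiv ℝ ψ q (1, 0)| ≤ Kt) →
            besovNormSup d s n (fun q => u q * ψ q) ≤
              (C : ℝ≥0∞) * ENNReal.ofReal Kψ * besovSemiSup d s n u +
                (C : ℝ≥0∞) *
                  ((3 : ℝ≥0∞) ^ ((1 - s) * (n : ℝ)) * ENNReal.ofReal Kgrad +
                    (3 : ℝ≥0∞) ^ ((2 - s) * (n : ℝ)) * ENNReal.ofReal Kt +
                    (3 : ℝ≥0∞) ^ (-(s * (n : ℝ))) * ENNReal.ofReal Kψ) *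
                  l2N d (pCube d n) u := by
  refine ⟨((6 * ((10 * 4^d) * (d+1)) + 6 : ℕ) : ℝ≥0), ?_⟩
  intro n s hs0 hs1 u hu hufin ψ hψ Kψ Kgrad Kt hKψ hKg hKt
  have h0mem := zero_mem_pCube d n
  have hKψ0 : 0 ≤ Kψ := le_trans (abs_nonneg _) (hKψ _ h0mem)
  have hKt0 : 0 ≤ Kt := le_trans (abs_nonneg _) (hKt _ h0mem)
  have hKg0 : 0 ≤ Kgrad := by
    have h := hKg _ h0mem (fun _ => 1)
    have he : eunorm (fun _ : Fin d => (1:ℝ)) = Real.sqrt d := by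
      rw [eunorm]; norm_num
    rw [he] at h
    have hd0 : (0:ℝ) < Real.sqrt d := Real.sqrt_pos.2 (by exact_mod_cast hd)
    nlinarith [abs_nonneg (fderiv ℝ ψ (0:Pt d) (0, fun _ => 1))]
  -- measurable representative
  obtain ⟨v, hvm, huv⟩ := hu.1
  have hvmeas : Measurable v := hvm.measurable
  have hvL2 : MemLp v 2 (volume.restrict (pCube d n)) := hu.ae_eq huv
  have huvψ : (fun q => u q * ψ q) =ᵐ[volume.restrict (pCube d n)] (fun q => v q * ψ q) := by
    filter_upwards [huv] with x hx
    simp only [hx]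
  have hl2n_uv : l2N d (pCube d n) u = l2N d (pCube d n) v := by
    rw [l2N, l2N, l2Pow_congr_ae huv]
  have hl2n_uvψ : l2N d (pCube d n) (fun q => u q * ψ q) = l2N d (pCube d n) (fun q => v q * ψ q) := by
    rw [l2N, l2N, l2Pow_congr_ae huvψ]
  rw [besovNormSup, hl2n_uvψ, besovSemiSup_congr huvψ, besovSemiSup_congr huv, hl2n_uv]
  set Kψ' := ENNReal.ofReal Kψ with hKψ'
  set Kg' := ENNReal.ofReal Kgrad with hKg'
  set Kt' := ENNReal.ofReal Kt with hKt'
  set B := besovSemiSup d s n v with hB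
  set L := l2N d (pCube d n) v with hL
  set M' : ℝ≥0∞ := ((10 * 4^d : ℕ) : ℝ≥0∞) with hM'
  set D' : ℝ≥0∞ := ((d + 1 : ℕ) : ℝ≥0∞) with hD'
  set Br := (3:ℝ≥0∞)^((1-s)*(n:ℝ)) * Kg' + (3:ℝ≥0∞)^((2-s)*(n:ℝ)) * Kt' +
    (3:ℝ≥0∞)^(-(s*(n:ℝ))) * Kψ' with hBr
  -- measurability of ψ
  have hψae_p : AEMeasurable ψ (volume.restrict (pCube d n)) :=
    hψ.continuousOn.aemeasurable (isOpen_pCube d n).measurableSet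
  have hgL2 : MemLp (fun q => v q * ψ q) 2 (volume.restrict (pCube d n)) := by
    refine MemLp.of_le (hvL2.const_mul Kψ)
      (hvm.aestronglyMeasurable.mul hψae_p.aestronglyMeasurable) ?_
    filter_upwards [ae_restrict_mem (isOpen_pCube d n).measurableSet] with x hx
    rw [Real.norm_eq_abs, Real.norm_eq_abs, abs_mul, abs_mul]
    calc |v x| * |ψ x| ≤ |v x| * Kψ := mul_le_mul_of_nonneg_left (hKψ x hx) (abs_nonneg _)
      _ = |Kψ| * |v x| := by rw [abs_of_nonneg hKψ0, mul_comm]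
  -- first term
  have hfirst : l2N d (pCube d n) (fun q => v q * ψ q) ≤ Kψ' * L := by
    have h1 : l2Pow d (pCube d n) (fun q => v q * ψ q) ≤
        Kψ' ^ (2:ℝ) * l2Pow d (pCube d n) v := by
      refine l2Pow_le_of_bound ENNReal.ofReal_ne_top
        (hvmeas.aemeasurable.mono_measure Measure.restrict_le_self)
        (isOpen_pCube d n).measurableSet (fun x hx => ?_)
      rw [sq_nn, sq_nn, abs_mul, hKψ', ← ENNReal.ofReal_mul hKψ0, mul_comm Kψ]
      exact ENNReal.ofReal_le_ofReal (mul_le_mul_of_nonneg_left (hKψ x hx) (abs_nonneg _))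
    calc l2N d (pCube d n) (fun q => v q * ψ q) =
        (l2Pow d (pCube d n) (fun q => v q * ψ q)) ^ ((2:ℝ)⁻¹) := rfl
      _ ≤ (Kψ' ^ (2:ℝ) * l2Pow d (pCube d n) v) ^ ((2:ℝ)⁻¹) :=
          ENNReal.rpow_le_rpow h1 (by norm_num)
      _ = Kψ' * L := by
          rw [ENNReal.mul_rpow_of_nonneg _ _ (by norm_num : (0:ℝ) ≤ (2:ℝ)⁻¹), sq_half]
          rfl
  -- integrability per cube
  have hint : ∀ (k:ℤ), k ≤ n → ∀ w ∈ idxF d n k,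
      Integrable (fun x => v x * ψ x) (volume.restrict (cubeAt d (k-1) k w)) := by
    intro k hk w hw
    have hsub := cube_subset_of_mem hk hw
    have hres : MemLp (fun q => v q * ψ q) 2 (volume.restrict (cubeAt d (k-1) k w)) :=
      hgL2.mono_measure (Measure.restrict_mono hsub le_rfl)
    haveI : IsFiniteMeasure (volume.restrict (cubeAt d (k-1) k w)) := by
      constructor
      rw [Measure.restrict_apply_univ, volume_cubeAt]
      exact (volume_pCube_ne_top d k).lt_top
    exact hres.integrable (by norm_num)
  have hψae_w : ∀ (k:ℤ), k ≤ n → ∀ w ∈ idxF d n k,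
      AEMeasurable ψ (volume.restrict (cubeAt d (k-1) k w)) :=
    fun k hk w hw =>
      hψae_p.mono_measure (Measure.restrict_mono (cube_subset_of_mem hk hw) le_rfl)
  -- per-scale estimate
  have hterm : ∀ (kk : {k : ℤ // k ≤ n}),
      (3 : ℝ≥0∞) ^ (-(s * ((kk : ℤ) : ℝ))) *
        (avgSum (inIdx d ((kk : ℤ) - 1) (kk : ℤ) (pCube d n))
            (fun w => l2Pow d (cubeAt d ((kk : ℤ) - 1) (kk : ℤ) w)
              (fun x => (fun q => v q * ψ q) x -
                setAvg (cubeAt d ((kk : ℤ) - 1) (kk : ℤ) w) (fun q => v q * ψ q)))) ^ (2 : ℝ)⁻¹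
      ≤ 6 * Kψ' * B + (6 * M' * D') * (Br * L) := by
    rintro ⟨k, hk⟩
    simp only
    set Rk : ℝ := Kt * (3:ℝ)^(2*k) + Kgrad * (Real.sqrt d * (3:ℝ)^k) with hRkdef
    set Rk' := ENNReal.ofReal Rk with hRk'
    set AT := avgSum (inIdx d (k - 1) k (pCube d n))
      (fun w => l2Pow d (cubeAt d (k - 1) k w)
        (fun x => v x - setAvg (cubeAt d (k - 1) k w) v)) with hAT
    set AP := avgSum (inIdx d (k - 1) k (pCube d n))
      (fun w => l2Pow d (cubeAt d (k - 1) k w) v) with hAP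
    have hcombo : avgSum (inIdx d (k - 1) k (pCube d n))
        (fun w => l2Pow d (cubeAt d (k - 1) k w)
          (fun x => (fun q => v q * ψ q) x -
            setAvg (cubeAt d (k - 1) k w) (fun q => v q * ψ q))) ≤
        (32 * Kψ' ^ (2:ℝ)) * AT + (32 * Rk' ^ (2:ℝ)) * AP := by
      refine avgSum_le_combo hk (fun w hw => ?_)
      have := percube hk hw hvmeas hψ (hψae_w k hk w hw) (hint k hk w hw)
        hKψ hKg hKt hKψ0 hKt0 hKg0
      calc l2Pow d (cubeAt d (k - 1) k w)
            (fun x => (fun q => v q * ψ q) x -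
              setAvg (cubeAt d (k - 1) k w) (fun q => v q * ψ q)) ≤
          32 * Kψ' ^ (2:ℝ) * l2Pow d (cubeAt d (k-1) k w)
              (fun x => v x - setAvg (cubeAt d (k-1) k w) v)
            + 32 * Rk' ^ (2:ℝ) * l2Pow d (cubeAt d (k-1) k w) v := this
        _ = (32 * Kψ' ^ (2:ℝ)) * l2Pow d (cubeAt d (k-1) k w)
              (fun x => v x - setAvg (cubeAt d (k-1) k w) v)
            + (32 * Rk' ^ (2:ℝ)) * l2Pow d (cubeAt d (k-1) k w) v := by ring
    have havgP : AP ≤ M' * l2Pow d (pCube d n) v := avg_l2Pow_le hk hvmeas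
    have hsqrtstep : ∀ a b : ℝ≥0∞, ((32 * a ^ (2:ℝ)) * b) ^ ((2:ℝ)⁻¹) ≤ 6 * a * b ^ ((2:ℝ)⁻¹) := by
      intro a b
      rw [ENNReal.mul_rpow_of_nonneg _ _ (by norm_num : (0:ℝ) ≤ (2:ℝ)⁻¹),
        ENNReal.mul_rpow_of_nonneg _ _ (by norm_num : (0:ℝ) ≤ (2:ℝ)⁻¹), sq_half]
      exact mul_le_mul_left (mul_le_mul_left h32half a) _
    have hmain : (avgSum (inIdx d (k - 1) k (pCube d n))
        (fun w => l2Pow d (cubeAt d (k - 1) k w)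
          (fun x => (fun q => v q * ψ q) x -
            setAvg (cubeAt d (k - 1) k w) (fun q => v q * ψ q)))) ^ ((2:ℝ)⁻¹) ≤
        6 * Kψ' * AT ^ ((2:ℝ)⁻¹) + 6 * Rk' * (M' * L) := by
      calc (avgSum (inIdx d (k - 1) k (pCube d n))
            (fun w => l2Pow d (cubeAt d (k - 1) k w)
              (fun x => (fun q => v q * ψ q) x -
                setAvg (cubeAt d (k - 1) k w) (fun q => v q * ψ q)))) ^ ((2:ℝ)⁻¹) ≤
          ((32 * Kψ' ^ (2:ℝ)) * AT + (32 * Rk' ^ (2:ℝ)) * AP) ^ ((2:ℝ)⁻¹) :=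
            ENNReal.rpow_le_rpow hcombo (by norm_num)
        _ ≤ ((32 * Kψ' ^ (2:ℝ)) * AT) ^ ((2:ℝ)⁻¹) + ((32 * Rk' ^ (2:ℝ)) * AP) ^ ((2:ℝ)⁻¹) :=
            ENNReal.rpow_add_le_add_rpow _ _ (by norm_num) (by norm_num)
        _ ≤ 6 * Kψ' * AT ^ ((2:ℝ)⁻¹) + 6 * Rk' * AP ^ ((2:ℝ)⁻¹) :=
            add_le_add (hsqrtstep _ _) (hsqrtstep _ _)
        _ ≤ 6 * Kψ' * AT ^ ((2:ℝ)⁻¹) + 6 * Rk' * (M' * l2Pow d (pCube d n) v) ^ ((2:ℝ)⁻¹) := by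
            gcongr
        _ = 6 * Kψ' * AT ^ ((2:ℝ)⁻¹) +
            6 * Rk' * (M' ^ ((2:ℝ)⁻¹) * (l2Pow d (pCube d n) v) ^ ((2:ℝ)⁻¹)) := by
            rw [ENNReal.mul_rpow_of_nonneg _ _ (by norm_num : (0:ℝ) ≤ (2:ℝ)⁻¹)]
        _ = 6 * Kψ' * AT ^ ((2:ℝ)⁻¹) + 6 * Rk' * (M' ^ ((2:ℝ)⁻¹) * L) := rfl
        _ ≤ 6 * Kψ' * AT ^ ((2:ℝ)⁻¹) + 6 * Rk' * (M' * L) := by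
            gcongr
            refine rpow_half_le_self ?_
            rw [hM']
            exact_mod_cast Nat.one_le_iff_ne_zero.2 (by positivity)
    have hRkbound : (3:ℝ≥0∞) ^ (-(s * (k:ℝ))) * Rk' ≤ D' * Br := by
      have hsplit : Rk' = Kt' * (3:ℝ≥0∞)^(2*(k:ℝ)) +
          Kg' * ENNReal.ofReal (Real.sqrt d) * (3:ℝ≥0∞)^((k:ℝ)) := by
        rw [hRk', hRkdef, ENNReal.ofReal_add (by positivity) (by positivity),
          ENNReal.ofReal_mul hKt0, ENNReal.ofReal_mul hKg0,
          ENNReal.ofReal_mul (Real.sqrt_nonneg _)]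
        rw [show ((3:ℝ)^(2*k)) = (3:ℝ)^((2*k : ℤ)) by norm_num, ofReal_zpow3, ofReal_zpow3]
        push_cast
        ring
      have hsd : ENNReal.ofReal (Real.sqrt d) ≤ D' := by
        have h1 : Real.sqrt d ≤ (d:ℝ) + 1 := by
          rw [show ((d:ℝ)+1) = Real.sqrt (((d:ℝ)+1)^2) from (Real.sqrt_sq (by positivity)).symm]
          exact Real.sqrt_le_sqrt (by nlinarith [Nat.cast_nonneg (α := ℝ) d])
        calc ENNReal.ofReal (Real.sqrt d) ≤ ENNReal.ofReal ((d:ℝ)+1) :=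
            ENNReal.ofReal_le_ofReal h1
          _ = D' := by rw [hD']; push_cast; rw [ENNReal.ofReal_add (by positivity) (by norm_num)]
                       simp [ENNReal.ofReal_natCast]
      have htexp : (3:ℝ≥0∞) ^ (-(s * (k:ℝ))) * (3:ℝ≥0∞)^(2*(k:ℝ)) ≤
          (3:ℝ≥0∞)^((2-s)*(n:ℝ)) := by
        rw [← three_rpow_add]
        refine three_rpow_mono ?_
        have hkn : (k:ℝ) ≤ (n:ℝ) := by exact_mod_cast hk
        nlinarith [hkn, hs1]
      have hxexp : (3:ℝ≥0∞) ^ (-(s * (k:ℝ))) * (3:ℝ≥0∞)^((k:ℝ)) ≤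
          (3:ℝ≥0∞)^((1-s)*(n:ℝ)) := by
        rw [← three_rpow_add]
        refine three_rpow_mono ?_
        have hkn : (k:ℝ) ≤ (n:ℝ) := by exact_mod_cast hk
        nlinarith [hkn, hs1]
      calc (3:ℝ≥0∞) ^ (-(s * (k:ℝ))) * Rk' =
          Kt' * ((3:ℝ≥0∞) ^ (-(s * (k:ℝ))) * (3:ℝ≥0∞)^(2*(k:ℝ))) +
          Kg' * ENNReal.ofReal (Real.sqrt d) *
            ((3:ℝ≥0∞) ^ (-(s * (k:ℝ))) * (3:ℝ≥0∞)^((k:ℝ))) := by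
            rw [hsplit]; ring
        _ ≤ Kt' * (3:ℝ≥0∞)^((2-s)*(n:ℝ)) +
            Kg' * D' * (3:ℝ≥0∞)^((1-s)*(n:ℝ)) := by
            gcongr
        _ ≤ D' * Br := by
            rw [hBr]
            have hD1 : (1:ℝ≥0∞) ≤ D' := by
              rw [hD']; exact_mod_cast Nat.one_le_iff_ne_zero.2 (by omega)
            have h1 : Kt' * (3:ℝ≥0∞)^((2-s)*(n:ℝ)) + Kg' * D' * (3:ℝ≥0∞)^((1-s)*(n:ℝ)) ≤
                D' * (Kt' * (3:ℝ≥0∞)^((2-s)*(n:ℝ)) + Kg' * (3:ℝ≥0∞)^((1-s)*(n:ℝ))) := by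
              rw [mul_add]
              refine add_le_add ?_ (le_of_eq (by ring))
              calc Kt' * (3:ℝ≥0∞)^((2-s)*(n:ℝ)) = 1 * (Kt' * (3:ℝ≥0∞)^((2-s)*(n:ℝ))) :=
                  (one_mul _).symm
                _ ≤ D' * (Kt' * (3:ℝ≥0∞)^((2-s)*(n:ℝ))) := mul_le_mul_left hD1 _
            refine h1.trans (mul_le_mul_right ?_ D')
            calc Kt' * (3:ℝ≥0∞)^((2-s)*(n:ℝ)) + Kg' * (3:ℝ≥0∞)^((1-s)*(n:ℝ)) =
                (3:ℝ≥0∞)^((1-s)*(n:ℝ)) * Kg' + (3:ℝ≥0∞)^((2-s)*(n:ℝ)) * Kt' := by ring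
              _ ≤ (3:ℝ≥0∞)^((1-s)*(n:ℝ)) * Kg' + (3:ℝ≥0∞)^((2-s)*(n:ℝ)) * Kt' +
                  (3:ℝ≥0∞)^(-(s*(n:ℝ))) * Kψ' := le_self_add
    calc (3 : ℝ≥0∞) ^ (-(s * (k : ℝ))) *
          (avgSum (inIdx d (k - 1) k (pCube d n))
            (fun w => l2Pow d (cubeAt d (k - 1) k w)
              (fun x => (fun q => v q * ψ q) x -
                setAvg (cubeAt d (k - 1) k w) (fun q => v q * ψ q)))) ^ ((2:ℝ)⁻¹) ≤
        (3 : ℝ≥0∞) ^ (-(s * (k : ℝ))) *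
          (6 * Kψ' * AT ^ ((2:ℝ)⁻¹) + 6 * Rk' * (M' * L)) := by gcongr
      _ = 6 * Kψ' * ((3 : ℝ≥0∞) ^ (-(s * (k : ℝ))) * AT ^ ((2:ℝ)⁻¹)) +
          6 * M' * (((3 : ℝ≥0∞) ^ (-(s * (k : ℝ))) * Rk') * L) := by ring
      _ ≤ 6 * Kψ' * B + 6 * M' * ((D' * Br) * L) := by
          gcongr
          · rw [hB, besovSemiSup]
            exact le_iSup (fun kk : {k : ℤ // k ≤ n} =>
              (3 : ℝ≥0∞) ^ (-(s * ((kk : ℤ) : ℝ))) *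
                (avgSum (inIdx d ((kk : ℤ) - 1) (kk : ℤ) (pCube d n))
                  (fun w => l2Pow d (cubeAt d ((kk : ℤ) - 1) (kk : ℤ) w)
                    (fun x => v x - setAvg (cubeAt d ((kk : ℤ) - 1) (kk : ℤ) w) v))) ^ (2 : ℝ)⁻¹)
              ⟨k, hk⟩
      _ = 6 * Kψ' * B + (6 * M' * D') * (Br * L) := by ring
  -- final assembly
  have hsup : besovSemiSup d s n (fun q => v q * ψ q) ≤
      6 * Kψ' * B + (6 * M' * D') * (Br * L) := by
    rw [besovSemiSup]
    exact iSup_le hterm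
  have hCge6 : (6:ℝ≥0∞) ≤ (((6 * ((10 * 4^d) * (d+1)) + 6 : ℕ) : ℝ≥0) : ℝ≥0∞) := by
    rw [ENNReal.coe_natCast]
    exact_mod_cast Nat.le_add_left 6 _
  have hCge : 6 * M' * D' + 1 ≤ (((6 * ((10 * 4^d) * (d+1)) + 6 : ℕ) : ℝ≥0) : ℝ≥0∞) := by
    rw [ENNReal.coe_natCast, hM', hD']
    calc (6:ℝ≥0∞) * ((10 * 4^d : ℕ) : ℝ≥0∞) * ((d + 1 : ℕ) : ℝ≥0∞) + 1 =
        ((6 * ((10 * 4^d) * (d+1)) + 1 : ℕ) : ℝ≥0∞) := by push_cast; ring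
      _ ≤ ((6 * ((10 * 4^d) * (d+1)) + 6 : ℕ) : ℝ≥0∞) := by
          exact_mod_cast Nat.add_le_add_left (by norm_num) _
  calc (3:ℝ≥0∞)^(-(s*(n:ℝ))) * l2N d (pCube d n) (fun q => v q * ψ q) +
        besovSemiSup d s n (fun q => v q * ψ q) ≤
      (3:ℝ≥0∞)^(-(s*(n:ℝ))) * (Kψ' * L) + (6 * Kψ' * B + (6 * M' * D') * (Br * L)) :=
        add_le_add (mul_le_mul_right hfirst _) hsup
    _ ≤ 1 * (Br * L) + (6 * Kψ' * B + (6 * M' * D') * (Br * L)) := by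
        refine add_le_add ?_ le_rfl
        rw [one_mul]
        calc (3:ℝ≥0∞)^(-(s*(n:ℝ))) * (Kψ' * L) = ((3:ℝ≥0∞)^(-(s*(n:ℝ))) * Kψ') * L := by ring
          _ ≤ Br * L := mul_le_mul_left (by rw [hBr]; exact le_add_self) L
    _ = 6 * Kψ' * B + (6 * M' * D' + 1) * (Br * L) := by ring
    _ ≤ (((6 * ((10 * 4^d) * (d+1)) + 6 : ℕ) : ℝ≥0) : ℝ≥0∞) * Kψ' * B +
        (((6 * ((10 * 4^d) * (d+1)) + 6 : ℕ) : ℝ≥0) : ℝ≥0∞) * (Br * L) := by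
        gcongr
    _ = _ := by rw [hBr]; ring
end
end

section
/- Let s and s* be symmetric positive definite d×d real matrices and k an arbitrary d×d real matrix. Set A := [[s + kᵗs*⁻¹k, −kᵗs*⁻¹],[−s*⁻¹k, s*⁻¹]] (a 2d×2d matrix in d×d block form). Then A is symmetric positive definite, its inverse is A⁻¹ = [[s⁻¹, s⁻¹kᵗ],[k s⁻¹, s* + k s⁻¹ kᵗ]], and for every η > 0 one has, in the Loewner order: A ≤ [[s + (1+η⁻¹)kᵗs*⁻¹k, 0],[0, (1+η)s*⁻¹]] and A⁻¹ ≤ [[(1+η)s⁻¹, 0],[0, s* + (1+η⁻¹)k s⁻¹ kᵗ]]. -/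
open Matrix

noncomputable section

lemma posDef_fromBlocks_diag {m n : Type*} [Fintype m] [Fintype n] [DecidableEq m] [DecidableEq n]
    {P : Matrix m m ℝ} {Q : Matrix n n ℝ} (hP : P.PosDef) (hQ : Q.PosDef) :
    (fromBlocks P 0 0 Q).PosDef := by
  rw [posDef_iff_dotProduct_mulVec]
  constructor
  · rw [IsHermitian, fromBlocks_conjTranspose]
    have h1 : Pᵀ = P := by rw [← conjTranspose_eq_transpose_of_trivial]; exact hP.1
    have h2 : Qᵀ = Q := by rw [← conjTranspose_eq_transpose_of_trivial]; exact hQ.1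
    simp [h1, h2]
  · intro x hx
    obtain ⟨a, b, rfl⟩ : ∃ a b, x = Sum.elim a b :=
      ⟨_, _, (Sum.elim_comp_inl_inr x).symm⟩
    have hval : star (Sum.elim a b) ⬝ᵥ ((fromBlocks P 0 0 Q) *ᵥ Sum.elim a b)
        = star a ⬝ᵥ (P *ᵥ a) + star b ⬝ᵥ (Q *ᵥ b) := by
      rw [fromBlocks_mulVec]
      simp [sumElim_dotProduct_sumElim]
    rw [hval]
    rcases (by
      by_contra h
      push_neg at h
      apply hx
      rw [h.1, h.2]; simp : a ≠ 0 ∨ b ≠ 0) with h | h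
    · exact add_pos_of_pos_of_nonneg (hP.dotProduct_mulVec_pos h) (hQ.posSemidef.dotProduct_mulVec_nonneg _)
    · exact add_pos_of_nonneg_of_pos (hP.posSemidef.dotProduct_mulVec_nonneg _) (hQ.dotProduct_mulVec_pos h)

lemma posDef_conj {n : Type*} [Fintype n] [DecidableEq n] {D : Matrix n n ℝ}
    (hD : D.PosDef) {M : Matrix n n ℝ} (hM : IsUnit M) : (Mᵀ * D * M).PosDef := by
  rw [posDef_iff_dotProduct_mulVec]
  constructor
  · have h := (hD.posSemidef.conjTranspose_mul_mul_same M).isHermitian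
    rwa [conjTranspose_eq_transpose_of_trivial] at h
  · intro x hx
    have hinj := (Matrix.mulVec_injective_iff_isUnit).mpr hM
    have hMx : M *ᵥ x ≠ 0 := fun h => hx (hinj (by simpa using h))
    have := hD.dotProduct_mulVec_pos hMx
    convert this using 1
    rw [← mulVec_mulVec, ← mulVec_mulVec, dotProduct_mulVec, vecMul_transpose]
    simp [star, dotProduct_mulVec]

lemma psd_conj {n m : Type*} [Fintype n] [Fintype m] {D : Matrix n n ℝ}
    (hD : D.PosSemidef) (M : Matrix n m ℝ) : (Mᵀ * D * M).PosSemidef := by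
  have := hD.conjTranspose_mul_mul_same M
  rwa [conjTranspose_eq_transpose_of_trivial] at this

lemma fromBlocks_eq {l m n o R : Type*} {A A' : Matrix n l R} {B B' : Matrix n m R}
    {C C' : Matrix o l R} {D D' : Matrix o m R} (h1 : A = A') (h2 : B = B')
    (h3 : C = C') (h4 : D = D') : fromBlocks A B C D = fromBlocks A' B' C' D' := by
  rw [h1, h2, h3, h4]

/-- The double-variable matrix `A = [[s + kᵗ s*⁻¹ k, −kᵗ s*⁻¹],[−s*⁻¹ k, s*⁻¹]]`. -/
def blockA {d : ℕ} (s k sstar : Matrix (Fin d) (Fin d) ℝ) :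
    Matrix (Fin d ⊕ Fin d) (Fin d ⊕ Fin d) ℝ :=
  Matrix.fromBlocks (s + kᵀ * sstar⁻¹ * k) (-(kᵀ * sstar⁻¹)) (-(sstar⁻¹ * k)) sstar⁻¹

/-- the double-variable matrix is symmetric positive definite, its
inverse is given explicitly in block form, and both it and its inverse are dominated in
the Loewner order by Young-type block-diagonal matrices. -/
theorem statement13 {d : ℕ} (s k sstar : Matrix (Fin d) (Fin d) ℝ)
    (hs : s.PosDef) (hsstar : sstar.PosDef) :
    (blockA s k sstar).PosDef ∧
    (blockA s k sstar)⁻¹ =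
      Matrix.fromBlocks s⁻¹ (s⁻¹ * kᵀ) (k * s⁻¹) (sstar + k * s⁻¹ * kᵀ) ∧
    (∀ η : ℝ, 0 < η →
      LoeLE (blockA s k sstar)
        (Matrix.fromBlocks (s + (1 + η⁻¹) • (kᵀ * sstar⁻¹ * k)) 0 0 ((1 + η) • sstar⁻¹)) ∧
      LoeLE (blockA s k sstar)⁻¹
        (Matrix.fromBlocks ((1 + η) • s⁻¹) 0 0 (sstar + (1 + η⁻¹) • (k * s⁻¹ * kᵀ)))) := by
  have hsd : IsUnit s.det := (Matrix.isUnit_iff_isUnit_det s).1 hs.isUnit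
  have hsstard : IsUnit sstar.det := (Matrix.isUnit_iff_isUnit_det sstar).1 hsstar.isUnit
  -- factorization of blockA
  have hfact : blockA s k sstar =
      (fromBlocks 1 0 (-k) 1)ᵀ * (fromBlocks s 0 0 sstar⁻¹) * (fromBlocks 1 0 (-k) 1) := by
    rw [blockA, fromBlocks_transpose, fromBlocks_multiply, fromBlocks_multiply]
    simp [Matrix.mul_assoc]
  have hMunit : IsUnit (fromBlocks 1 0 (-k) 1 : Matrix (Fin d ⊕ Fin d) (Fin d ⊕ Fin d) ℝ) := by
    rw [Matrix.isUnit_iff_isUnit_det, det_fromBlocks_zero₁₂]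
    simp
  have hposdef : (blockA s k sstar).PosDef := by
    rw [hfact]
    exact posDef_conj (posDef_fromBlocks_diag hs hsstar.inv) hMunit
  -- inverse
  have hinv : (blockA s k sstar)⁻¹ =
      Matrix.fromBlocks s⁻¹ (s⁻¹ * kᵀ) (k * s⁻¹) (sstar + k * s⁻¹ * kᵀ) := by
    apply Matrix.inv_eq_right_inv
    rw [blockA, ← fromBlocks_one, fromBlocks_multiply]
    apply fromBlocks_eq
    · simp only [Matrix.add_mul, Matrix.mul_add, Matrix.neg_mul, Matrix.mul_neg,
        Matrix.mul_assoc, Matrix.mul_nonsing_inv _ hsd, Matrix.nonsing_inv_mul _ hsstard,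
        Matrix.mul_nonsing_inv_cancel_left _ _ hsd, Matrix.nonsing_inv_mul_cancel_left _ _ hsstard,
        Matrix.mul_nonsing_inv_cancel_left _ _ hsstard, Matrix.nonsing_inv_mul_cancel_left _ _ hsd,
        Matrix.mul_one, Matrix.one_mul]
      abel
    · simp only [Matrix.add_mul, Matrix.mul_add, Matrix.neg_mul, Matrix.mul_neg,
        Matrix.mul_assoc, Matrix.mul_nonsing_inv _ hsd, Matrix.nonsing_inv_mul _ hsstard,
        Matrix.mul_nonsing_inv_cancel_left _ _ hsd, Matrix.nonsing_inv_mul_cancel_left _ _ hsstard,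
        Matrix.mul_nonsing_inv_cancel_left _ _ hsstard, Matrix.nonsing_inv_mul_cancel_left _ _ hsd,
        Matrix.mul_one, Matrix.one_mul]
      abel
    · simp only [Matrix.add_mul, Matrix.mul_add, Matrix.neg_mul, Matrix.mul_neg,
        Matrix.mul_assoc, Matrix.mul_nonsing_inv _ hsd, Matrix.nonsing_inv_mul _ hsstard,
        Matrix.mul_nonsing_inv_cancel_left _ _ hsd, Matrix.nonsing_inv_mul_cancel_left _ _ hsstard,
        Matrix.mul_nonsing_inv_cancel_left _ _ hsstard, Matrix.nonsing_inv_mul_cancel_left _ _ hsd,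
        Matrix.mul_one, Matrix.one_mul]
      abel
    · simp only [Matrix.add_mul, Matrix.mul_add, Matrix.neg_mul, Matrix.mul_neg,
        Matrix.mul_assoc, Matrix.mul_nonsing_inv _ hsd, Matrix.nonsing_inv_mul _ hsstard,
        Matrix.mul_nonsing_inv_cancel_left _ _ hsd, Matrix.nonsing_inv_mul_cancel_left _ _ hsstard,
        Matrix.mul_nonsing_inv_cancel_left _ _ hsstard, Matrix.nonsing_inv_mul_cancel_left _ _ hsd,
        Matrix.mul_one, Matrix.one_mul]
      abel
  refine ⟨hposdef, hinv, fun η hη => ?_⟩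
  set a := Real.sqrt η⁻¹ with ha_def
  set b := Real.sqrt η with hb_def
  have ha : a * a = η⁻¹ := Real.mul_self_sqrt (inv_nonneg.mpr hη.le)
  have hb : b * b = η := Real.mul_self_sqrt hη.le
  have hab : a * b = 1 := by
    rw [ha_def, hb_def, ← Real.sqrt_mul (inv_nonneg.mpr hη.le), inv_mul_cancel₀ hη.ne']
    exact Real.sqrt_one
  constructor
  · -- first Loewner bound
    have lhs1 : Matrix.fromBlocks (s + (1 + η⁻¹) • (kᵀ * sstar⁻¹ * k)) 0 0 ((1 + η) • sstar⁻¹)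
        - blockA s k sstar
        = fromBlocks (η⁻¹ • (kᵀ * sstar⁻¹ * k)) (kᵀ * sstar⁻¹) (sstar⁻¹ * k) (η • sstar⁻¹) := by
      rw [blockA, sub_eq_add_neg, fromBlocks_neg, fromBlocks_add]
      apply fromBlocks_eq
      · module
      · simp
      · simp
      · module
    have rhs1 : (fromBlocks (a • k) (b • (1 : Matrix (Fin d) (Fin d) ℝ)) 0 0)ᵀ
          * (fromBlocks sstar⁻¹ 0 0 sstar⁻¹) * (fromBlocks (a • k) (b • 1) 0 0)
        = fromBlocks (η⁻¹ • (kᵀ * sstar⁻¹ * k)) (kᵀ * sstar⁻¹) (sstar⁻¹ * k) (η • sstar⁻¹) := by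
      rw [fromBlocks_transpose, fromBlocks_multiply, fromBlocks_multiply]
      apply fromBlocks_eq <;>
        simp [Matrix.transpose_smul, Matrix.smul_mul, Matrix.mul_smul, smul_smul,
          Matrix.mul_assoc, ha, hb, hab, mul_comm b a]
    show Matrix.PosSemidef _
    rw [lhs1, ← rhs1]
    exact psd_conj (posDef_fromBlocks_diag hsstar.inv hsstar.inv).posSemidef _
  · -- second Loewner bound
    have lhs2 : Matrix.fromBlocks ((1 + η) • s⁻¹) 0 0 (sstar + (1 + η⁻¹) • (k * s⁻¹ * kᵀ))
        - (blockA s k sstar)⁻¹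
        = fromBlocks (η • s⁻¹) (-(s⁻¹ * kᵀ)) (-(k * s⁻¹)) (η⁻¹ • (k * s⁻¹ * kᵀ)) := by
      rw [hinv, sub_eq_add_neg, fromBlocks_neg, fromBlocks_add]
      apply fromBlocks_eq
      · module
      · simp
      · simp
      · module
    have rhs2 : (fromBlocks (b • (1 : Matrix (Fin d) (Fin d) ℝ)) (-(a • kᵀ)) 0 0)ᵀ
          * (fromBlocks s⁻¹ 0 0 s⁻¹) * (fromBlocks (b • 1) (-(a • kᵀ)) 0 0)
        = fromBlocks (η • s⁻¹) (-(s⁻¹ * kᵀ)) (-(k * s⁻¹)) (η⁻¹ • (k * s⁻¹ * kᵀ)) := by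
      rw [fromBlocks_transpose, fromBlocks_multiply, fromBlocks_multiply]
      apply fromBlocks_eq <;>
        simp [Matrix.transpose_smul, Matrix.smul_mul, Matrix.mul_smul, smul_smul,
          Matrix.mul_assoc, ha, hb, hab, mul_comm b a]
    show Matrix.PosSemidef _
    rw [lhs2, ← rhs2]
    exact psd_conj (posDef_fromBlocks_diag hs.inv hs.inv).posSemidef _
end
end

section
/- For i ∈ {1,2} let s_i and s*_i be symmetric positive definite d×d real matrices and k_i arbitrary d×d real matrices, and set A_i := [[s_i + k_iᵗ s*_i⁻¹ k_i, −k_iᵗ s*_i⁻¹],[−s*_i⁻¹ k_i, s*_i⁻¹]] (2d×2d, in d×d block form). If A₂ ≤ A₁ in the Loewner order, then s₂ + (k₂−k₁)ᵗ s*₂⁻¹ (k₂−k₁) ≤ s₁ (in particular s₂ ≤ s₁) and s*₁ ≤ s*₂. -/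
open Matrix

noncomputable section

lemma dot_transpose {d : ℕ} (k M : Matrix (Fin d) (Fin d) ℝ) (a b : Fin d → ℝ) :
    a ⬝ᵥ (kᵀ * M) *ᵥ b = (k *ᵥ a) ⬝ᵥ (M *ᵥ b) := by
  rw [← mulVec_mulVec, dotProduct_mulVec, vecMul_transpose]

lemma quadBlock {d : ℕ} (s k u : Matrix (Fin d) (Fin d) ℝ) (a b : Fin d → ℝ) :
    Sum.elim a b ⬝ᵥ (blockA s k u) *ᵥ Sum.elim a b
      = a ⬝ᵥ s *ᵥ a + (k *ᵥ a - b) ⬝ᵥ u⁻¹ *ᵥ (k *ᵥ a - b) := by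
  simp only [blockA, fromBlocks_mulVec, sumElim_dotProduct_sumElim, add_mulVec,
    neg_mulVec, dotProduct_add, dotProduct_neg, mulVec_sub, dotProduct_sub,
    sub_dotProduct, Sum.elim_comp_inl, Sum.elim_comp_inr]
  have h1 : a ⬝ᵥ (kᵀ * u⁻¹ * k) *ᵥ a = (k *ᵥ a) ⬝ᵥ u⁻¹ *ᵥ (k *ᵥ a) := by
    rw [mul_assoc, dot_transpose, mulVec_mulVec]
  have h2 : a ⬝ᵥ (kᵀ * u⁻¹) *ᵥ b = (k *ᵥ a) ⬝ᵥ u⁻¹ *ᵥ b := dot_transpose _ _ _ _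
  have h3 : b ⬝ᵥ (u⁻¹ * k) *ᵥ a = b ⬝ᵥ u⁻¹ *ᵥ (k *ᵥ a) := by rw [← mulVec_mulVec]
  rw [h1, h2, h3]; ring

/-- a Loewner ordering `A₂ ≤ A₁` of the double-variable matrices
transfers to the blocks: `s₂ + (k₂−k₁)ᵗ s*₂⁻¹ (k₂−k₁) ≤ s₁` (so in particular `s₂ ≤ s₁`)
and `s*₁ ≤ s*₂`. -/
theorem statement14 {d : ℕ}
    (s₁ s₂ sstar₁ sstar₂ : Matrix (Fin d) (Fin d) ℝ) (k₁ k₂ : Matrix (Fin d) (Fin d) ℝ)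
    (hs₁ : s₁.PosDef) (hs₂ : s₂.PosDef) (hsstar₁ : sstar₁.PosDef) (hsstar₂ : sstar₂.PosDef)
    (hLoe : LoeLE (blockA s₂ k₂ sstar₂) (blockA s₁ k₁ sstar₁)) :
    LoeLE (s₂ + (k₂ - k₁)ᵀ * sstar₂⁻¹ * (k₂ - k₁)) s₁ ∧
      LoeLE s₂ s₁ ∧ LoeLE sstar₁ sstar₂ := by
  have hu₂ : (sstar₂⁻¹).PosSemidef := hsstar₂.posSemidef.inv
  -- Hermitian-ness of the conjugated term
  have hK : ((k₂ - k₁)ᵀ * sstar₂⁻¹ * (k₂ - k₁)).PosSemidef := by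
    have := hu₂.conjTranspose_mul_mul_same (k₂ - k₁)
    rwa [conjTranspose_eq_transpose_of_trivial] at this
  -- main quadratic form estimate
  have key : ∀ x : Fin d → ℝ,
      0 ≤ x ⬝ᵥ (s₁ - (s₂ + (k₂ - k₁)ᵀ * sstar₂⁻¹ * (k₂ - k₁))) *ᵥ x := by
    intro x
    have h := Matrix.PosSemidef.dotProduct_mulVec_nonneg hLoe (Sum.elim x (k₁ *ᵥ x))
    rw [star_trivial, sub_mulVec, dotProduct_sub, quadBlock, quadBlock] at h
    have e1 : k₁ *ᵥ x - k₁ *ᵥ x = 0 := sub_self _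
    rw [e1] at h
    have hx : x ⬝ᵥ (s₁ - (s₂ + (k₂ - k₁)ᵀ * sstar₂⁻¹ * (k₂ - k₁))) *ᵥ x
        = x ⬝ᵥ s₁ *ᵥ x - (x ⬝ᵥ s₂ *ᵥ x
          + (k₂ *ᵥ x - k₁ *ᵥ x) ⬝ᵥ sstar₂⁻¹ *ᵥ (k₂ *ᵥ x - k₁ *ᵥ x)) := by
      rw [sub_mulVec, dotProduct_sub, add_mulVec, dotProduct_add, mul_assoc,
        dot_transpose, ← mulVec_mulVec, sub_mulVec]
    rw [hx]
    simp only [mulVec_zero, dotProduct_zero, zero_dotProduct, add_zero] at h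
    linarith
  have herm1 : (s₁ - (s₂ + (k₂ - k₁)ᵀ * sstar₂⁻¹ * (k₂ - k₁))).IsHermitian :=
    hs₁.isHermitian.sub (hs₂.isHermitian.add hK.isHermitian)
  have claim1 : LoeLE (s₂ + (k₂ - k₁)ᵀ * sstar₂⁻¹ * (k₂ - k₁)) s₁ :=
    PosSemidef.of_dotProduct_mulVec_nonneg herm1 fun x => by rw [star_trivial]; exact key x
  refine ⟨claim1, ?_, ?_⟩
  · unfold LoeLE
    rw [show s₁ - s₂ = (s₁ - (s₂ + (k₂ - k₁)ᵀ * sstar₂⁻¹ * (k₂ - k₁)))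
        + (k₂ - k₁)ᵀ * sstar₂⁻¹ * (k₂ - k₁) by abel]
    exact claim1.add hK
  · -- first: sstar₁⁻¹ - sstar₂⁻¹ is PSD
    have hD : (sstar₁⁻¹ - sstar₂⁻¹).PosSemidef := by
      refine PosSemidef.of_dotProduct_mulVec_nonneg (hsstar₁.posSemidef.inv.isHermitian.sub hsstar₂.posSemidef.inv.isHermitian)
        fun b => ?_
      have h := Matrix.PosSemidef.dotProduct_mulVec_nonneg hLoe (Sum.elim 0 b)
      rw [star_trivial, sub_mulVec, dotProduct_sub, quadBlock, quadBlock] at h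
      simp only [mulVec_zero, zero_sub, dotProduct_zero, zero_add] at h
      rw [star_trivial, sub_mulVec, dotProduct_sub]
      simpa [neg_mulVec, mulVec_neg] using h
    -- identity: sstar₂ - sstar₁ = sstar₁ D sstar₁ + M sstar₂⁻¹ M
    have h1inv : sstar₁ * sstar₁⁻¹ = 1 := mul_nonsing_inv _ hsstar₁.det_pos.ne'.isUnit
    have h1inv' : sstar₁⁻¹ * sstar₁ = 1 := nonsing_inv_mul _ hsstar₁.det_pos.ne'.isUnit
    have h2inv : sstar₂ * sstar₂⁻¹ = 1 := mul_nonsing_inv _ hsstar₂.det_pos.ne'.isUnit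
    have h2inv' : sstar₂⁻¹ * sstar₂ = 1 := nonsing_inv_mul _ hsstar₂.det_pos.ne'.isUnit
    have hid : sstar₂ - sstar₁
        = sstar₁ * (sstar₁⁻¹ - sstar₂⁻¹) * sstar₁
          + (sstar₁ - sstar₂) * sstar₂⁻¹ * (sstar₁ - sstar₂) := by
      have e : sstar₁ * (sstar₁⁻¹ - sstar₂⁻¹) * sstar₁
          = sstar₁ * sstar₁⁻¹ * sstar₁ - sstar₁ * sstar₂⁻¹ * sstar₁ := by noncomm_ring
      rw [h1inv, one_mul] at e
      have e2 : (sstar₁ - sstar₂) * sstar₂⁻¹ * (sstar₁ - sstar₂)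
          = sstar₁ * sstar₂⁻¹ * sstar₁ - sstar₁ * (sstar₂⁻¹ * sstar₂)
            - sstar₂ * sstar₂⁻¹ * sstar₁ + sstar₂ * sstar₂⁻¹ * sstar₂ := by noncomm_ring
      rw [h2inv', h2inv, mul_one, one_mul, one_mul] at e2
      rw [e, e2]; abel
    have hA : (sstar₁ * (sstar₁⁻¹ - sstar₂⁻¹) * sstar₁).PosSemidef := by
      have h := hD.conjTranspose_mul_mul_same sstar₁
      rwa [hsstar₁.isHermitian.eq] at h
    have hB : ((sstar₁ - sstar₂) * sstar₂⁻¹ * (sstar₁ - sstar₂)).PosSemidef := by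
      have h := hu₂.conjTranspose_mul_mul_same (sstar₁ - sstar₂)
      rwa [(hsstar₁.isHermitian.sub hsstar₂.isHermitian).eq] at h
    exact ⟨by rw [hid]; exact (hA.add hB).isHermitian, by rw [hid]; exact (hA.add hB).2⟩
end
end

section
/- Let d ≥ 1. For each n ∈ ℕ let s_n and s*_n be symmetric positive definite d×d real matrices and k_n a d×d real matrix; set A_n := [[s_n + k_nᵗ s*_n⁻¹ k_n, −k_nᵗ s*_n⁻¹],[−s*_n⁻¹ k_n, s*_n⁻¹]] and A*_n := [[s*_n + k_n s_n⁻¹ k_nᵗ, k_n s_n⁻¹],[s_n⁻¹ k_nᵗ, s_n⁻¹]]. Assume A_{n+1} ≤ A_n and A*_n ≤ A_n in the Loewner order for every n, and assume Θ_n := inf over skew-symmetric d×d matrices h of |s*_n^{−1/2}( s_n + (k_n−h)ᵗ s*_n^{−1}(k_n−h) )s*_n^{−1/2}| converges to 1 as n → ∞. Then there exist a symmetric positive definite matrix s̄ and a skew-symmetric matrix k̄ such that s_n → s̄, s*_n → s̄ and k_n → k̄ in the spectral norm as n → ∞. -/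
open Matrix Filter

noncomputable section

/-- Spectral norm (ℓ²→ℓ² operator norm) of a real square matrix. -/
def specNorm {n : Type*} [Fintype n] [DecidableEq n] (A : Matrix n n ℝ) : ℝ :=
  ‖LinearMap.toContinuousLinearMap (Matrix.toEuclideanLin A)‖

open Classical in
/-- Positive semidefinite square root; junk value `0` off the PSD cone. -/
def psdSqrt {n : Type*} [Fintype n] [DecidableEq n] (A : Matrix n n ℝ) :
    Matrix n n ℝ :=
  if h : A.PosSemidef then
    (h.1.eigenvectorUnitary : Matrix n n ℝ) * Matrix.diagonal (Real.sqrt ∘ h.1.eigenvalues) *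
      (star h.1.eigenvectorUnitary : Matrix n n ℝ) else 0

/-- `A* = [[s* + k s⁻¹ kᵗ, k s⁻¹],[s⁻¹ kᵗ, s⁻¹]]`. -/
def blockAstar {d : ℕ} (s k sstar : Matrix (Fin d) (Fin d) ℝ) :
    Matrix (Fin d ⊕ Fin d) (Fin d ⊕ Fin d) ℝ :=
  Matrix.fromBlocks (sstar + k * s⁻¹ * kᵀ) (k * s⁻¹) (s⁻¹ * kᵀ) s⁻¹

/-- The recentred ellipticity ratio `Θ` associated with `(s, k, s*)`. -/
def ThetaOf {d : ℕ} (s k sstar : Matrix (Fin d) (Fin d) ℝ) : ℝ :=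
  sInf ((fun h : Matrix (Fin d) (Fin d) ℝ =>
    specNorm (psdSqrt sstar⁻¹ * (s + (k - h)ᵀ * sstar⁻¹ * (k - h)) * psdSqrt sstar⁻¹)) ''
      {h | hᵀ = -h})


/-! ### Auxiliary lemmas -/

section Helpers

open Filter

set_option linter.unusedSectionVars false

namespace S15

variable {n : Type*} [Fintype n] [DecidableEq n]

lemma herm_iff {A : Matrix n n ℝ} : A.IsHermitian ↔ Aᵀ = A := by
  constructor <;> intro h <;> ext i j
  · have := congrFun (congrFun h i) j
    simpa [Matrix.conjTranspose_apply] using this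
  · have := congrFun (congrFun h i) j
    simpa [Matrix.conjTranspose_apply, Matrix.transpose_apply] using this

lemma quad_nonneg {A : Matrix n n ℝ} (h : A.PosSemidef) (x : n → ℝ) : 0 ≤ x ⬝ᵥ A *ᵥ x := by
  simpa using h.dotProduct_mulVec_nonneg x

lemma posDef_of {A : Matrix n n ℝ} (hH : Aᵀ = A) (h : ∀ x, x ≠ 0 → 0 < x ⬝ᵥ A *ᵥ x) :
    A.PosDef := Matrix.PosDef.of_dotProduct_mulVec_pos (herm_iff.2 hH) fun x hx => by simpa using h x hx

lemma dot_self_nonneg (x : n → ℝ) : 0 ≤ x ⬝ᵥ x :=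
  Finset.sum_nonneg fun i _ => mul_self_nonneg _

lemma dot_self_pos {x : n → ℝ} (hx : x ≠ 0) : 0 < x ⬝ᵥ x :=
  lt_of_le_of_ne (dot_self_nonneg x)
    (fun h => hx (dotProduct_self_eq_zero.1 h.symm))

lemma dot_shift (P : Matrix n n ℝ) (x w : n → ℝ) : (P *ᵥ x) ⬝ᵥ w = x ⬝ᵥ (Pᵀ *ᵥ w) := by
  rw [Matrix.mulVec_transpose, dotProduct_comm, Matrix.dotProduct_mulVec,
    dotProduct_comm]

lemma dot_sym {A : Matrix n n ℝ} (hA : Aᵀ = A) (x y : n → ℝ) :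
    x ⬝ᵥ A *ᵥ y = y ⬝ᵥ A *ᵥ x := by
  conv_lhs => rw [← hA]
  rw [← dot_shift, dotProduct_comm]

lemma conj_quad (P M : Matrix n n ℝ) (x : n → ℝ) :
    (P *ᵥ x) ⬝ᵥ M *ᵥ (P *ᵥ x) = x ⬝ᵥ (Pᵀ * M * P) *ᵥ x := by
  rw [dot_shift, ← Matrix.mulVec_mulVec, ← Matrix.mulVec_mulVec]

lemma quad_eq_zero {A : Matrix n n ℝ} (hA : Aᵀ = A) (h : ∀ x, x ⬝ᵥ A *ᵥ x = 0) : A = 0 := by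
  ext i j
  have key : ∀ x y : n → ℝ, x ⬝ᵥ A *ᵥ y + y ⬝ᵥ A *ᵥ x = 0 := by
    intro x y
    have h1 := h (x + y)
    have h2 := h x
    have h3 := h y
    simp only [Matrix.mulVec_add, Matrix.add_mulVec, dotProduct_add,
      add_dotProduct] at h1
    linarith
  have h4 := key (Pi.single i 1) (Pi.single j 1)
  rw [dot_sym hA (Pi.single j 1) (Pi.single i 1)] at h4
  have h5 : Pi.single i (1:ℝ) ⬝ᵥ A *ᵥ Pi.single j 1 = 0 := by linarith
  have h6 : A i j = Pi.single i (1:ℝ) ⬝ᵥ A *ᵥ Pi.single j 1 := by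
    simp [Matrix.mulVec_single, dotProduct, Pi.single_apply]
  rw [h6, h5]
  simp

lemma legendre {A : Matrix n n ℝ} (hA : A.PosDef) (x y : n → ℝ) :
    2 * (x ⬝ᵥ y) - y ⬝ᵥ A *ᵥ y ≤ x ⬝ᵥ A⁻¹ *ᵥ x := by
  have hdet : IsUnit A.det := hA.det_pos.ne'.isUnit
  have hsym : Aᵀ = A := herm_iff.1 hA.isHermitian
  have hinvsym : (A⁻¹)ᵀ = A⁻¹ := by rw [Matrix.transpose_nonsing_inv, hsym]
  have hz := quad_nonneg hA.posSemidef (y - A⁻¹ *ᵥ x)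
  have hAAinv : A *ᵥ (A⁻¹ *ᵥ x) = x := by
    rw [Matrix.mulVec_mulVec, Matrix.mul_nonsing_inv _ hdet, Matrix.one_mulVec]
  have e1 : (A⁻¹ *ᵥ x) ⬝ᵥ A *ᵥ (A⁻¹ *ᵥ x) = x ⬝ᵥ A⁻¹ *ᵥ x := by
    rw [hAAinv, dotProduct_comm, ← hinvsym, ← dot_shift]
  have e2 : y ⬝ᵥ A *ᵥ (A⁻¹ *ᵥ x) = y ⬝ᵥ x := by rw [hAAinv]
  have e3 : (A⁻¹ *ᵥ x) ⬝ᵥ A *ᵥ y = y ⬝ᵥ x := by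
    rw [dot_sym hsym, e2]
  simp only [Matrix.mulVec_sub, dotProduct_sub, sub_dotProduct] at hz
  rw [e1, e2, e3] at hz
  have : x ⬝ᵥ y = y ⬝ᵥ x := dotProduct_comm x y
  linarith

lemma inv_antitone {A B : Matrix n n ℝ} (hA : A.PosDef) (hB : B.PosDef)
    (h : ∀ x, x ⬝ᵥ A *ᵥ x ≤ x ⬝ᵥ B *ᵥ x) :
    ∀ x, x ⬝ᵥ B⁻¹ *ᵥ x ≤ x ⬝ᵥ A⁻¹ *ᵥ x := by
  intro x
  have hBdet : IsUnit B.det := hB.det_pos.ne'.isUnit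
  have key : x ⬝ᵥ B⁻¹ *ᵥ x = 2 * (x ⬝ᵥ (B⁻¹ *ᵥ x)) - (B⁻¹ *ᵥ x) ⬝ᵥ B *ᵥ (B⁻¹ *ᵥ x) := by
    have hBB : B *ᵥ (B⁻¹ *ᵥ x) = x := by
      rw [Matrix.mulVec_mulVec, Matrix.mul_nonsing_inv _ hBdet, Matrix.one_mulVec]
    have hsymB : Bᵀ = B := herm_iff.1 hB.isHermitian
    have hinvsymB : (B⁻¹)ᵀ = B⁻¹ := by rw [Matrix.transpose_nonsing_inv, hsymB]
    have e1 : (B⁻¹ *ᵥ x) ⬝ᵥ B *ᵥ (B⁻¹ *ᵥ x) = x ⬝ᵥ B⁻¹ *ᵥ x := by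
      rw [hBB, dotProduct_comm, ← hinvsymB, ← dot_shift]
    rw [e1]; ring
  calc x ⬝ᵥ B⁻¹ *ᵥ x = 2 * (x ⬝ᵥ (B⁻¹ *ᵥ x)) - (B⁻¹ *ᵥ x) ⬝ᵥ B *ᵥ (B⁻¹ *ᵥ x) := key
    _ ≤ 2 * (x ⬝ᵥ (B⁻¹ *ᵥ x)) - (B⁻¹ *ᵥ x) ⬝ᵥ A *ᵥ (B⁻¹ *ᵥ x) := by
        have := h (B⁻¹ *ᵥ x); linarith
    _ ≤ x ⬝ᵥ A⁻¹ *ᵥ x := legendre hA x (B⁻¹ *ᵥ x)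

set_option synthInstance.maxHeartbeats 1000000 in
set_option maxHeartbeats 1000000 in
open RealInnerProductSpace in
lemma quad_le_specNorm (A : Matrix n n ℝ) (x : n → ℝ) :
    x ⬝ᵥ A *ᵥ x ≤ specNorm A * (x ⬝ᵥ x) := by
  set T := LinearMap.toContinuousLinearMap (Matrix.toEuclideanLin A)
  set u : EuclideanSpace ℝ n := (WithLp.equiv 2 (n → ℝ)).symm x
  have hTu : T u = (WithLp.equiv 2 (n → ℝ)).symm (A *ᵥ x) := by
    simp [T, u, Matrix.toEuclideanLin_apply]
  have h1 : x ⬝ᵥ A *ᵥ x = ⟪u, T u⟫ := by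
    rw [hTu]
    simp [u, PiLp.inner_apply, dotProduct, RCLike.inner_apply, mul_comm]
  have h2 : x ⬝ᵥ x = ⟪u, u⟫ := by
    rw [real_inner_self_eq_norm_sq, EuclideanSpace.norm_eq, Real.sq_sqrt (by positivity)]
    simp [u, dotProduct, sq]
  rw [h1, h2, real_inner_self_eq_norm_sq]
  calc ⟪u, T u⟫ ≤ ‖u‖ * ‖T u‖ := real_inner_le_norm u (T u)
    _ ≤ ‖u‖ * (‖T‖ * ‖u‖) := by
        have := T.le_opNorm u
        nlinarith [norm_nonneg u, norm_nonneg (T u)]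
    _ = specNorm A * ‖u‖ ^ 2 := by simp only [specNorm]; ring

set_option synthInstance.maxHeartbeats 1000000 in
set_option maxHeartbeats 1000000 in
lemma specNorm_tendsto_zero {X : ℕ → Matrix n n ℝ} {L : Matrix n n ℝ}
    (h : ∀ i j, Tendsto (fun m => X m i j) atTop (nhds (L i j))) :
    Tendsto (fun m => specNorm (X m - L)) atTop (nhds 0) := by
  have hX : Tendsto (fun m => X m - L) atTop (nhds 0) := by
    refine tendsto_pi_nhds.2 fun i => ?_
    rw [tendsto_pi_nhds]
    intro j
    have := (h i j).sub_const (L i j)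
    simpa using this
  let f : Matrix n n ℝ →ₗ[ℝ] (EuclideanSpace ℝ n →L[ℝ] EuclideanSpace ℝ n) :=
    (LinearMap.toContinuousLinearMap : (EuclideanSpace ℝ n →ₗ[ℝ] EuclideanSpace ℝ n) ≃ₗ[ℝ]
      (EuclideanSpace ℝ n →L[ℝ] EuclideanSpace ℝ n)).toLinearMap ∘ₗ
      (Matrix.toEuclideanLin : Matrix n n ℝ ≃ₗ[ℝ] _).toLinearMap
  have hf : Continuous f := f.continuous_of_finiteDimensional
  have h0 : Tendsto (fun m => f (X m - L)) atTop (nhds (f 0)) := (hf.tendsto 0).comp hX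
  rw [map_zero] at h0
  have h1 := (continuous_norm.tendsto 0).comp h0
  simpa [Function.comp_def, specNorm, f] using h1

lemma antitone_bdd_tendsto {f : ℕ → ℝ} (hmono : ∀ m, f (m+1) ≤ f m) (h0 : ∀ m, 0 ≤ f m) :
    ∃ l, Tendsto f atTop (nhds l) :=
  ⟨_, tendsto_atTop_ciInf (antitone_nat_of_succ_le hmono)
    ⟨0, fun _ hy => by obtain ⟨m, rfl⟩ := hy; exact h0 m⟩⟩

lemma tendsto_bilin {X : ℕ → Matrix n n ℝ} {L : Matrix n n ℝ}
    (h : ∀ i j, Tendsto (fun m => X m i j) atTop (nhds (L i j))) (u v : n → ℝ) :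
    Tendsto (fun m => u ⬝ᵥ X m *ᵥ v) atTop (nhds (u ⬝ᵥ L *ᵥ v)) := by
  simp only [dotProduct, Matrix.mulVec]
  apply tendsto_finset_sum
  intro i _
  exact ((tendsto_finset_sum _ fun j _ => (h i j).mul tendsto_const_nhds)).const_mul _

lemma entry_tendsto_iff {X : ℕ → Matrix n n ℝ} {L : Matrix n n ℝ} :
    (∀ i j, Tendsto (fun m => X m i j) atTop (nhds (L i j))) ↔ Tendsto X atTop (nhds L) := by
  refine Iff.trans ?_ tendsto_pi_nhds.symm
  exact forall_congr' fun i => (tendsto_pi_nhds).symm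

lemma tendsto_entry_mul {X Y : ℕ → Matrix n n ℝ} {L M : Matrix n n ℝ}
    (hX : ∀ i j, Tendsto (fun m => X m i j) atTop (nhds (L i j)))
    (hY : ∀ i j, Tendsto (fun m => Y m i j) atTop (nhds (M i j))) :
    ∀ i j, Tendsto (fun m => (X m * Y m) i j) atTop (nhds ((L * M) i j)) := by
  intro i j
  simp only [Matrix.mul_apply]
  exact tendsto_finset_sum _ fun l _ => (hX i l).mul (hY l j)

lemma tendsto_entry_inv {X : ℕ → Matrix n n ℝ} {L : Matrix n n ℝ}
    (hX : ∀ i j, Tendsto (fun m => X m i j) atTop (nhds (L i j))) (hdet : L.det ≠ 0) :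
    ∀ i j, Tendsto (fun m => (X m)⁻¹ i j) atTop (nhds (L⁻¹ i j)) := by
  rw [entry_tendsto_iff] at hX
  rw [entry_tendsto_iff]
  have hdetc : Tendsto (fun m => (X m).det) atTop (nhds L.det) :=
    ((continuous_id.matrix_det).tendsto L).comp hX
  have hadj : Tendsto (fun m => (X m).adjugate) atTop (nhds L.adjugate) :=
    ((continuous_id.matrix_adjugate).tendsto L).comp hX
  have hinv : Tendsto (fun m => ((X m).det)⁻¹) atTop (nhds ((L.det)⁻¹)) := hdetc.inv₀ hdet
  have hsmul : Tendsto (fun m => ((X m).det)⁻¹ • (X m).adjugate) atTop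
      (nhds ((L.det)⁻¹ • L.adjugate)) := hinv.smul hadj
  simpa only [Matrix.inv_def, Ring.inverse_eq_inv] using hsmul

lemma entry_lim {A : ℕ → Matrix n n ℝ} (hsym : ∀ m, (A m)ᵀ = A m)
    (hq : ∀ v : n → ℝ, ∃ l, Tendsto (fun m => v ⬝ᵥ A m *ᵥ v) atTop (nhds l)) :
    ∀ i j, ∃ l, Tendsto (fun m => A m i j) atTop (nhds l) := by
  intro i j
  obtain ⟨l1, h1⟩ := hq (Pi.single i 1 + Pi.single j 1)
  obtain ⟨l2, h2⟩ := hq (Pi.single i 1)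
  obtain ⟨l3, h3⟩ := hq (Pi.single j 1)
  refine ⟨(l1 - l2 - l3)/2, ?_⟩
  have key : ∀ m, A m i j = ((Pi.single i 1 + Pi.single j 1) ⬝ᵥ
      A m *ᵥ (Pi.single i 1 + Pi.single j 1)
      - Pi.single i 1 ⬝ᵥ A m *ᵥ Pi.single i 1 - Pi.single j 1 ⬝ᵥ A m *ᵥ Pi.single j 1)/2 := by
    intro m
    have e : Pi.single i (1:ℝ) ⬝ᵥ A m *ᵥ Pi.single j 1 = A m i j := by
      simp [Matrix.mulVec_single, dotProduct, Pi.single_apply]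
    have e' : Pi.single j (1:ℝ) ⬝ᵥ A m *ᵥ Pi.single i 1 = A m i j := by
      rw [dot_sym (hsym m)]; exact e
    simp only [Matrix.mulVec_add, Matrix.add_mulVec, dotProduct_add,
      add_dotProduct]
    rw [e, e']
    ring
  have := ((h1.sub h2).sub h3).div_const 2
  exact this.congr fun m => (key m).symm

lemma psdSqrt_sym {W : Matrix n n ℝ} (hW : W.PosDef) : (psdSqrt W)ᵀ = psdSqrt W := by
  rw [psdSqrt, dif_pos hW.posSemidef]
  simp [Matrix.transpose_mul, Matrix.star_eq_conjTranspose,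
    Matrix.conjTranspose_eq_transpose_of_trivial, Matrix.mul_assoc]

lemma psdSqrt_mul_self {W : Matrix n n ℝ} (hW : W.PosDef) : psdSqrt W * psdSqrt W = W := by
  rw [psdSqrt, dif_pos hW.posSemidef]
  set U := (hW.posSemidef.1.eigenvectorUnitary : Matrix n n ℝ) with hUdef
  set D := Matrix.diagonal (Real.sqrt ∘ hW.posSemidef.1.eigenvalues) with hDdef
  have hU : star U * U = 1 := Unitary.coe_star_mul_self _
  have hD : D * D = Matrix.diagonal hW.posSemidef.1.eigenvalues := by
    rw [hDdef, Matrix.diagonal_mul_diagonal]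
    congr 1
    funext i
    simp [Real.mul_self_sqrt (hW.posSemidef.eigenvalues_nonneg i)]
  calc U * D * star U * (U * D * star U) = U * (D * D) * star U := by
        simp only [Matrix.mul_assoc]
        rw [← Matrix.mul_assoc (star U) U, hU, Matrix.one_mul]
    _ = W := by
        rw [hD]
        conv_rhs => rw [hW.posSemidef.1.spectral_theorem]
        simp [Unitary.conjStarAlgAut_apply, hUdef]

lemma psdSqrt_det {W : Matrix n n ℝ} (hW : W.PosDef) : IsUnit (psdSqrt W).det := by
  have h1 : (psdSqrt W).det * (psdSqrt W).det = W.det := by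
    rw [← Matrix.det_mul, psdSqrt_mul_self hW]
  have h2 : W.det ≠ 0 := hW.det_pos.ne'
  have h3 : (psdSqrt W).det ≠ 0 := fun h => h2 (by rw [← h1, h, mul_zero])
  exact h3.isUnit

lemma blockA_quad {d : ℕ} (s k sstar : Matrix (Fin d) (Fin d) ℝ) (x y : Fin d → ℝ) :
    Sum.elim x y ⬝ᵥ (blockA s k sstar) *ᵥ Sum.elim x y
      = x ⬝ᵥ s *ᵥ x + (k *ᵥ x - y) ⬝ᵥ sstar⁻¹ *ᵥ (k *ᵥ x - y) := by
  set W := sstar⁻¹ with hW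
  have E1 : x ⬝ᵥ ((kᵀ*W*k) *ᵥ x) = (k *ᵥ x) ⬝ᵥ W *ᵥ (k *ᵥ x) := by
    rw [dot_shift, Matrix.mulVec_mulVec, Matrix.mulVec_mulVec]
  have E2 : x ⬝ᵥ ((kᵀ*W) *ᵥ y) = (k *ᵥ x) ⬝ᵥ (W *ᵥ y) := by
    rw [dot_shift, Matrix.mulVec_mulVec]
  have E3 : y ⬝ᵥ ((W*k) *ᵥ x) = y ⬝ᵥ W *ᵥ (k *ᵥ x) := by
    rw [Matrix.mulVec_mulVec]
  rw [blockA, Matrix.fromBlocks_mulVec, sumElim_dotProduct_sumElim]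
  simp only [Matrix.add_mulVec, Matrix.neg_mulVec, dotProduct_add, dotProduct_neg,
    Matrix.mulVec_sub, dotProduct_sub, sub_dotProduct, Sum.elim_comp_inl,
    Sum.elim_comp_inr]
  rw [E1, E2, E3]
  ring

lemma blockAstar_quad {d : ℕ} (s k sstar : Matrix (Fin d) (Fin d) ℝ) (x y : Fin d → ℝ) :
    Sum.elim x y ⬝ᵥ (blockAstar s k sstar) *ᵥ Sum.elim x y
      = x ⬝ᵥ sstar *ᵥ x + (kᵀ *ᵥ x + y) ⬝ᵥ s⁻¹ *ᵥ (kᵀ *ᵥ x + y) := by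
  set V := s⁻¹ with hV
  have E1 : x ⬝ᵥ ((k*V*kᵀ) *ᵥ x) = (kᵀ *ᵥ x) ⬝ᵥ V *ᵥ (kᵀ *ᵥ x) := by
    rw [dot_shift, Matrix.transpose_transpose, Matrix.mulVec_mulVec, Matrix.mulVec_mulVec]
  have E2 : x ⬝ᵥ ((k*V) *ᵥ y) = (kᵀ *ᵥ x) ⬝ᵥ (V *ᵥ y) := by
    rw [dot_shift, Matrix.transpose_transpose, Matrix.mulVec_mulVec]
  have E3 : y ⬝ᵥ ((V*kᵀ) *ᵥ x) = y ⬝ᵥ V *ᵥ (kᵀ *ᵥ x) := by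
    rw [Matrix.mulVec_mulVec]
  rw [blockAstar, Matrix.fromBlocks_mulVec, sumElim_dotProduct_sumElim]
  simp only [Matrix.add_mulVec, dotProduct_add, Matrix.mulVec_add,
    add_dotProduct, Sum.elim_comp_inl, Sum.elim_comp_inr]
  rw [E1, E2, E3]
  ring

lemma theta_bound {d : ℕ} {s k sstar : Matrix (Fin d) (Fin d) ℝ} (hsstar : sstar.PosDef)
    {θ : ℝ} (hθ : ThetaOf s k sstar < θ) :
    ∃ h : Matrix (Fin d) (Fin d) ℝ, hᵀ = -h ∧ ∀ x,
      x ⬝ᵥ s *ᵥ x + ((k - h) *ᵥ x) ⬝ᵥ sstar⁻¹ *ᵥ ((k - h) *ᵥ x)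
        ≤ θ * (x ⬝ᵥ sstar *ᵥ x) := by
  have hW : (sstar⁻¹).PosDef := hsstar.inv
  set R := psdSqrt sstar⁻¹ with hR
  have hRsym : Rᵀ = R := psdSqrt_sym hW
  have hRR : R * R = sstar⁻¹ := psdSqrt_mul_self hW
  have hRdet : IsUnit R.det := psdSqrt_det hW
  have hne : ((fun h : Matrix (Fin d) (Fin d) ℝ =>
      specNorm (R * (s + (k - h)ᵀ * sstar⁻¹ * (k - h)) * R)) ''
        {h | hᵀ = -h}).Nonempty := ⟨_, ⟨0, by simp, rfl⟩⟩
  have hsinf := Real.lt_sInf_add_pos hne (sub_pos.2 hθ)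
  obtain ⟨v, ⟨h, hskew, rfl⟩, hv⟩ := hsinf
  have hSeq : ThetaOf s k sstar = sInf ((fun h : Matrix (Fin d) (Fin d) ℝ =>
      specNorm (R * (s + (k - h)ᵀ * sstar⁻¹ * (k - h)) * R)) '' {h | hᵀ = -h}) := rfl
  have hvθ : specNorm (R * (s + (k - h)ᵀ * sstar⁻¹ * (k - h)) * R) < θ := by
    rw [← hSeq] at hv; linarith
  refine ⟨h, hskew, fun x => ?_⟩
  set C := s + (k - h)ᵀ * sstar⁻¹ * (k - h) with hC
  set P := R⁻¹ with hP
  have hPsym : Pᵀ = P := by rw [hP, Matrix.transpose_nonsing_inv, hRsym]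
  have key1 : (P *ᵥ x) ⬝ᵥ (R * C * R) *ᵥ (P *ᵥ x) = x ⬝ᵥ C *ᵥ x := by
    rw [conj_quad, hPsym]
    congr 1
    have e1 : R * C * R = R * (C * R) := by rw [mul_assoc]
    rw [e1, hP, Matrix.nonsing_inv_mul_cancel_left _ _ hRdet,
      Matrix.mul_nonsing_inv_cancel_right _ _ hRdet]
  have key2 : (P *ᵥ x) ⬝ᵥ (P *ᵥ x) = x ⬝ᵥ sstar *ᵥ x := by
    have hcq := conj_quad P 1 x
    rw [Matrix.one_mulVec] at hcq
    rw [hcq, hPsym]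
    congr 1
    rw [hP, mul_one, ← Matrix.mul_inv_rev, hRR,
      Matrix.nonsing_inv_nonsing_inv _ hsstar.det_pos.ne'.isUnit]
  have hb := quad_le_specNorm (R * C * R) (P *ᵥ x)
  rw [key1, key2] at hb
  have hquad : x ⬝ᵥ C *ᵥ x = x ⬝ᵥ s *ᵥ x + ((k - h) *ᵥ x) ⬝ᵥ sstar⁻¹ *ᵥ ((k - h) *ᵥ x) := by
    rw [hC, Matrix.add_mulVec, dotProduct_add, conj_quad]
  have hsn : 0 ≤ x ⬝ᵥ sstar *ᵥ x := quad_nonneg hsstar.posSemidef x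
  have hmul := mul_le_mul_of_nonneg_right (le_of_lt hvθ) hsn
  rw [← hquad]
  linarith

end S15

end Helpers

/-- existence of the homogenized matrices: Loewner monotonicity of the
double-variable matrices, `A*ₙ ≤ Aₙ`, and `Θₙ → 1` force `sₙ` and `s*ₙ` to converge (in
spectral norm) to a common symmetric positive definite limit `s̄` and `kₙ` to converge to a
skew-symmetric limit `k̄`. -/
theorem statement15 (d : ℕ) (hd : 1 ≤ d)
    (s sstar k : ℕ → Matrix (Fin d) (Fin d) ℝ)
    (hs : ∀ n, (s n).PosDef) (hsstar : ∀ n, (sstar n).PosDef)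
    (hmono : ∀ n, LoeLE (blockA (s (n + 1)) (k (n + 1)) (sstar (n + 1)))
      (blockA (s n) (k n) (sstar n)))
    (hstar : ∀ n, LoeLE (blockAstar (s n) (k n) (sstar n)) (blockA (s n) (k n) (sstar n)))
    (hTheta : Tendsto (fun n => ThetaOf (s n) (k n) (sstar n)) atTop (nhds 1)) :
    ∃ sbar kbar : Matrix (Fin d) (Fin d) ℝ, sbar.PosDef ∧ kbarᵀ = -kbar ∧
      Tendsto (fun n => specNorm (s n - sbar)) atTop (nhds 0) ∧
      Tendsto (fun n => specNorm (sstar n - sbar)) atTop (nhds 0) ∧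
      Tendsto (fun n => specNorm (k n - kbar)) atTop (nhds 0) := by
    classical
  set A : ℕ → Matrix (Fin d ⊕ Fin d) (Fin d ⊕ Fin d) ℝ :=
    fun m => blockA (s m) (k m) (sstar m) with hAdef
  have hssym : ∀ m, (s m)ᵀ = s m := fun m => S15.herm_iff.1 (hs m).isHermitian
  have hstsym : ∀ m, (sstar m)ᵀ = sstar m := fun m => S15.herm_iff.1 (hsstar m).isHermitian
  have hWpd : ∀ m, ((sstar m)⁻¹).PosDef := fun m => (hsstar m).inv
  have hWsym : ∀ m, ((sstar m)⁻¹)ᵀ = (sstar m)⁻¹ :=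
    fun m => S15.herm_iff.1 (hWpd m).isHermitian
  have hspdinv : ∀ m, ((s m)⁻¹).PosDef := fun m => (hs m).inv
  have haq : ∀ m x y, Sum.elim x y ⬝ᵥ A m *ᵥ Sum.elim x y
      = x ⬝ᵥ s m *ᵥ x + ((k m) *ᵥ x - y) ⬝ᵥ (sstar m)⁻¹ *ᵥ ((k m) *ᵥ x - y) :=
    fun m => S15.blockA_quad _ _ _
  have hbq : ∀ m x y, Sum.elim x y ⬝ᵥ (blockAstar (s m) (k m) (sstar m)) *ᵥ Sum.elim x y
      = x ⬝ᵥ sstar m *ᵥ x + ((k m)ᵀ *ᵥ x + y) ⬝ᵥ (s m)⁻¹ *ᵥ ((k m)ᵀ *ᵥ x + y) :=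
    fun m => S15.blockAstar_quad _ _ _
  -- symmetry of the block matrix
  have hAsym : ∀ m, (A m)ᵀ = A m := by
    intro m
    simp only [hAdef, blockA, Matrix.fromBlocks_transpose, Matrix.transpose_add,
      Matrix.transpose_mul, Matrix.transpose_neg, Matrix.transpose_transpose,
      hssym, hWsym, Matrix.mul_assoc]
  -- positive semidefiniteness of the quadratic form of A m
  have hApsd : ∀ m v, 0 ≤ v ⬝ᵥ A m *ᵥ v := by
    intro m v
    have hv : Sum.elim (v ∘ Sum.inl) (v ∘ Sum.inr) = v := Sum.elim_comp_inl_inr v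
    rw [← hv, haq]
    exact add_nonneg (S15.quad_nonneg (hs m).posSemidef _)
      (S15.quad_nonneg (hWpd m).posSemidef _)
  -- the quadratic forms are antitone
  have hanti : ∀ v, Antitone fun m => v ⬝ᵥ A m *ᵥ v := by
    intro v
    apply antitone_nat_of_succ_le
    intro m
    have h1 : (A m - A (m+1)).PosSemidef := hmono m
    have h2 := S15.quad_nonneg h1 v
    rw [Matrix.sub_mulVec, dotProduct_sub] at h2
    linarith
  have hlimq : ∀ v, ∃ l, Tendsto (fun m => v ⬝ᵥ A m *ᵥ v) atTop (nhds l) :=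
    fun v => S15.antitone_bdd_tendsto (fun m => hanti v (Nat.le_succ m)) (fun m => hApsd m v)
  have hent := S15.entry_lim hAsym hlimq
  choose La hLa using hent
  -- the three limit blocks
  set mM : Matrix (Fin d) (Fin d) ℝ := Matrix.of fun i j => La (Sum.inr i) (Sum.inr j)
    with hmMdef
  have hmM : ∀ i j, Tendsto (fun m => (sstar m)⁻¹ i j) atTop (nhds (mM i j)) := by
    intro i j
    exact (hLa (Sum.inr i) (Sum.inr j)).congr fun m => by simp [hAdef, blockA]
  set pM : Matrix (Fin d) (Fin d) ℝ := Matrix.of fun i j => -La (Sum.inr i) (Sum.inl j)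
    with hpMdef
  have hpM : ∀ i j, Tendsto (fun m => ((sstar m)⁻¹ * k m) i j) atTop (nhds (pM i j)) := by
    intro i j
    exact (hLa (Sum.inr i) (Sum.inl j)).neg.congr fun m => by simp [hAdef, blockA]
  set tM : Matrix (Fin d) (Fin d) ℝ := Matrix.of fun i j => La (Sum.inl i) (Sum.inl j)
    with htMdef
  have htM : ∀ i j, Tendsto (fun m => (s m + (k m)ᵀ * (sstar m)⁻¹ * k m) i j) atTop
      (nhds (tM i j)) := by
    intro i j
    exact (hLa (Sum.inl i) (Sum.inl j)).congr fun m => by simp [hAdef, blockA]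
  -- uniform bound
  set c := specNorm (A 0) with hcdef
  have hq0 : ∀ m v, v ⬝ᵥ A m *ᵥ v ≤ c * (v ⬝ᵥ v) :=
    fun m v => le_trans (hanti v (Nat.zero_le m)) (S15.quad_le_specNorm (A 0) v)
  have hsb : ∀ m x, x ⬝ᵥ sstar m *ᵥ x ≤ c * (x ⬝ᵥ x) := by
    intro m x
    have h1 : x ⬝ᵥ sstar m *ᵥ x
        ≤ Sum.elim x 0 ⬝ᵥ (blockAstar (s m) (k m) (sstar m)) *ᵥ Sum.elim x 0 := by
      rw [hbq]
      have := S15.quad_nonneg (hspdinv m).posSemidef ((k m)ᵀ *ᵥ x + 0)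
      linarith
    have h2 : Sum.elim x 0 ⬝ᵥ (blockAstar (s m) (k m) (sstar m)) *ᵥ Sum.elim x 0
        ≤ Sum.elim x 0 ⬝ᵥ A m *ᵥ Sum.elim x 0 := by
      have h3 : (A m - blockAstar (s m) (k m) (sstar m)).PosSemidef := hstar m
      have h4 := S15.quad_nonneg h3 (Sum.elim x 0)
      rw [Matrix.sub_mulVec, dotProduct_sub] at h4
      linarith
    have h4 := hq0 m (Sum.elim x 0)
    have h5 : (Sum.elim x (0 : Fin d → ℝ)) ⬝ᵥ Sum.elim x 0 = x ⬝ᵥ x := by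
      rw [sumElim_dotProduct_sumElim]
      simp
    rw [h5] at h4
    linarith
  have hcpos : 0 < c := by
    have hdpos : 0 < d := hd
    set x : Fin d → ℝ := Pi.single ⟨0, hdpos⟩ 1 with hxdef
    have hx : x ≠ 0 := by
      intro hx0
      have := congrFun hx0 ⟨0, hdpos⟩
      simp [hxdef] at this
    have h1 : 0 < x ⬝ᵥ sstar 0 *ᵥ x := by simpa using (hsstar 0).dotProduct_mulVec_pos hx
    have h2 := hsb 0 x
    have h3 : x ⬝ᵥ x = 1 := by simp [hxdef, dotProduct, Pi.single_apply]
    rw [h3, mul_one] at h2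
    linarith
  have hcne : c ≠ 0 := ne_of_gt hcpos
  -- lower bound on the inverse
  have hWlow : ∀ m x, (x ⬝ᵥ x)/c ≤ x ⬝ᵥ (sstar m)⁻¹ *ᵥ x := by
    intro m x
    have hleg := S15.legendre (hsstar m) x (c⁻¹ • x)
    have e1 : x ⬝ᵥ (c⁻¹ • x) = c⁻¹ * (x ⬝ᵥ x) := by
      rw [dotProduct_smul]; simp
    have e2 : (c⁻¹ • x) ⬝ᵥ sstar m *ᵥ (c⁻¹ • x) = c⁻¹ * (c⁻¹ * (x ⬝ᵥ sstar m *ᵥ x)) := by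
      rw [Matrix.mulVec_smul, dotProduct_smul, smul_dotProduct]
      simp [mul_comm, mul_left_comm]
    rw [e1, e2] at hleg
    have h2 := hsb m x
    have hinv : (0:ℝ) < c⁻¹ := inv_pos.2 hcpos
    have h6 : c⁻¹ * (c⁻¹ * (x ⬝ᵥ sstar m *ᵥ x)) ≤ c⁻¹ * (c⁻¹ * (c * (x ⬝ᵥ x))) := by
      apply mul_le_mul_of_nonneg_left _ hinv.le
      exact mul_le_mul_of_nonneg_left h2 hinv.le
    have h7 : c⁻¹ * (c⁻¹ * (c * (x ⬝ᵥ x))) = c⁻¹ * (x ⬝ᵥ x) := by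
      field_simp
    have h8 : (x ⬝ᵥ x)/c = c⁻¹ * (x ⬝ᵥ x) := by
      rw [div_eq_inv_mul]
    rw [h8]
    linarith
  -- the limit of the inverses is positive definite
  have hmMsym : mMᵀ = mM := by
    ext i j
    have h1 := hmM i j
    have h2 : Tendsto (fun m => (sstar m)⁻¹ i j) atTop (nhds (mM j i)) :=
      (hmM j i).congr fun m => by
        have := congrFun (congrFun (hWsym m) i) j
        simpa using this
    exact tendsto_nhds_unique h2 h1
  have hmMpd : mM.PosDef := by
    apply S15.posDef_of hmMsym
    intro x hx
    have h1 : (x ⬝ᵥ x)/c ≤ x ⬝ᵥ mM *ᵥ x :=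
      ge_of_tendsto (S15.tendsto_bilin hmM x x) (Filter.Eventually.of_forall fun m => hWlow m x)
    have h2 : 0 < (x ⬝ᵥ x)/c := div_pos (S15.dot_self_pos hx) hcpos
    linarith
  set sbar := mM⁻¹ with hsbardef
  have hsbarpd : sbar.PosDef := hmMpd.inv
  have hsstar_t : ∀ i j, Tendsto (fun m => sstar m i j) atTop (nhds (sbar i j)) := by
    intro i j
    exact (S15.tendsto_entry_inv hmM hmMpd.det_pos.ne' i j).congr fun m => by
      rw [Matrix.nonsing_inv_nonsing_inv _ (hsstar m).det_pos.ne'.isUnit]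
  -- limit of k
  set kbar := sbar * pM with hkbardef
  have hk_t : ∀ i j, Tendsto (fun m => k m i j) atTop (nhds (kbar i j)) := by
    intro i j
    have h1 := S15.tendsto_entry_mul (Y := fun m => (sstar m)⁻¹ * k m) hsstar_t hpM i j
    exact h1.congr fun m => by
      rw [← Matrix.mul_assoc, Matrix.mul_nonsing_inv _ (hsstar m).det_pos.ne'.isUnit,
        Matrix.one_mul]
  have hkT_t : ∀ i j, Tendsto (fun m => (k m)ᵀ i j) atTop (nhds (kbarᵀ i j)) :=
    fun i j => hk_t j i
  -- limit of s
  set sigma := tM - kbarᵀ * pM with hsigdef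
  have hs_t : ∀ i j, Tendsto (fun m => s m i j) atTop (nhds (sigma i j)) := by
    intro i j
    have h2 := S15.tendsto_entry_mul (X := fun m => (k m)ᵀ)
      (Y := fun m => (sstar m)⁻¹ * k m) hkT_t hpM i j
    have h3 := (htM i j).sub h2
    have h4 : Tendsto (fun m => s m i j) atTop (nhds (tM i j - (kbarᵀ * pM) i j)) := by
      apply h3.congr
      intro m
      have e1 : (k m)ᵀ * ((sstar m)⁻¹ * k m) = (k m)ᵀ * (sstar m)⁻¹ * k m :=
        (Matrix.mul_assoc _ _ _).symm
      rw [e1]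
      simp [Matrix.add_apply, Matrix.sub_apply]
    have e2 : sigma i j = tM i j - (kbarᵀ * pM) i j := by
      simp [hsigdef, Matrix.sub_apply]
    rw [e2]
    exact h4
  -- near-optimal skew matrices
  have hbnd : ∀ m, ∃ h : Matrix (Fin d) (Fin d) ℝ, hᵀ = -h ∧ ∀ x,
      x ⬝ᵥ s m *ᵥ x + ((k m - h) *ᵥ x) ⬝ᵥ (sstar m)⁻¹ *ᵥ ((k m - h) *ᵥ x)
        ≤ (ThetaOf (s m) (k m) (sstar m) + 1/((m:ℝ)+1)) * (x ⬝ᵥ sstar m *ᵥ x) := by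
    intro m
    apply S15.theta_bound (hsstar m)
    have : (0:ℝ) < 1/((m:ℝ)+1) := by positivity
    linarith
  choose hh hskw hbound using hbnd
  obtain ⟨θ, hθdef⟩ : ∃ θ : ℕ → ℝ, θ = fun m => ThetaOf (s m) (k m) (sstar m) + 1/((m:ℝ)+1) :=
    ⟨_, rfl⟩
  have hθt : Tendsto θ atTop (nhds 1) := by
    rw [hθdef]
    have h1 := hTheta.add tendsto_one_div_add_atTop_nhds_zero_nat
    rw [add_zero] at h1
    exact h1
  -- sstar is below s in the quadratic-form order
  have hles : ∀ m x, x ⬝ᵥ sstar m *ᵥ x ≤ x ⬝ᵥ s m *ᵥ x := by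
    intro m x
    have h1 : ∀ y, y ⬝ᵥ (s m)⁻¹ *ᵥ y ≤ y ⬝ᵥ (sstar m)⁻¹ *ᵥ y := by
      intro y
      have h3 : (A m - blockAstar (s m) (k m) (sstar m)).PosSemidef := hstar m
      have h2 := S15.quad_nonneg h3 (Sum.elim 0 y)
      rw [Matrix.sub_mulVec, dotProduct_sub] at h2
      have e1 := haq m 0 y
      have e2 := hbq m 0 y
      simp only [Matrix.mulVec_zero, dotProduct_zero, zero_dotProduct,
        zero_sub, zero_add, Matrix.mulVec_neg, dotProduct_neg,
        neg_dotProduct, neg_neg] at e1 e2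
      rw [e1, e2] at h2
      linarith
    have h3 := S15.inv_antitone (hspdinv m) (hWpd m) h1 x
    rwa [Matrix.nonsing_inv_nonsing_inv _ (hs m).det_pos.ne'.isUnit,
      Matrix.nonsing_inv_nonsing_inv _ (hsstar m).det_pos.ne'.isUnit] at h3
  -- the gap between s and sstar tends to zero
  have hdiff : ∀ x, Tendsto (fun m => x ⬝ᵥ s m *ᵥ x - x ⬝ᵥ sstar m *ᵥ x) atTop (nhds 0) := by
    intro x
    have hub : ∀ m, x ⬝ᵥ s m *ᵥ x - x ⬝ᵥ sstar m *ᵥ x ≤ |θ m - 1| * (c * (x ⬝ᵥ x)) := by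
      intro m
      have h1 := hbound m x
      have hθm : ThetaOf (s m) (k m) (sstar m) + 1/((m:ℝ)+1) = θ m := by rw [hθdef]
      rw [hθm] at h1
      have h2 := S15.quad_nonneg (hWpd m).posSemidef ((k m - hh m) *ᵥ x)
      have h5 : 0 ≤ x ⬝ᵥ sstar m *ᵥ x := S15.quad_nonneg (hsstar m).posSemidef x
      have h3 : x ⬝ᵥ s m *ᵥ x - x ⬝ᵥ sstar m *ᵥ x ≤ (θ m - 1) * (x ⬝ᵥ sstar m *ᵥ x) := by
        nlinarith [h1, h2]
      have h6 := hsb m x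
      calc x ⬝ᵥ s m *ᵥ x - x ⬝ᵥ sstar m *ᵥ x
          ≤ (θ m - 1) * (x ⬝ᵥ sstar m *ᵥ x) := h3
        _ ≤ |θ m - 1| * (x ⬝ᵥ sstar m *ᵥ x) :=
            mul_le_mul_of_nonneg_right (le_abs_self _) h5
        _ ≤ |θ m - 1| * (c * (x ⬝ᵥ x)) := mul_le_mul_of_nonneg_left h6 (abs_nonneg _)
    have hlb : ∀ m, 0 ≤ x ⬝ᵥ s m *ᵥ x - x ⬝ᵥ sstar m *ᵥ x :=
      fun m => sub_nonneg.2 (hles m x)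
    have hub_t : Tendsto (fun m => |θ m - 1| * (c * (x ⬝ᵥ x))) atTop (nhds 0) := by
      have h1 := ((hθt.sub_const 1).abs).mul_const (c * (x ⬝ᵥ x))
      simpa using h1
    exact tendsto_of_tendsto_of_tendsto_of_le_of_le tendsto_const_nhds hub_t hlb hub
  -- identification of the limit of s with sbar
  have hsig : sigma = sbar := by
    have hsigsym : sigmaᵀ = sigma := by
      ext i j
      have h1 : Tendsto (fun m => s m i j) atTop (nhds (sigma j i)) :=
        (hs_t j i).congr fun m => by
          have := congrFun (congrFun (hssym m) i) j
          simpa using this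
      exact tendsto_nhds_unique h1 (hs_t i j)
    have hsbarsym : sbarᵀ = sbar := by
      rw [hsbardef, Matrix.transpose_nonsing_inv, hmMsym]
    have hzero : sigma - sbar = 0 := by
      apply S15.quad_eq_zero (by rw [Matrix.transpose_sub, hsigsym, hsbarsym])
      intro x
      have h1 := S15.tendsto_bilin hs_t x x
      have h2 := S15.tendsto_bilin hsstar_t x x
      have h4 := tendsto_nhds_unique (h1.sub h2) (hdiff x)
      rw [Matrix.sub_mulVec, dotProduct_sub]
      exact h4
    exact sub_eq_zero.1 hzero
  -- the recentring matrices converge entrywise to kbar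
  have hkh : ∀ i j, Tendsto (fun m => (k m - hh m) i j) atTop (nhds 0) := by
    intro i j
    set x : Fin d → ℝ := Pi.single j 1 with hxdef
    have hr : Tendsto (fun m => θ m * (x ⬝ᵥ sstar m *ᵥ x) - x ⬝ᵥ s m *ᵥ x) atTop (nhds 0) := by
      have h1 := hθt.mul (S15.tendsto_bilin hsstar_t x x)
      have h2 := S15.tendsto_bilin hs_t x x
      rw [hsig] at h2
      have h3 := h1.sub h2
      simpa using h3
    have hq : ∀ m, ((k m - hh m) *ᵥ x) ⬝ᵥ ((k m - hh m) *ᵥ x)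
        ≤ c * (θ m * (x ⬝ᵥ sstar m *ᵥ x) - x ⬝ᵥ s m *ᵥ x) := by
      intro m
      have h1 := hbound m x
      have hθm : ThetaOf (s m) (k m) (sstar m) + 1/((m:ℝ)+1) = θ m := by rw [hθdef]
      rw [hθm] at h1
      have h2 := hWlow m ((k m - hh m) *ᵥ x)
      have h3 : ((k m - hh m) *ᵥ x) ⬝ᵥ (sstar m)⁻¹ *ᵥ ((k m - hh m) *ᵥ x)
          ≤ θ m * (x ⬝ᵥ sstar m *ᵥ x) - x ⬝ᵥ s m *ᵥ x := by linarith
      have h4 := (div_le_iff₀ hcpos).1 (le_trans h2 h3)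
      linarith
    have hvv : Tendsto (fun m => ((k m - hh m) *ᵥ x) ⬝ᵥ ((k m - hh m) *ᵥ x)) atTop (nhds 0) := by
      apply tendsto_of_tendsto_of_tendsto_of_le_of_le tendsto_const_nhds
        (by simpa using hr.const_mul c) (fun m => S15.dot_self_nonneg _) hq
    have hsq : ∀ m, ((k m - hh m) i j)^2
        ≤ ((k m - hh m) *ᵥ x) ⬝ᵥ ((k m - hh m) *ᵥ x) := by
      intro m
      have e : ((k m - hh m) *ᵥ x) = fun i' => (k m - hh m) i' j := by
        funext i'
        rw [hxdef, Matrix.mulVec_single]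
        simp
      rw [e]
      have h1 := Finset.single_le_sum
        (f := fun i' => ((k m - hh m) i' j) * ((k m - hh m) i' j))
        (fun i' _ => mul_self_nonneg _) (Finset.mem_univ i)
      simpa [dotProduct, sq] using h1
    have hsq_t : Tendsto (fun m => ((k m - hh m) i j)^2) atTop (nhds 0) :=
      tendsto_of_tendsto_of_tendsto_of_le_of_le tendsto_const_nhds hvv
        (fun m => sq_nonneg _) hsq
    rw [tendsto_zero_iff_abs_tendsto_zero]
    have h5 := (Real.continuous_sqrt.tendsto 0).comp hsq_t
    rw [Real.sqrt_zero] at h5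
    apply h5.congr
    intro m
    simp [Function.comp, Real.sqrt_sq_eq_abs]
  have hh_t : ∀ i j, Tendsto (fun m => hh m i j) atTop (nhds (kbar i j)) := by
    intro i j
    have h1 := (hk_t i j).sub (hkh i j)
    rw [sub_zero] at h1
    exact h1.congr fun m => by simp [Matrix.sub_apply]
  have hkskew : kbarᵀ = -kbar := by
    ext i j
    have h1 : Tendsto (fun m => hh m i j) atTop (nhds (-(kbar j i))) := by
      have h2 := (hh_t j i).neg
      apply h2.congr
      intro m
      have h3 := congrFun (congrFun (hskw m) j) i
      simp only [Matrix.transpose_apply, Matrix.neg_apply] at h3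
      linarith
    have h4 := tendsto_nhds_unique (hh_t i j) h1
    simp only [Matrix.transpose_apply, Matrix.neg_apply]
    linarith [h4]
  refine ⟨sbar, kbar, hsbarpd, hkskew, ?_, ?_, ?_⟩
  · exact S15.specNorm_tendsto_zero (fun i j => hsig ▸ hs_t i j)
  · exact S15.specNorm_tendsto_zero hsstar_t
  · exact S15.specNorm_tendsto_zero hk_t
end
end
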